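/- arXiv:2201.12524 — 14 statements merged into one kernel-verified Lean document; each statement's English description precedes it below -/
import Mathlib

section
/- Let G be a finite group, let ρ : G → Matrix (Fin N) (Fin N) ℂ be a representation of G by complex matrices (a monoid homomorphism into the multiplicative monoid of matrices, so ρ(1) = 1 and ρ(gh) = ρ(g)·ρ(h)), let q : G → ℝ satisfy q(g) ≥ 0 for all g and ∑_{g∈G} q(g) = 1, and let t ≥ 0. Then there exists w : G → ℝ with w(g) ≥ 0 for all g, ∑_{g∈G} w(g) = 1, and Matrix.exp(t • (∑_{g∈G} q(g) • ρ(g) − 1)) = ∑_{g∈G} w(g) • ρ(g). In words: the dynamical semigroup generated by a convex combination of Lindblad generators ρ(g) − 1 is at every time a convex combination of the group members. -/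
/-!
The convex hull `K` of `ρ(G)` is a closed convex set, and it is closed under multiplication
because `ρ(G)` is; hence `A = ∑ q g • ρ g ∈ K` has all its powers in `K`. Splitting off the
scalar part, `exp (t • (A - 1)) = e⁻ᵗ exp (t • A) = ∑ₙ e⁻ᵗ tⁿ / n! • Aⁿ` is a convex combination
of the `Aⁿ` with Poisson weights, and an infinite convex combination of points of a closed
convex set stays in it.
-/

open NormedSpace Set Filter Topology

theorem Convex.mem_of_hasSum_smul {𝕜 ι E : Type*} [Field 𝕜] [LinearOrder 𝕜]
    [IsStrictOrderedRing 𝕜] [TopologicalSpace 𝕜] [OrderTopology 𝕜] [ContinuousInv₀ 𝕜]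
    [AddCommGroup E] [Module 𝕜 E] [TopologicalSpace E] [ContinuousSMul 𝕜 E] {s : Set E}
    (hs : Convex 𝕜 s) (hsc : IsClosed s) {w : ι → 𝕜} {z : ι → E} {y : E}
    (hw₀ : ∀ i, 0 ≤ w i) (hw₁ : HasSum w 1) (hz : ∀ i, z i ∈ s)
    (hy : HasSum (fun i ↦ w i • z i) y) : y ∈ s := by
  have hlim : Tendsto (fun t : Finset ι ↦ t.centerMass w z) atTop (𝓝 y) := by
    simpa [Finset.centerMass] using (hw₁.inv₀ one_ne_zero).smul hy
  have hpos : ∀ᶠ t : Finset ι in atTop, 0 < ∑ i ∈ t, w i :=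
    hw₁.eventually_const_lt zero_lt_one
  exact hsc.mem_of_tendsto hlim <|
    hpos.mono fun t ht ↦ hs.centerMass_mem (fun i _ ↦ hw₀ i) ht fun i _ ↦ hz i

theorem convexHull_range_eq_image_stdSimplex {R E ι : Type*} [Field R] [LinearOrder R]
    [IsStrictOrderedRing R] [AddCommGroup E] [Module R E] [Fintype ι] (v : ι → E) :
    convexHull R (range v) = Fintype.linearCombination R v '' stdSimplex R ι := by
  classical
  rw [← convexHull_rangle_single_eq_stdSimplex, LinearMap.image_convexHull, ← range_comp]
  congr 2
  ext i
  simp [Fintype.linearCombination_apply_single]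

namespace Submonoid

variable (𝕜 : Type*) {A : Type*} [CommSemiring 𝕜] [PartialOrder 𝕜] [Semiring A] [Algebra 𝕜 A]

def convexHull (S : Submonoid A) : Submonoid A where
  carrier := _root_.convexHull 𝕜 S
  one_mem' := subset_convexHull 𝕜 (S : Set A) S.one_mem
  mul_mem' {x y} hx hy := by
    have mul_mem_of_mem_right :
        ∀ b ∈ S, ∀ a ∈ _root_.convexHull 𝕜 (S : Set A), a * b ∈ _root_.convexHull 𝕜 S :=
      fun b hb ↦ convexHull_min (fun a ha ↦ subset_convexHull 𝕜 (S : Set A) (S.mul_mem ha hb))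
        ((convex_convexHull 𝕜 _).linear_preimage (LinearMap.mulRight 𝕜 b))
    exact convexHull_min (fun b hb ↦ mul_mem_of_mem_right b hb x hx)
      ((convex_convexHull 𝕜 _).linear_preimage (LinearMap.mulLeft 𝕜 x)) hy

variable {𝕜}

@[simp]
theorem mem_convexHull {S : Submonoid A} {x : A} :
    x ∈ S.convexHull 𝕜 ↔ x ∈ _root_.convexHull 𝕜 (S : Set A) :=
  Iff.rfl

end Submonoid

theorem NormedSpace.hasSum_exp_smul_sub_one {𝔸 : Type*} [NormedRing 𝔸] [NormedAlgebra ℝ 𝔸]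
    [CompleteSpace 𝔸] (t : ℝ) (a : 𝔸) :
    HasSum (fun n ↦ (Real.exp (-t) * t ^ n / n.factorial) • a ^ n) (exp (t • (a - 1))) := by
  have hsplit : t • (a - 1) = algebraMap ℝ 𝔸 (-t) + t • a := by
    rw [Algebra.algebraMap_eq_smul_one, smul_sub, neg_smul]
    abel
  -- `exp_add_of_commute` is stated for Banach algebras over `ℚ`
  let : NormedAlgebra ℚ 𝔸 := NormedAlgebra.restrictScalars ℚ ℝ 𝔸
  rw [hsplit, exp_add_of_commute (Algebra.commutes _ _), ← algebraMap_exp_comm,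
    ← Real.exp_eq_exp_ℝ, ← Algebra.smul_def]
  convert (exp_series_hasSum_exp' (𝕂 := ℝ) (t • a)).const_smul (Real.exp (-t)) using 2 with n
  rw [smul_pow, smul_smul, smul_smul]
  ring_nf

theorem Matrix.hasSum_exp_smul_sub_one {n : Type*} [Fintype n] [DecidableEq n] (t : ℝ)
    (A : Matrix n n ℂ) :
    HasSum (fun k ↦ (Real.exp (-t) * t ^ k / k.factorial) • A ^ k) (exp (t • (A - 1))) :=
  -- `exp` does not depend on the norm, so any algebra norm on matrices will do
  open scoped Matrix.Norms.Operator in NormedSpace.hasSum_exp_smul_sub_one t A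

/-- The dynamical semigroup generated by a convex combination of Lindblad
generators `ρ g − 1` is, at every time `t ≥ 0`, a convex combination of the group members. -/
theorem accessible_map_is_convex_combination_of_group
    {G : Type*} [Group G] [Fintype G] {N : ℕ}
    (ρ : G →* Matrix (Fin N) (Fin N) ℂ)
    (q : G → ℝ) (hq : ∀ g : G, 0 ≤ q g) (hqsum : ∑ g : G, q g = 1)
    (t : ℝ) (ht : 0 ≤ t) :
    ∃ w : G → ℝ, (∀ g : G, 0 ≤ w g) ∧ (∑ g : G, w g = 1) ∧
      NormedSpace.exp (t • ((∑ g : G, q g • ρ g) - 1)) = ∑ g : G, w g • ρ g := by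
  set K := (MonoidHom.mrange ρ).convexHull ℝ
  have hA : ∑ g, q g • ρ g ∈ K :=
    (convex_convexHull ℝ _).sum_mem (fun g _ ↦ hq g) hqsum
      fun g _ ↦ subset_convexHull ℝ _ (MonoidHom.mem_mrange.2 ⟨g, rfl⟩)
  have hexp : exp (t • ((∑ g, q g • ρ g) - 1)) ∈ K :=
    (convex_convexHull ℝ _).mem_of_hasSum_smul ((finite_range ρ).isClosed_convexHull ℝ)
      (fun n ↦ by positivity) (ProbabilityTheory.hasSum_one_poissonMeasure ⟨t, ht⟩)
      (fun n ↦ K.pow_mem hA n) (Matrix.hasSum_exp_smul_sub_one t _)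
  rw [Submonoid.mem_convexHull, MonoidHom.coe_mrange, convexHull_range_eq_image_stdSimplex]
    at hexp
  obtain ⟨w, ⟨hw₀, hw₁⟩, hw⟩ := hexp
  exact ⟨w, hw₀, hw₁, by rw [← hw, Fintype.linearCombination_apply]⟩
end

section
/- Let G be a finite group of order g and let R : G → Matrix G G ℝ be its left regular representation, i.e. (R g)_{a,b} = 1 if a = g·b and 0 otherwise. Let q : G → ℝ satisfy q(h) ≥ 0 and ∑_{h∈G} q(h) = 1, and let t ≥ 0. Then Matrix.exp(t • (∑_{h∈G} q(h) • R(h) − 1)) = ∑_{μ∈G} w_μ(t) • R(μ), where w_μ(t) = (1/g) · Tr((R μ)ᵀ · Matrix.exp(t • (∑_{h∈G} q(h) • R(h) − 1))) = (e^{−t}/g) · Tr((R μ)ᵀ · Matrix.exp(t • ∑_{h∈G} q(h) • R(h))). -/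
/-!
The matrices `R g` form a monoid homomorphism, so their linear span is the subalgebra they
generate. A subalgebra of matrices is finite-dimensional, hence closed, so it contains the
exponential of each of its elements; in particular `exp (t • (∑ q h • R h - 1)) = ∑ c μ • R μ`
for some coefficients `c`. These are read off by the orthogonality
`Tr ((R μ)ᵀ * R ν) = |G| δ_{μν}`. Finally `exp (t • (A - 1)) = e^{-t} • exp (t • A)` because
the scalar part `-t • 1` commutes with `t • A`.
-/

open Matrix

theorem MonoidHom.mem_adjoin_range_iff {k A G : Type*} [CommSemiring k] [Semiring A]
    [Algebra k A] [Monoid G] [Fintype G] (ρ : G →* A) {x : A} :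
    x ∈ Algebra.adjoin k (Set.range ρ) ↔ ∃ c : G → k, ∑ g, c g • ρ g = x := by
  rw [← Subalgebra.mem_toSubmodule, Algebra.adjoin_eq_span, MonoidHom.mclosure_range,
    MonoidHom.coe_mrange, Submodule.mem_span_range_iff_exists_fun]

namespace Matrix

theorem exp_mem_subalgebra {𝕜 n : Type*} [RCLike 𝕜] [Fintype n] [DecidableEq n]
    (S : Subalgebra 𝕜 (Matrix n n 𝕜)) {x : Matrix n n 𝕜} (hx : x ∈ S) :
    NormedSpace.exp x ∈ S :=
  NormedSpace.exp_mem (R := 𝕜) (s := S)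
    (Submodule.closed_of_finiteDimensional (Subalgebra.toSubmodule S)) hx

theorem exp_smul_sub_one {n : Type*} [Fintype n] [DecidableEq n] (t : ℝ) (A : Matrix n n ℝ) :
    NormedSpace.exp (t • (A - 1)) = Real.exp (-t) • NormedSpace.exp (t • A) := by
  have hsplit : t • (A - 1) = algebraMap ℝ _ (-t) + t • A := by
    rw [Algebra.algebraMap_eq_smul_one]
    module
  rw [hsplit, exp_add_of_commute _ _ (Algebra.commute_algebraMap_left _ _), Real.exp_eq_exp_ℝ,
    Algebra.smul_def (NormedSpace.exp (-t))]
  congr 1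
  open scoped Norms.Operator in
  exact (NormedSpace.algebraMap_exp_comm (𝔸 := Matrix n n ℝ) (-t)).symm

section LeftRegular

variable (G α : Type*) [Group G] [Fintype G] [DecidableEq G] [Semiring α]

def leftRegular : G →* Matrix G G α where
  toFun g := of fun a b => if a = g * b then 1 else 0
  map_one' := by ext a b; simp [one_apply]
  map_mul' g h := by
    ext a b
    simp only [of_apply, mul_apply, mul_ite, mul_one, mul_zero]
    rw [Finset.sum_eq_single (h * b)] <;> simp_all [mul_assoc]

variable {G α}

theorem leftRegular_apply (g a b : G) :
    leftRegular G α g a b = if a = g * b then 1 else 0 := rfl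

theorem trace_transpose_leftRegular_mul (g h : G) :
    trace ((leftRegular G α g)ᵀ * leftRegular G α h) =
      if g = h then (Fintype.card G : α) else 0 := by
  simp only [trace, diag, mul_apply, transpose_apply, leftRegular_apply, mul_ite, mul_one,
    mul_zero]
  split_ifs with hgh
  · simp [hgh, Finset.card_univ]
  · simp [Ne.symm hgh]

theorem trace_transpose_leftRegular_mul_sum {α : Type*} [CommSemiring α] (c : G → α) (μ : G) :
    trace ((leftRegular G α μ)ᵀ * ∑ ν, c ν • leftRegular G α ν) = Fintype.card G * c μ := by
  simp only [Matrix.mul_sum, Matrix.mul_smul, trace_sum, trace_smul,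
    trace_transpose_leftRegular_mul, smul_eq_mul, mul_ite, mul_zero, Finset.sum_ite_eq,
    Finset.mem_univ, if_true]
  exact mul_comm _ _

end LeftRegular

end Matrix

theorem regular_representation_accessible_weights_general
    {G : Type*} [Group G] [Fintype G] [DecidableEq G]
    (R : G → Matrix G G ℝ)
    (hR : ∀ g a b : G, R g a b = if a = g * b then 1 else 0)
    (q : G → ℝ)
    (t : ℝ) :
    NormedSpace.exp (t • ((∑ h : G, q h • R h) - 1)) =
      (∑ μ : G,
        ((1 / (Fintype.card G : ℝ)) *
          Matrix.trace ((R μ)ᵀ * NormedSpace.exp (t • ((∑ h : G, q h • R h) - 1)))) • R μ) ∧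
    ∀ μ : G,
      (1 / (Fintype.card G : ℝ)) *
          Matrix.trace ((R μ)ᵀ * NormedSpace.exp (t • ((∑ h : G, q h • R h) - 1))) =
        (Real.exp (-t) / (Fintype.card G : ℝ)) *
          Matrix.trace ((R μ)ᵀ * NormedSpace.exp (t • ∑ h : G, q h • R h)) := by
  obtain rfl : R = leftRegular G ℝ := funext fun g => ext fun a b => hR g a b
  set S := Algebra.adjoin ℝ (Set.range (leftRegular G ℝ))
  have hgen : t • ((∑ h, q h • leftRegular G ℝ h) - 1) ∈ S :=
    S.smul_mem (S.sub_mem (S.sum_mem fun h _ => S.smul_mem (Algebra.subset_adjoin ⟨h, rfl⟩) _)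
      S.one_mem) t
  obtain ⟨c, hc⟩ := (leftRegular G ℝ).mem_adjoin_range_iff.mp (exp_mem_subalgebra S hgen)
  have hcoef : ∀ μ, 1 / (Fintype.card G : ℝ) *
      trace ((leftRegular G ℝ μ)ᵀ * NormedSpace.exp (t • ((∑ h, q h • leftRegular G ℝ h) - 1)))
        = c μ := by
    intro μ
    rw [← hc, trace_transpose_leftRegular_mul_sum]
    field_simp
  refine ⟨?_, fun μ => ?_⟩
  · simp_rw [hcoef]
    exact hc.symm
  · rw [exp_smul_sub_one, Matrix.mul_smul, trace_smul, smul_eq_mul]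
    ring

/-- For the left regular representation `R` of a finite group `G`, the semigroup
`exp(t • (∑ q h • R h − 1))` is the mixture `∑ wμ(t) • R μ` with weights given by the trace
formulas. -/
theorem regular_representation_accessible_weights
    {G : Type*} [Group G] [Fintype G] [DecidableEq G]
    (R : G → Matrix G G ℝ)
    (hR : ∀ g a b : G, R g a b = if a = g * b then 1 else 0)
    (q : G → ℝ) (hq : ∀ h : G, 0 ≤ q h) (hqsum : ∑ h : G, q h = 1)
    (t : ℝ) (ht : 0 ≤ t) :
    NormedSpace.exp (t • ((∑ h : G, q h • R h) - 1)) =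
      (∑ μ : G,
        ((1 / (Fintype.card G : ℝ)) *
          Matrix.trace ((R μ)ᵀ * NormedSpace.exp (t • ((∑ h : G, q h • R h) - 1)))) • R μ) ∧
    ∀ μ : G,
      (1 / (Fintype.card G : ℝ)) *
          Matrix.trace ((R μ)ᵀ * NormedSpace.exp (t • ((∑ h : G, q h • R h) - 1))) =
        (Real.exp (-t) / (Fintype.card G : ℝ)) *
          Matrix.trace ((R μ)ᵀ * NormedSpace.exp (t • ∑ h : G, q h • R h)) :=
  regular_representation_accessible_weights_general R hR q t
end

section
/- Let G be a finite group of order g, let ρ : G → Matrix (Fin N) (Fin N) ℂ be a representation of G by complex matrices (a monoid homomorphism), and let q : G → ℝ satisfy ∑_{h∈G} q(h) = 1, q(h) ≥ 0 for all h, and q(h) > 0 for every h ≠ 1. Then, as t → ∞ (the filter atTop on ℝ), Matrix.exp(t • (∑_{h∈G} q(h) • ρ(h) − 1)) converges to the uniform mixture Φ* = (1/g) • ∑_{h∈G} ρ(h), i.e. Tendsto (fun t => Matrix.exp (t • (∑_h q(h) • ρ(h) − 1))) atTop (𝓝 ((g : ℂ)⁻¹ • ∑_h ρ(h))). -/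
/-!
Fix `m > 0` below every `q h` with `h ≠ 1`. Since `∑ q h = 1`, the generator splits as
`∑ q h • ρ h - 1 = m |G| (Φ* - 1) + ∑ (q h - m) • (ρ h - 1)`: a uniform jump at rate `m |G|`
plus a random walk with nonnegative rates. Both parts commute and the walk part annihilates
`Φ*`, so `exp (t • _) = Φ* + e^{-m |G| t} (1 - Φ*) exp (t • walk)`, and the exponential of a
walk with nonnegative rates stays bounded.
-/

open Filter Topology NormedSpace

section GroupAlgebra

variable {G 𝔸 : Type*} [Group G] [Fintype G] [Ring 𝔸] [Algebra ℝ 𝔸] (ρ : G →* 𝔸)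

noncomputable def uniformMixture : 𝔸 := (Fintype.card G : ℝ)⁻¹ • ∑ g, ρ g

def walkGenerator : (G → ℝ) →ₗ[ℝ] 𝔸 := Fintype.linearCombination ℝ fun h => ρ h - 1

theorem walkGenerator_apply (w : G → ℝ) : walkGenerator ρ w = ∑ h, w h • (ρ h - 1) := rfl

theorem mul_uniformMixture (h : G) : ρ h * uniformMixture ρ = uniformMixture ρ := by
  simp only [uniformMixture, mul_smul_comm, Finset.mul_sum, ← map_mul]
  congr 1
  exact Fintype.sum_bijective _ (Group.mulLeft_bijective h) _ _ fun _ => rfl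

theorem uniformMixture_mul (h : G) : uniformMixture ρ * ρ h = uniformMixture ρ := by
  simp only [uniformMixture, smul_mul_assoc, Finset.sum_mul, ← map_mul]
  congr 1
  exact Fintype.sum_bijective _ (Group.mulRight_bijective h) _ _ fun _ => rfl

theorem isIdempotentElem_uniformMixture : IsIdempotentElem (uniformMixture ρ) := by
  rw [IsIdempotentElem]
  nth_rw 1 [uniformMixture]
  rw [smul_mul_assoc, Finset.sum_mul]
  simp only [mul_uniformMixture, Finset.sum_const, Finset.card_univ,
    ← Nat.cast_smul_eq_nsmul ℝ]
  exact inv_smul_smul₀ (Nat.cast_ne_zero.2 Fintype.card_ne_zero) _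

theorem uniformMixture_mul_walkGenerator (w : G → ℝ) :
    uniformMixture ρ * walkGenerator ρ w = 0 := by
  simp [walkGenerator_apply, Finset.mul_sum, mul_sub, uniformMixture_mul]

theorem walkGenerator_mul_uniformMixture (w : G → ℝ) :
    walkGenerator ρ w * uniformMixture ρ = 0 := by
  simp [walkGenerator_apply, Finset.sum_mul, sub_mul, mul_uniformMixture]

theorem walkGenerator_const (m : ℝ) :
    walkGenerator ρ (fun _ => m) = (m * Fintype.card G) • (uniformMixture ρ - 1) := by
  have hG : (Fintype.card G : ℝ) ≠ 0 := Nat.cast_ne_zero.2 Fintype.card_ne_zero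
  simp only [walkGenerator_apply, uniformMixture, ← Finset.smul_sum, Finset.sum_sub_distrib,
    Finset.sum_const, Finset.card_univ, ← Nat.cast_smul_eq_nsmul ℝ]
  match_scalars <;> field_simp

theorem sum_smul_sub_one_eq_walkGenerator {q : G → ℝ} (hq : ∑ h, q h = 1) :
    ∑ h, q h • ρ h - 1 = walkGenerator ρ q := by
  simp [walkGenerator_apply, smul_sub, Finset.sum_sub_distrib, ← Finset.sum_smul, hq]

end GroupAlgebra

section NormedAlgebra

variable {𝔸 : Type*} [NormedRing 𝔸] [NormedAlgebra ℝ 𝔸]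

theorem NormedSpace.norm_exp_le_of_norm_pow_le {a : 𝔸} {K r : ℝ}
    (h : ∀ n, ‖a ^ n‖ ≤ K * r ^ n) : ‖exp a‖ ≤ K * Real.exp r := by
  rw [exp_eq_tsum ℝ, Real.exp_eq_exp_ℝ]
  refine tsum_of_norm_bounded ((expSeries_div_hasSum_exp r).mul_left K) fun n => ?_
  rw [norm_smul, norm_inv, RCLike.norm_natCast, mul_div_assoc', mul_comm, ← div_eq_mul_inv]
  gcongr
  exact h n

/-- `∑ g, ‖ρ g * x‖` is a norm-like quantity for which left multiplication by any `ρ h` is an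
isometry, so left multiplication by `∑ w h • ρ h` scales it by at most `∑ w h`. -/
theorem sum_norm_mul_pow_le {G : Type*} [Group G] [Fintype G] (ρ : G →* 𝔸) {w : G → ℝ}
    (hw : ∀ h, 0 ≤ w h) (n : ℕ) :
    ∑ g, ‖ρ g * (∑ h, w h • ρ h) ^ n‖ ≤ (∑ h, w h) ^ n * ∑ g, ‖ρ g‖ := by
  induction n with
  | zero => simp
  | succ n ih =>
    calc ∑ g, ‖ρ g * (∑ h, w h • ρ h) ^ (n + 1)‖
        = ∑ g, ‖∑ h, w h • (ρ (g * h) * (∑ h, w h • ρ h) ^ n)‖ := by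
          simp only [pow_succ', ← mul_assoc, Finset.mul_sum, Finset.sum_mul, mul_smul_comm,
            smul_mul_assoc, map_mul]
      _ ≤ ∑ g, ∑ h, w h * ‖ρ (g * h) * (∑ h, w h • ρ h) ^ n‖ := by
          gcongr with g
          refine (norm_sum_le _ _).trans_eq (Finset.sum_congr rfl fun h _ => ?_)
          rw [norm_smul, Real.norm_of_nonneg (hw h)]
      _ = ∑ h, w h * ∑ g, ‖ρ g * (∑ h, w h • ρ h) ^ n‖ := by
          rw [Finset.sum_comm]
          refine Finset.sum_congr rfl fun h _ => ?_
          rw [Finset.mul_sum]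
          exact Fintype.sum_bijective _ (Group.mulRight_bijective h) _ _ fun _ => rfl
      _ ≤ ∑ h, w h * ((∑ h, w h) ^ n * ∑ g, ‖ρ g‖) := by gcongr with h; exact hw h
      _ = (∑ h, w h) ^ (n + 1) * ∑ g, ‖ρ g‖ := by rw [← Finset.sum_mul, pow_succ']; ring

variable [CompleteSpace 𝔸]

theorem norm_exp_walkGenerator_le {G : Type*} [Group G] [Fintype G] (ρ : G →* 𝔸)
    {w : G → ℝ} (hw : ∀ h, h ≠ 1 → 0 ≤ w h) : ‖exp (walkGenerator ρ w)‖ ≤ ∑ g, ‖ρ g‖ := by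
  let +nondep : NormedAlgebra ℚ 𝔸 := .restrictScalars ℚ ℝ 𝔸
  classical
  set v : G → ℝ := fun h => if h = 1 then 0 else w h
  have hv : ∀ h, 0 ≤ v h := fun h => by by_cases h1 : h = 1 <;> simp [v, h1, hw]
  have hwv : walkGenerator ρ w = ∑ h, v h • ρ h + algebraMap ℝ 𝔸 (-∑ h, v h) := by
    rw [walkGenerator_apply, Algebra.algebraMap_eq_smul_one, neg_smul, Finset.sum_smul,
      ← sub_eq_add_neg, ← Finset.sum_sub_distrib]
    refine Finset.sum_congr rfl fun h _ => ?_
    by_cases h1 : h = 1 <;> simp [v, h1, smul_sub]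
  have hpow (n : ℕ) : ‖(∑ h, v h • ρ h) ^ n‖ ≤ (∑ g, ‖ρ g‖) * (∑ h, v h) ^ n := by
    have := Finset.single_le_sum (fun g _ => norm_nonneg (ρ g * (∑ h, v h • ρ h) ^ n))
      (Finset.mem_univ 1)
    rw [map_one, one_mul] at this
    exact this.trans ((sum_norm_mul_pow_le ρ hv n).trans_eq (mul_comm _ _))
  rw [hwv, exp_add_of_commute (Algebra.commutes _ _).symm, ← algebraMap_exp_comm,
    ← Real.exp_eq_exp_ℝ, ← Algebra.commutes, ← Algebra.smul_def, norm_smul,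
    Real.norm_of_nonneg (Real.exp_pos _).le]
  calc Real.exp (-∑ h, v h) * ‖exp (∑ h, v h • ρ h)‖
      ≤ Real.exp (-∑ h, v h) * ((∑ g, ‖ρ g‖) * Real.exp (∑ h, v h)) := by
        gcongr
        exact norm_exp_le_of_norm_pow_le hpow
    _ = ∑ g, ‖ρ g‖ := by
        rw [mul_left_comm, ← Real.exp_add, neg_add_cancel, Real.exp_zero, mul_one]

theorem NormedSpace.mul_exp_of_mul_eq_zero {a b : 𝔸} (h : b * a = 0) : b * exp a = b := by
  let +nondep : NormedAlgebra ℚ 𝔸 := .restrictScalars ℚ ℝ 𝔸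
  have : SemiconjBy b a 0 := by rw [SemiconjBy, h, zero_mul]
  simpa [SemiconjBy] using this.exp_right

theorem IsIdempotentElem.one_sub_mul_exp_smul_sub_one {P : 𝔸} (hP : IsIdempotentElem P)
    (s : ℝ) : (1 - P) * exp (s • (P - 1)) = Real.exp (-s) • (1 - P) := by
  let +nondep : NormedAlgebra ℚ 𝔸 := .restrictScalars ℚ ℝ 𝔸
  have h : SemiconjBy (1 - P) (s • (P - 1)) (algebraMap ℝ 𝔸 (-s)) := by
    simp only [SemiconjBy, Algebra.algebraMap_eq_smul_one, mul_smul_comm, smul_mul_assoc,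
      mul_sub, sub_mul, one_mul, mul_one, hP.eq]
    module
  rw [h.exp_right, ← algebraMap_exp_comm, ← Real.exp_eq_exp_ℝ, Algebra.algebraMap_eq_smul_one,
    smul_mul_assoc, one_mul]

theorem tendsto_exp_smul_of_isIdempotentElem {P D : 𝔸} {c K : ℝ} (hP : IsIdempotentElem P)
    (hPD : P * D = 0) (hcomm : Commute P D) (hc : 0 < c)
    (hD : ∀ t : ℝ, 0 ≤ t → ‖exp (t • D)‖ ≤ K) :
    Tendsto (fun t : ℝ => exp (t • (c • (P - 1) + D))) atTop (𝓝 P) := by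
  let +nondep : NormedAlgebra ℚ 𝔸 := .restrictScalars ℚ ℝ 𝔸
  have hsplit (t : ℝ) : exp (t • (c • (P - 1) + D)) =
      P + Real.exp (-(t * c)) • ((1 - P) * exp (t • D)) := by
    have hker : P * (t • (c • (P - 1) + D)) = 0 := by
      simp only [mul_smul_comm, mul_add, mul_sub, hP.eq, mul_one, sub_self, smul_zero, hPD,
        add_zero]
    have hcomm' : Commute ((t * c) • (P - 1)) (t • D) :=
      ((hcomm.sub_left (Commute.one_left D)).smul_left _).smul_right t
    calc exp (t • (c • (P - 1) + D))
        = P * exp (t • (c • (P - 1) + D)) + (1 - P) * exp (t • (c • (P - 1) + D)) := by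
          rw [← add_mul, add_sub_cancel, one_mul]
      _ = P + (1 - P) * exp ((t * c) • (P - 1)) * exp (t • D) := by
          rw [mul_exp_of_mul_eq_zero hker, smul_add, smul_smul, exp_add_of_commute hcomm',
            mul_assoc]
      _ = P + Real.exp (-(t * c)) • ((1 - P) * exp (t • D)) := by
          rw [hP.one_sub_mul_exp_smul_sub_one, smul_mul_assoc]
  have hdecay : Tendsto (fun t : ℝ => Real.exp (-(t * c)) * (‖1 - P‖ * K)) atTop (𝓝 0) := by
    simpa using (Real.tendsto_exp_atBot.comp
      (tendsto_neg_atTop_atBot.comp (tendsto_id.atTop_mul_const hc))).mul_const (‖1 - P‖ * K)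
  have hsmall : Tendsto (fun t : ℝ => Real.exp (-(t * c)) • ((1 - P) * exp (t • D)))
      atTop (𝓝 0) := by
    refine squeeze_zero_norm' ?_ hdecay
    filter_upwards [eventually_ge_atTop 0] with t ht
    rw [norm_smul, Real.norm_of_nonneg (Real.exp_pos _).le]
    gcongr
    exact (norm_mul_le _ _).trans (by gcongr; exact hD t ht)
  simpa only [hsplit, add_zero] using hsmall.const_add P

end NormedAlgebra

theorem accessible_trajectory_tendsto_center_general
    {G : Type*} [Group G] [Fintype G] {N : ℕ}
    (ρ : G →* Matrix (Fin N) (Fin N) ℂ)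
    (q : G → ℝ) (hqsum : ∑ h : G, q h = 1)
    (hqpos : ∀ h : G, h ≠ 1 → 0 < q h) :
    Filter.Tendsto (fun t : ℝ => NormedSpace.exp (t • ((∑ h : G, q h • ρ h) - 1)))
      Filter.atTop (nhds (((Fintype.card G : ℂ))⁻¹ • ∑ h : G, ρ h)) := by
  -- any Banach-algebra norm on matrices induces the entrywise topology of the statement
  let : NormedRing (Matrix (Fin N) (Fin N) ℂ) := Matrix.linftyOpNormedRing
  let : NormedAlgebra ℝ (Matrix (Fin N) (Fin N) ℂ) := Matrix.linftyOpNormedAlgebra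
  obtain ⟨m, hm, hmq⟩ : ∃ m : ℝ, 0 < m ∧ ∀ h : G, h ≠ 1 → m ≤ q h := by
    have : ∀ᶠ m in 𝓝[>] (0 : ℝ), ∀ h : G, h ≠ 1 → m ≤ q h :=
      eventually_all.2 fun h => eventually_imp_distrib_left.2 fun hh =>
        (eventually_le_nhds (hqpos h hh)).filter_mono nhdsWithin_le_nhds
    exact (eventually_mem_nhdsWithin.and this).exists
  have hqm : q = (fun _ => m) + fun h => q h - m := by ext; simp
  rw [sum_smul_sub_one_eq_walkGenerator ρ hqsum, hqm, map_add, walkGenerator_const,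
    inv_natCast_smul_eq ℂ ℝ]
  change Tendsto _ atTop (𝓝 (uniformMixture ρ))
  refine tendsto_exp_smul_of_isIdempotentElem (K := ∑ g, ‖ρ g‖)
    (isIdempotentElem_uniformMixture ρ) (uniformMixture_mul_walkGenerator ρ _)
    ((uniformMixture_mul_walkGenerator ρ _).trans (walkGenerator_mul_uniformMixture ρ _).symm)
    (by positivity) fun t ht => ?_
  rw [← map_smul]
  exact norm_exp_walkGenerator_le ρ fun h hh => mul_nonneg ht (sub_nonneg.2 (hmq h hh))

/-- For a generic generator (all weights off the identity strictly positive), the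
semigroup `exp(t • (∑ q h • ρ h − 1))` converges, as `t → ∞`, to the uniform mixture
`(1/|G|) • ∑ ρ h` of all group members. -/
theorem accessible_trajectory_tendsto_center
    {G : Type*} [Group G] [Fintype G] {N : ℕ}
    (ρ : G →* Matrix (Fin N) (Fin N) ℂ)
    (q : G → ℝ) (hqsum : ∑ h : G, q h = 1) (hq : ∀ h : G, 0 ≤ q h)
    (hqpos : ∀ h : G, h ≠ 1 → 0 < q h) :
    Filter.Tendsto (fun t : ℝ => NormedSpace.exp (t • ((∑ h : G, q h • ρ h) - 1)))
      Filter.atTop (nhds (((Fintype.card G : ℂ))⁻¹ • ∑ h : G, ρ h)) :=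
  accessible_trajectory_tendsto_center_general ρ q hqsum hqpos
end

section
/- Let Φ be a complex N×N matrix whose powers are uniformly bounded, i.e. there exists C ≥ 0 such that every entry of Φ^m has absolute value at most C for all m ∈ ℕ (this holds in particular when Φ is the superoperator matrix of a quantum channel). Then there exists a matrix P with P·P = P, Φ·P = P and P·Φ = P, such that Matrix.exp(t • (Φ − 1)) converges to P as t → ∞, i.e. Tendsto (fun t : ℝ => Matrix.exp (t • (Φ − 1))) atTop (𝓝 P). (P is the projection onto the subspace of vectors fixed by Φ.) -/
/-!
Expanding the exponential gives `exp (t • (a - 1)) = ∑ pₜ(n) • aⁿ` with the Poisson weights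
`pₜ(n) = e⁻ᵗ tⁿ / n!`, so `‖aⁿ‖ ≤ K` bounds the semigroup by `K`. The Poisson identity
`n pₜ(n) = t pₜ(n - 1)` turns `t • exp (t • (a - 1)) * (a - 1)` into `∑ pₜ(n) (n - t) • aⁿ`, whose
norm is at most `K` times the mean absolute deviation of the Poisson law, hence at most `K √t`.
So `exp (t • (a - 1)) * (a - 1) → 0`, and every cluster point `Q` of the semigroup (there are some,
by compactness) satisfies `a Q = Q a = Q`, hence is absorbed by the semigroup on both sides. For two
cluster points `Q, Q'` this gives `Q Q' = Q` and `Q Q' = Q'`: the cluster point is unique, so it is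
the limit, and it is idempotent.
-/

open Filter Topology NormedSpace
open scoped Nat

noncomputable def poissonWeight (t : ℝ) (n : ℕ) : ℝ := Real.exp (-t) * t ^ n / n !

section PoissonWeight

variable {t : ℝ}

theorem poissonWeight_nonneg (ht : 0 ≤ t) (n : ℕ) : 0 ≤ poissonWeight t n := by
  unfold poissonWeight; positivity

theorem hasSum_poissonWeight (t : ℝ) : HasSum (poissonWeight t) 1 := by
  have h := (Real.exp_eq_exp_ℝ ▸ expSeries_div_hasSum_exp t).mul_left (Real.exp (-t))
  rw [← Real.exp_add, neg_add_cancel, Real.exp_zero] at h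
  unfold poissonWeight
  simpa only [mul_div_assoc] using h

theorem poissonWeight_succ_mul (t : ℝ) (n : ℕ) :
    poissonWeight t (n + 1) * (n + 1) = t * poissonWeight t n := by
  unfold poissonWeight
  rw [Nat.factorial_succ]
  push_cast
  field_simp
  ring

theorem HasSum.poissonWeight_mul_natCast_smul {E : Type*} [AddCommGroup E] [Module ℝ E]
    [TopologicalSpace E] [IsTopologicalAddGroup E] [ContinuousConstSMul ℝ E] {g : ℕ → E} {s : E}
    (h : HasSum (fun n => poissonWeight t n • g (n + 1)) s) :
    HasSum (fun n => (poissonWeight t n * n) • g n) (t • s) := by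
  rw [← hasSum_nat_add_iff' 1]
  simpa [poissonWeight_succ_mul, mul_smul] using h.const_smul t

theorem hasSum_poissonWeight_mul_natCast (t : ℝ) :
    HasSum (fun n => poissonWeight t n * n) t := by
  have h : HasSum (fun n => poissonWeight t n • (1 : ℝ)) 1 := by
    simpa only [smul_eq_mul, mul_one] using hasSum_poissonWeight t
  simpa only [smul_eq_mul, mul_one] using h.poissonWeight_mul_natCast_smul (g := fun _ => 1)

theorem hasSum_poissonWeight_mul_sq_sub (t : ℝ) :
    HasSum (fun n => poissonWeight t n * (n - t) ^ 2) t := by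
  have h : HasSum (fun n => poissonWeight t n • ((n + 1 : ℕ) - 1 : ℝ)) t := by
    simpa only [smul_eq_mul, Nat.cast_add, Nat.cast_one, add_sub_cancel_right]
      using hasSum_poissonWeight_mul_natCast t
  have hfactorial : HasSum (fun n => (poissonWeight t n * n) • ((n : ℝ) - 1)) (t • t) :=
    h.poissonWeight_mul_natCast_smul (g := fun n => (n : ℝ) - 1)
  convert (hfactorial.add ((hasSum_poissonWeight_mul_natCast t).mul_left (1 - 2 * t))).add
    ((hasSum_poissonWeight t).mul_left (t ^ 2)) using 1
  · funext n; simp only [smul_eq_mul]; ring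
  · simp only [smul_eq_mul]; ring

theorem summable_poissonWeight_mul_abs_sub (ht : 0 ≤ t) :
    Summable (fun n => poissonWeight t n * |n - t|) := by
  refine .of_nonneg_of_le (fun n => mul_nonneg (poissonWeight_nonneg ht n) (abs_nonneg _))
    (fun n => ?_) ((hasSum_poissonWeight_mul_sq_sub t).add (hasSum_poissonWeight t)).summable
  rw [← mul_add_one]
  refine mul_le_mul_of_nonneg_left ?_ (poissonWeight_nonneg ht n)
  nlinarith [sq_abs ((n : ℝ) - t), abs_nonneg ((n : ℝ) - t)]

theorem tsum_poissonWeight_mul_abs_sub_le_sqrt (ht : 0 < t) :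
    ∑' n, poissonWeight t n * |n - t| ≤ √t := by
  have hsqrt : 0 < √t := Real.sqrt_pos.mpr ht
  have hbound := ((hasSum_poissonWeight_mul_sq_sub t).add
    ((hasSum_poissonWeight t).mul_left t)).div_const (2 * √t)
  have hvalue : (t + t * 1) / (2 * √t) = √t := by
    rw [mul_one, div_eq_iff (by positivity)]
    linear_combination -2 * Real.sq_sqrt ht.le
  refine (hasSum_le (fun n => ?_) (summable_poissonWeight_mul_abs_sub ht.le).hasSum
    hbound).trans hvalue.le
  -- AM-GM: `2 √t |n - t| ≤ (n - t)² + t`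
  rw [le_div_iff₀ (by positivity)]
  have := poissonWeight_nonneg ht.le n
  nlinarith [mul_nonneg this (sq_nonneg (|(n : ℝ) - t| - √t)), sq_abs ((n : ℝ) - t),
    Real.sq_sqrt ht.le]

end PoissonWeight

section BanachAlgebra

variable {A : Type*} [NormedRing A] [NormedAlgebra ℝ A]

theorem commute_exp_smul_sub_one (a : A) (t : ℝ) : Commute a (exp (t • (a - 1))) :=
  (((Commute.refl a).sub_right (Commute.one_right a)).smul_right t).exp_right

variable [CompleteSpace A]

theorem hasSum_poissonWeight_smul_pow (a : A) (t : ℝ) :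
    HasSum (fun n => poissonWeight t n • a ^ n) (exp (t • (a - 1))) := by
  have hradius (x : A) : x ∈ Metric.eball (0 : A) (expSeries ℝ A).radius :=
    (expSeries_radius_eq_top ℝ A).symm ▸ edist_lt_top _ _
  have hsplit : exp (t • (a - 1)) = Real.exp (-t) • exp (t • a) := by
    rw [smul_sub, sub_eq_add_neg, ← neg_smul, add_comm, ← Algebra.algebraMap_eq_smul_one,
      exp_add_of_commute_of_mem_ball (Algebra.commute_algebraMap_left _ _) (hradius _) (hradius _),
      ← algebraMap_exp_comm, ← Real.exp_eq_exp_ℝ, ← Algebra.smul_def]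
  rw [hsplit]
  convert (exp_series_hasSum_exp' (𝕂 := ℝ) (t • a)).const_smul (Real.exp (-t)) using 2 with n
  rw [smul_pow, smul_smul, smul_smul, poissonWeight]
  ring_nf

variable {a : A} {K : ℝ}

theorem norm_exp_smul_sub_one_le (hK : ∀ n, ‖a ^ n‖ ≤ K) {t : ℝ} (ht : 0 ≤ t) :
    ‖exp (t • (a - 1))‖ ≤ K := by
  refine (hasSum_poissonWeight_smul_pow a t).norm_le_of_bounded
    (by simpa using (hasSum_poissonWeight t).mul_right K) fun n => ?_
  rw [norm_smul, Real.norm_of_nonneg (poissonWeight_nonneg ht n)]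
  exact mul_le_mul_of_nonneg_left (hK n) (poissonWeight_nonneg ht n)

theorem norm_exp_smul_sub_one_mul_sub_one_le (hK : ∀ n, ‖a ^ n‖ ≤ K) {t : ℝ} (ht : 0 < t) :
    ‖exp (t • (a - 1)) * (a - 1)‖ ≤ K / √t := by
  set F := exp (t • (a - 1))
  have hF := hasSum_poissonWeight_smul_pow a t
  have hFa : HasSum (fun n => poissonWeight t n • a ^ (n + 1)) (F * a) := by
    simpa only [smul_mul_assoc, ← pow_succ] using hF.mul_right a
  have hdev : HasSum (fun n => (poissonWeight t n * (n - t)) • a ^ n) (t • (F * (a - 1))) := by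
    rw [mul_sub, mul_one, smul_sub]
    refine (hFa.poissonWeight_mul_natCast_smul.sub (hF.const_smul t)).congr_fun fun n => ?_
    rw [smul_smul, ← sub_smul, mul_sub, mul_comm t]
  have hnorm : t * ‖F * (a - 1)‖ ≤ √t * K := by
    have := hdev.norm_le_of_bounded
      ((summable_poissonWeight_mul_abs_sub ht.le).hasSum.mul_right K) fun n => by
        rw [norm_smul, Real.norm_eq_abs, abs_mul, abs_of_nonneg (poissonWeight_nonneg ht.le n)]
        exact mul_le_mul_of_nonneg_left (hK n) (by positivity [poissonWeight_nonneg ht.le n])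
    rw [norm_smul, Real.norm_of_nonneg ht.le] at this
    exact this.trans (mul_le_mul_of_nonneg_right (tsum_poissonWeight_mul_abs_sub_le_sqrt ht)
      ((norm_nonneg _).trans (hK 0)))
  have hsqrt : 0 < √t := Real.sqrt_pos.mpr ht
  rw [le_div_iff₀ hsqrt]
  refine le_of_mul_le_mul_left ?_ hsqrt
  rwa [mul_left_comm, Real.mul_self_sqrt ht.le, mul_comm]

theorem tendsto_exp_smul_sub_one_mul_sub_one (hK : ∀ n, ‖a ^ n‖ ≤ K) :
    Tendsto (fun t : ℝ => exp (t • (a - 1)) * (a - 1)) atTop (𝓝 0) := by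
  refine squeeze_zero_norm' ?_ ((tendsto_const_nhds (x := K)).div_atTop Real.tendsto_sqrt_atTop)
  filter_upwards [eventually_gt_atTop 0] with t ht
  exact norm_exp_smul_sub_one_mul_sub_one_le hK ht

variable {q : A}

theorem exp_smul_sub_one_mul_of_mul_eq (h : a * q = q) (t : ℝ) : exp (t • (a - 1)) * q = q := by
  have hpow (n : ℕ) : a ^ n * q = q := by
    induction n with
    | zero => rw [pow_zero, one_mul]
    | succ n ih => rw [pow_succ, mul_assoc, h, ih]
  refine ((hasSum_poissonWeight_smul_pow a t).mul_right q).unique ?_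
  simpa only [smul_mul_assoc, hpow, one_smul] using (hasSum_poissonWeight t).smul_const q

theorem mul_exp_smul_sub_one_of_mul_eq (h : q * a = q) (t : ℝ) : q * exp (t • (a - 1)) = q := by
  have hpow (n : ℕ) : q * a ^ n = q := by
    induction n with
    | zero => rw [pow_zero, mul_one]
    | succ n ih => rw [pow_succ', ← mul_assoc, h, ih]
  refine ((hasSum_poissonWeight_smul_pow a t).mul_left q).unique ?_
  simpa only [mul_smul_comm, hpow, one_smul] using (hasSum_poissonWeight t).smul_const q

end BanachAlgebra

theorem MapClusterPt.eq_of_tendsto {X α : Type*} [TopologicalSpace X] [T2Space X] {x y : X}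
    {l : Filter α} {f : α → X} (hx : MapClusterPt x l f) (hf : Tendsto f l (𝓝 y)) : x = y :=
  eq_of_nhds_neBot (hx.neBot.mono (inf_le_inf_left _ hf))

section ProperAlgebra

variable {A : Type*} [NormedRing A] [NormedAlgebra ℝ A] [ProperSpace A] {a : A} {K : ℝ}

theorem mul_eq_of_mapClusterPt_exp_smul_sub_one (hK : ∀ n, ‖a ^ n‖ ≤ K) {Q : A}
    (hQ : MapClusterPt Q atTop fun t : ℝ => exp (t • (a - 1))) : a * Q = Q ∧ Q * a = Q := by
  have hright : Q * (a - 1) = 0 :=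
    (hQ.continuousAt_comp (continuous_mul_const (a - 1)).continuousAt).eq_of_tendsto
      (tendsto_exp_smul_sub_one_mul_sub_one hK)
  have hleft : (a - 1) * Q = 0 := by
    refine (hQ.continuousAt_comp (continuous_const_mul (a - 1)).continuousAt).eq_of_tendsto ?_
    refine (tendsto_exp_smul_sub_one_mul_sub_one hK).congr fun t => ?_
    exact (((commute_exp_smul_sub_one a t).sub_left (Commute.one_left _))).eq.symm
  rw [mul_sub_one, sub_eq_zero] at hright
  rw [sub_one_mul, sub_eq_zero] at hleft
  exact ⟨hleft, hright⟩

variable {Q Q' : A}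

theorem mul_eq_left_of_mapClusterPt_exp_smul_sub_one (hK : ∀ n, ‖a ^ n‖ ≤ K)
    (hQ : MapClusterPt Q atTop fun t : ℝ => exp (t • (a - 1)))
    (hQ' : MapClusterPt Q' atTop fun t : ℝ => exp (t • (a - 1))) : Q * Q' = Q := by
  refine (hQ'.continuousAt_comp (continuous_const_mul Q).continuousAt).eq_of_tendsto ?_
  simp only [Function.comp_def, mul_exp_smul_sub_one_of_mul_eq
    (mul_eq_of_mapClusterPt_exp_smul_sub_one hK hQ).2]
  exact tendsto_const_nhds

theorem mul_eq_right_of_mapClusterPt_exp_smul_sub_one (hK : ∀ n, ‖a ^ n‖ ≤ K)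
    (hQ : MapClusterPt Q atTop fun t : ℝ => exp (t • (a - 1)))
    (hQ' : MapClusterPt Q' atTop fun t : ℝ => exp (t • (a - 1))) : Q * Q' = Q' := by
  refine (hQ.continuousAt_comp (continuous_mul_const Q').continuousAt).eq_of_tendsto ?_
  simp only [Function.comp_def, exp_smul_sub_one_mul_of_mul_eq
    (mul_eq_of_mapClusterPt_exp_smul_sub_one hK hQ').1]
  exact tendsto_const_nhds

theorem exists_tendsto_exp_smul_sub_one (hK : ∀ n, ‖a ^ n‖ ≤ K) :
    ∃ P : A, P * P = P ∧ a * P = P ∧ P * a = P ∧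
      Tendsto (fun t : ℝ => exp (t • (a - 1))) atTop (𝓝 P) := by
  have hball : ∀ᶠ t : ℝ in atTop, exp (t • (a - 1)) ∈ Metric.closedBall 0 K := by
    filter_upwards [eventually_ge_atTop 0] with t ht
    simpa using norm_exp_smul_sub_one_le hK ht
  have hcompact := isCompact_closedBall (0 : A) K
  obtain ⟨P, -, hP⟩ := hcompact.exists_mapClusterPt (le_principal_iff.2 hball)
  obtain ⟨hleft, hright⟩ := mul_eq_of_mapClusterPt_exp_smul_sub_one hK hP
  refine ⟨P, mul_eq_left_of_mapClusterPt_exp_smul_sub_one hK hP hP, hleft, hright, ?_⟩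
  refine hcompact.tendsto_nhds_of_unique_mapClusterPt hball fun Q _ hQ => ?_
  exact (mul_eq_left_of_mapClusterPt_exp_smul_sub_one hK hQ hP).symm.trans
    (mul_eq_right_of_mapClusterPt_exp_smul_sub_one hK hQ hP)

end ProperAlgebra

attribute [local instance] Matrix.linftyOpSeminormedAddCommGroup in
theorem Matrix.linfty_opNorm_le_of_forall_norm_le {m n α : Type*} [Fintype m] [Fintype n]
    [SeminormedAddCommGroup α] {M : Matrix m n α} {C : ℝ} (hC : 0 ≤ C) (h : ∀ i j, ‖M i j‖ ≤ C) :
    ‖M‖ ≤ Fintype.card n * C := by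
  lift C to NNReal using hC
  rw [Matrix.linfty_opNorm_def]
  norm_cast
  refine Finset.sup_le fun i _ => ?_
  calc ∑ j, ‖M i j‖₊ ≤ ∑ _j : n, C := Finset.sum_le_sum fun j _ => h i j
    _ = Fintype.card n * C := by simp

/-- If the powers of a complex matrix `Φ` are uniformly bounded (as happens for the
superoperator of a quantum channel), then `exp(t • (Φ − 1))` converges, as `t → ∞`, to a matrix
`P` which is a projection (`P·P = P`) absorbing `Φ` on both sides (`Φ·P = P·Φ = P`), namely the
projection onto the subspace of vectors fixed by `Φ`. -/
theorem semigroup_of_channel_tendsto_projection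
    {N : ℕ} (Φ : Matrix (Fin N) (Fin N) ℂ)
    (hbound : ∃ C : ℝ, 0 ≤ C ∧ ∀ m : ℕ, ∀ i j : Fin N, ‖(Φ ^ m) i j‖ ≤ C) :
    ∃ P : Matrix (Fin N) (Fin N) ℂ, P * P = P ∧ Φ * P = P ∧ P * Φ = P ∧
      Filter.Tendsto (fun t : ℝ => NormedSpace.exp (t • (Φ - 1)))
        Filter.atTop (nhds P) := by
  -- `exp` and the topology do not depend on this choice of submultiplicative norm.
  let : NormedRing (Matrix (Fin N) (Fin N) ℂ) := Matrix.linftyOpNormedRing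
  let : NormedAlgebra ℝ (Matrix (Fin N) (Fin N) ℂ) := Matrix.linftyOpNormedAlgebra
  obtain ⟨C, hC, hΦ⟩ := hbound
  exact exists_tendsto_exp_smul_sub_one fun m =>
    Matrix.linfty_opNorm_le_of_forall_norm_le hC (hΦ m)
end

section
/- Let A be a complex N×N matrix of finite multiplicative order h ≥ 1, i.e. A^h = 1, let ω = exp(2πi/h), and let t ≥ 0. Then Matrix.exp(t • (A − 1)) = ∑_{r=0}^{h−1} p_r(t) • A^r, where p_r(t) = (e^{−t}/h) · ∑_{s=0}^{h−1} ω^{−s·r} · exp(t·ω^s). -/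
/-!
Put `ω = exp(2πi/h)`. The discrete Fourier transforms `P_s = h⁻¹ ∑_r ω^{-sr} A^r` of the powers
of `A` satisfy `A P_s = ω^s P_s` (the sum over `r` is cyclic because `A^h = 1`) and
`∑_s P_s = 1` (orthogonality of the characters `r ↦ ω^{-sr}`). Hence
`exp(tA) = ∑_s exp(tω^s) P_s`, and `exp(t(A - 1)) = e^{-t} exp(tA)` since `1` is central.
-/

open Finset NormedSpace

theorem Finset.sum_range_shift_eq_of_apply_eq {M : Type*} [AddCommMonoid M] (f : ℕ → M) {h : ℕ}
    (hf : f h = f 0) : ∑ r ∈ range h, f (r + 1) = ∑ r ∈ range h, f r := by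
  cases h with
  | zero => simp
  | succ n => rw [sum_range_succ (fun r => f (r + 1)), hf, sum_range_succ' f]

section ExpEigen
variable {𝕂 𝔸 : Type*} [RCLike 𝕂] [NormedRing 𝔸] [NormedAlgebra 𝕂 𝔸] [CompleteSpace 𝔸]

theorem exp_mul_eq_smul_of_mul_eq_smul {x p : 𝔸} {c : 𝕂} (hxp : x * p = c • p) :
    exp x * p = exp c • p := by
  have hpow (n : ℕ) : x ^ n * p = c ^ n • p := by
    induction n with
    | zero => simp
    | succ n ih => rw [pow_succ, mul_assoc, hxp, mul_smul_comm, ih, smul_smul, ← pow_succ']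
  refine ((exp_series_hasSum_exp' (𝕂 := 𝕂) x).mul_right p).unique ?_
  simpa only [smul_mul_assoc, hpow, smul_smul, smul_eq_mul] using
    (exp_series_hasSum_exp' (𝕂 := 𝕂) c).smul_const p

theorem exp_sub_algebraMap (x : 𝔸) (c : 𝕂) :
    exp (x - algebraMap 𝕂 𝔸 c) = exp (-c) • exp x := by
  let : NormedAlgebra ℚ 𝔸 := NormedAlgebra.restrictScalars ℚ 𝕂 𝔸
  rw [sub_eq_add_neg, ← map_neg, exp_add_of_commute (Algebra.commute_algebraMap_right _ _),
    ← algebraMap_exp_comm, ← Algebra.commutes, ← Algebra.smul_def]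

end ExpEigen

section SpectralProj
variable {K R : Type*} [Field K] [Ring R] [Algebra K R]

/-- For `a ^ h = 1` and `ζ` a primitive `h`-th root of unity, the projection onto the
`ζ ^ s`-eigenspace of `a`. -/
def spectralProj (a : R) (ζ : K) (h s : ℕ) : R :=
  (h : K)⁻¹ • ∑ r ∈ range h, ζ ^ (-((s : ℤ) * r)) • a ^ r

theorem mul_spectralProj {a : R} {ζ : K} {h : ℕ} (ha : a ^ h = 1) (hζ : ζ ^ h = 1) (hζ0 : ζ ≠ 0)
    (s : ℕ) : a * spectralProj a ζ h s = ζ ^ s • spectralProj a ζ h s := by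
  let f : ℕ → R := fun r => ζ ^ (-((s : ℤ) * r)) • a ^ r
  have hshift (r : ℕ) : a * f r = ζ ^ s • f (r + 1) := by
    simp only [f, mul_smul_comm, smul_smul, ← pow_succ', ← zpow_natCast, ← zpow_add₀ hζ0]
    congr 2
    push_cast
    ring
  have hperiod : f h = f 0 := by
    simp [f, ha, mul_comm (s : ℤ), zpow_mul, hζ]
  calc a * spectralProj a ζ h s = (h : K)⁻¹ • ∑ r ∈ range h, a * f r := by
        rw [spectralProj, mul_smul_comm, mul_sum]
    _ = ζ ^ s • spectralProj a ζ h s := by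
        simp_rw [hshift, ← smul_sum, sum_range_shift_eq_of_apply_eq f hperiod, smul_comm _ (ζ ^ s)]
        rfl

theorem IsPrimitiveRoot.sum_range_zpow_neg_mul_eq_zero {ζ : K} {h r : ℕ}
    (hζ : IsPrimitiveRoot ζ h) (hr0 : r ≠ 0) (hrh : r < h) :
    ∑ s ∈ range h, ζ ^ (-((s : ℤ) * r)) = 0 := by
  have hterm (s : ℕ) : ζ ^ (-((s : ℤ) * r)) = (ζ ^ r)⁻¹ ^ s := by
    rw [zpow_neg, mul_comm, zpow_mul, zpow_natCast, zpow_natCast, inv_pow]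
  have hx1 : (ζ ^ r)⁻¹ ≠ 1 := inv_ne_one.mpr (hζ.pow_ne_one_of_pos_of_lt hr0 hrh)
  have hxh : (ζ ^ r)⁻¹ ^ h = 1 := by
    rw [inv_pow, ← pow_mul, mul_comm, pow_mul, hζ.pow_eq_one, one_pow, inv_one]
  simp only [hterm, geom_sum_eq hx1, hxh, sub_self, zero_div]

theorem sum_spectralProj {a : R} {ζ : K} {h : ℕ} (hζ : IsPrimitiveRoot ζ h) (hh : 0 < h) :
    ∑ s ∈ range h, spectralProj a ζ h s = 1 := by
  have : NeZero h := ⟨hh.ne'⟩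
  simp only [spectralProj, ← smul_sum]
  rw [sum_comm]
  simp only [← sum_smul]
  rw [sum_eq_single_of_mem 0 (mem_range.mpr hh) fun r hr hr0 => by
    rw [hζ.sum_range_zpow_neg_mul_eq_zero hr0 (mem_range.mp hr), zero_smul]]
  simp [smul_smul, hζ.neZero'.ne]

end SpectralProj

theorem exp_smul_eq_sum_spectralProj {𝔸 : Type*} [NormedRing 𝔸] [NormedAlgebra ℂ 𝔸]
    [CompleteSpace 𝔸] {a : 𝔸} {ω : ℂ} {h : ℕ} (ha : a ^ h = 1) (hω : IsPrimitiveRoot ω h)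
    (hh : 0 < h) (z : ℂ) :
    exp (z • a) = ∑ s ∈ range h, Complex.exp (z * ω ^ s) • spectralProj a ω h s := by
  calc exp (z • a) = ∑ s ∈ range h, exp (z • a) * spectralProj a ω h s := by
        rw [← mul_sum, sum_spectralProj hω hh, mul_one]
    _ = _ := by
        refine sum_congr rfl fun s _ => ?_
        rw [Complex.exp_eq_exp_ℂ]
        refine exp_mul_eq_smul_of_mul_eq_smul ?_
        rw [smul_mul_assoc, mul_spectralProj ha hω.pow_eq_one (hω.ne_zero hh.ne'), smul_smul]

theorem exp_lindblad_of_finite_order_general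
    {N : ℕ} (A : Matrix (Fin N) (Fin N) ℂ) (h : ℕ) (hh : 1 ≤ h) (hA : A ^ h = 1)
    (t : ℝ) :
    NormedSpace.exp (t • (A - 1)) =
      ∑ r ∈ Finset.range h,
        ((Complex.exp (-(t : ℂ)) / (h : ℂ)) *
          ∑ s ∈ Finset.range h,
            Complex.exp (2 * Real.pi * Complex.I / (h : ℂ)) ^ (-((s : ℤ) * (r : ℤ))) *
              Complex.exp ((t : ℂ) * Complex.exp (2 * Real.pi * Complex.I / (h : ℂ)) ^ (s : ℕ)))
          • A ^ r := by
  -- `exp` only sees the topology of the matrices, so any Banach-algebra norm serves.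
  let : NormedRing (Matrix (Fin N) (Fin N) ℂ) := Matrix.linftyOpNormedRing
  let : NormedAlgebra ℂ (Matrix (Fin N) (Fin N) ℂ) := Matrix.linftyOpNormedAlgebra
  have hω := Complex.isPrimitiveRoot_exp h (by omega)
  have hsplit : t • (A - 1) = (t : ℂ) • A - algebraMap ℂ _ (t : ℂ) := by
    rw [Algebra.algebraMap_eq_smul_one, ← smul_sub, Complex.coe_smul]
  set ω := Complex.exp (2 * Real.pi * Complex.I / (h : ℂ))
  have hexp : exp (t • (A - 1)) = Complex.exp (-t) •
      ∑ s ∈ range h, Complex.exp (t * ω ^ s) • spectralProj A ω h s := by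
    rw [hsplit, ← exp_smul_eq_sum_spectralProj hA hω hh, Complex.exp_eq_exp_ℂ]
    exact exp_sub_algebraMap _ _
  rw [hexp]
  simp only [spectralProj, smul_sum, smul_smul]
  rw [sum_comm]
  simp only [mul_sum, sum_smul]
  refine sum_congr rfl fun r _ => sum_congr rfl fun s _ => ?_
  congr 1
  ring

/-- For a matrix `A` of finite multiplicative order `h` (`A^h = 1`) and `t ≥ 0`,
`exp(t • (A − 1)) = ∑_{r<h} p_r(t) • A^r` with
`p_r(t) = (e^{−t}/h) ∑_{s<h} ω^{−s·r} exp(t·ω^s)`, `ω = exp(2πi/h)`. -/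
theorem exp_lindblad_of_finite_order
    {N : ℕ} (A : Matrix (Fin N) (Fin N) ℂ) (h : ℕ) (hh : 1 ≤ h) (hA : A ^ h = 1)
    (t : ℝ) (ht : 0 ≤ t) :
    NormedSpace.exp (t • (A - 1)) =
      ∑ r ∈ Finset.range h,
        ((Complex.exp (-(t : ℂ)) / (h : ℂ)) *
          ∑ s ∈ Finset.range h,
            Complex.exp (2 * Real.pi * Complex.I / (h : ℂ)) ^ (-((s : ℤ) * (r : ℤ))) *
              Complex.exp ((t : ℂ) * Complex.exp (2 * Real.pi * Complex.I / (h : ℂ)) ^ (s : ℕ)))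
          • A ^ r :=
  exp_lindblad_of_finite_order_general A h hh hA t
end

section
/- Let G be a finite group of order g ≥ 2 and let ρ : G → Matrix (Fin N) (Fin N) ℂ be a representation of G by complex matrices (a monoid homomorphism). Set Φ* = (1/g) • ∑_{h∈G} ρ(h) and define the Lindblad generator L* = (1/(g−1)) • ∑_{h∈G, h≠1} ρ(h) − 1. Then for every t ≥ 0, Matrix.exp(t • L*) = e^{−t·g/(g−1)} • 1 + (1 − e^{−t·g/(g−1)}) • Φ*. In particular the whole segment from the identity to the center Φ* of the group polytope consists of accessible maps. -/
/-!
Since `ρ h * Φ* = Φ*`, the average `Φ*` is idempotent, and with `s = t g / (g - 1)` the exponent is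
`t • L* = s • (Φ* - 1) = -s • (1 - Φ*)`. For an idempotent `P` all powers `P ^ n` with `n ≥ 1`
equal `P`, so the exponential series collapses to `exp (z • P) = (1 - P) + exp z • P`; applying
this to the idempotent `1 - Φ*` gives the formula.
-/

open NormedSpace Nat

section Exponential

variable {𝕂 𝔸 : Type*} [RCLike 𝕂] [NormedRing 𝔸] [NormedAlgebra 𝕂 𝔸] [CompleteSpace 𝔸]

theorem IsIdempotentElem.exp_smul {P : 𝔸} (hP : IsIdempotentElem P) (z : 𝕂) :
    exp (z • P) = (1 - P) + exp z • P := by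
  have hterm : ∀ n, (n !⁻¹ : 𝕂) • (z • P) ^ n =
      (n !⁻¹ : 𝕂) • z ^ n • P + Pi.single (M := fun _ => 𝔸) 0 (1 - P) n := by
    rintro (_ | n)
    · simp
    · rw [smul_pow, hP.pow_succ_eq, Pi.single_eq_of_ne n.succ_ne_zero, add_zero]
  have hsum : HasSum (fun n => (n !⁻¹ : 𝕂) • (z • P) ^ n) (exp z • P + (1 - P)) := by
    simp_rw [hterm, ← smul_assoc]
    exact ((exp_series_hasSum_exp' (𝕂 := 𝕂) z).smul_const P).add (hasSum_pi_single 0 (1 - P))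
  rw [add_comm]
  exact (exp_series_hasSum_exp' (𝕂 := 𝕂) (z • P)).unique hsum

theorem IsIdempotentElem.exp_smul_sub_one {P : 𝔸} (hP : IsIdempotentElem P) (z : 𝕂) :
    exp (z • (P - 1)) = exp (-z) • 1 + (1 - exp (-z)) • P := by
  rw [← neg_sub, smul_neg, ← neg_smul, hP.one_sub.exp_smul, sub_sub_cancel, smul_sub, sub_smul,
    one_smul]
  abel

end Exponential

section GroupAverage

variable {G K A : Type*} [Group G] [Fintype G] [Field K] [CharZero K] [Ring A] [Algebra K A]

theorem MonoidHom.mul_sum_eq_sum (ρ : G →* A) (g : G) : ρ g * ∑ h, ρ h = ∑ h, ρ h := by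
  rw [Finset.mul_sum]
  simp_rw [← map_mul]
  exact Fintype.sum_bijective (g * ·) (Group.mulLeft_bijective g) _ _ fun _ => rfl

theorem MonoidHom.sum_mul_sum_self (ρ : G →* A) :
    (∑ h, ρ h) * ∑ h, ρ h = Fintype.card G • ∑ h, ρ h := by
  simp_rw [Finset.sum_mul, ρ.mul_sum_eq_sum, Finset.sum_const, Finset.card_univ]

theorem MonoidHom.isIdempotentElem_average (ρ : G →* A) :
    IsIdempotentElem ((Fintype.card G : K)⁻¹ • ∑ h, ρ h) := by
  have hcard : (Fintype.card G : K) ≠ 0 := Nat.cast_ne_zero.mpr Fintype.card_ne_zero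
  rw [IsIdempotentElem, smul_mul_smul_comm, ρ.sum_mul_sum_self, ← Nat.cast_smul_eq_nsmul K,
    smul_smul, mul_assoc, inv_mul_cancel₀ hcard, mul_one]

end GroupAverage

theorem segment_to_center_is_accessible_general
    {G : Type*} [Group G] [Fintype G] [DecidableEq G] {N : ℕ}
    (hg : 2 ≤ Fintype.card G)
    (ρ : G →* Matrix (Fin N) (Fin N) ℂ)
    (t : ℝ) :
    NormedSpace.exp
        (t • ((((Fintype.card G : ℝ) - 1)⁻¹ •
            ∑ h ∈ Finset.univ.erase (1 : G), ρ h) - 1)) =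
      Real.exp (-(t * (Fintype.card G : ℝ) / ((Fintype.card G : ℝ) - 1))) •
          (1 : Matrix (Fin N) (Fin N) ℂ) +
        (1 - Real.exp (-(t * (Fintype.card G : ℝ) / ((Fintype.card G : ℝ) - 1)))) •
          (((Fintype.card G : ℂ))⁻¹ • ∑ h : G, ρ h) := by
  -- Any complete algebra norm will do: `exp` only depends on the topology.
  let _ : NormedRing (Matrix (Fin N) (Fin N) ℂ) := Matrix.linftyOpNormedRing
  let _ : NormedAlgebra ℝ (Matrix (Fin N) (Fin N) ℂ) := Matrix.linftyOpNormedAlgebra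
  set g := Fintype.card G
  have hg1 : (g : ℝ) - 1 ≠ 0 := by
    have : (2 : ℝ) ≤ g := mod_cast hg
    linarith
  have hgenerator : t • (((g : ℝ) - 1)⁻¹ • ∑ h ∈ Finset.univ.erase 1, ρ h - 1) =
      (t * g / (g - 1)) • ((g : ℂ)⁻¹ • ∑ h, ρ h - 1) := by
    have hg0 : (g : ℝ) ≠ 0 := Nat.cast_ne_zero.mpr Fintype.card_ne_zero
    rw [Finset.sum_erase_eq_sub (Finset.mem_univ 1), map_one, ← Complex.ofReal_natCast,
      ← Complex.ofReal_inv, Complex.coe_smul]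
    match_scalars <;> field_simp
    ring
  rw [hgenerator, Real.exp_eq_exp_ℝ]
  exact (ρ.isIdempotentElem_average (K := ℂ)).exp_smul_sub_one _

/-- The segment joining the identity to the center `Φ* = (1/g) ∑ ρ h` of the group
polytope consists of accessible maps: the generator
`L* = (1/(g−1)) ∑_{h≠1} ρ h − 1` satisfies
`exp(t•L*) = e^{−tg/(g−1)} • 1 + (1 − e^{−tg/(g−1)}) • Φ*`. -/
theorem segment_to_center_is_accessible
    {G : Type*} [Group G] [Fintype G] [DecidableEq G] {N : ℕ}
    (hg : 2 ≤ Fintype.card G)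
    (ρ : G →* Matrix (Fin N) (Fin N) ℂ)
    (t : ℝ) (ht : 0 ≤ t) :
    NormedSpace.exp
        (t • ((((Fintype.card G : ℝ) - 1)⁻¹ •
            ∑ h ∈ Finset.univ.erase (1 : G), ρ h) - 1)) =
      Real.exp (-(t * (Fintype.card G : ℝ) / ((Fintype.card G : ℝ) - 1))) •
          (1 : Matrix (Fin N) (Fin N) ℂ) +
        (1 - Real.exp (-(t * (Fintype.card G : ℝ) / ((Fintype.card G : ℝ) - 1)))) •
          (((Fintype.card G : ℂ))⁻¹ • ∑ h : G, ρ h) :=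
  segment_to_center_is_accessible_general hg ρ t
end

section
/- Let G be a finite group of order g, let ρ : G → Matrix (Fin N) (Fin N) ℂ be a representation of G by complex matrices, let q : G → ℝ with q(h) ≥ 0 and ∑_{h∈G} q(h) = 1, and set L = ∑_{h∈G} q(h) • ρ(h) − 1 and Φ* = (1/g) • ∑_{h∈G} ρ(h). Then for all t, s ≥ 0, Matrix.exp(t • L + s • (Φ* − 1)) = e^{−s} • Matrix.exp(t • L) + (1 − e^{−s}) • Φ*. Consequently, for every accessible map Ω_t = exp(t·L), the whole segment joining Ω_t to Φ* is accessible: the set of accessible maps is star-shaped with respect to the center Φ* of the group polytope. -/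
/-!
Averaging over the group makes `Φ* = ρ.average ℂ` an idempotent that absorbs every `ρ h` on both
sides, so `L = ∑ q h • ρ h - 1` satisfies `L Φ* = Φ* L = 0`. Then `t L` commutes with the
idempotent `1 - Φ*`, whose exponential is explicit, and `exp (t L)` fixes `Φ*`.
-/

section BanachAlgebra

open NormedSpace

variable {𝔸 : Type*} [NormedRing 𝔸] [CompleteSpace 𝔸]

theorem NormedSpace.exp_mul_eq_self_of_mul_eq_zero [NormedAlgebra ℚ 𝔸] {x p : 𝔸}
    (h : x * p = 0) : exp x * p = p := by
  have hterm :
      (fun n : ℕ ↦ ((n.factorial⁻¹ : ℚ) • x ^ n) * p) = fun n ↦ if n = 0 then p else 0 := by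
    funext n
    cases n with
    | zero => simp
    | succ n => simp [pow_succ, mul_assoc, h]
  have := (exp_series_hasSum_exp' (𝕂 := ℚ) x).mul_right p
  rw [hterm] at this
  exact this.unique (hasSum_ite_eq 0 p)

variable {𝕂 : Type*} [RCLike 𝕂] [NormedAlgebra 𝕂 𝔸]

theorem IsIdempotentElem.exp_smul_s8 {p : 𝔸} (hp : IsIdempotentElem p) (c : 𝕂) :
    exp (c • p) = exp c • p + (1 - p) := by
  have hterm : ∀ n : ℕ, (n.factorial⁻¹ : 𝕂) • (c • p) ^ n
      = ((n.factorial⁻¹ : 𝕂) • c ^ n) • p + if n = 0 then 1 - p else 0 := by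
    intro n
    cases n with
    | zero => simp
    | succ n => simp [smul_pow, hp.pow_succ_eq, smul_smul]
  have hsum := ((exp_series_hasSum_exp' (𝕂 := 𝕂) c).smul_const p).add (hasSum_ite_eq 0 (1 - p))
  rw [← funext hterm] at hsum
  exact (exp_series_hasSum_exp' (𝕂 := 𝕂) (c • p)).unique hsum

theorem NormedSpace.exp_add_smul_sub_one_of_isIdempotentElem {x p : 𝔸} (hp : IsIdempotentElem p)
    (hxp : x * p = 0) (hpx : p * x = 0) (s : 𝕂) :
    exp (x + s • (p - 1)) = exp (-s) • exp x + (1 - exp (-s)) • p := by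
  let : NormedAlgebra ℚ 𝔸 := .restrictScalars ℚ 𝕂 𝔸
  have hcomm : Commute x ((-s) • (1 - p)) := by
    refine Commute.smul_right ?_ _
    simp [Commute, SemiconjBy, mul_sub, sub_mul, hxp, hpx]
  have hsplit : x + s • (p - 1) = x + (-s) • (1 - p) := by module
  rw [hsplit, exp_add_of_commute hcomm, hp.one_sub.exp_smul_s8, sub_sub_cancel, mul_add,
    mul_smul_comm, mul_sub, mul_one, exp_mul_eq_self_of_mul_eq_zero hxp]
  module

end BanachAlgebra

namespace MonoidHom

variable {G M : Type*} [Group G] [Fintype G] [Semiring M] (ρ : G →* M)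

theorem mul_sum_apply (k : G) : ρ k * ∑ h, ρ h = ∑ h, ρ h := by
  simp_rw [Finset.mul_sum, ← map_mul]
  exact Equiv.sum_comp (Equiv.mulLeft k) ρ

theorem sum_apply_mul (k : G) : (∑ h, ρ h) * ρ k = ∑ h, ρ h := by
  simp_rw [Finset.sum_mul, ← map_mul]
  exact Equiv.sum_comp (Equiv.mulRight k) ρ

variable (𝕜 : Type*) [Semifield 𝕜] [Algebra 𝕜 M]

noncomputable def average : M := (Fintype.card G : 𝕜)⁻¹ • ∑ h, ρ h

theorem mul_average (k : G) : ρ k * ρ.average 𝕜 = ρ.average 𝕜 := by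
  rw [average, mul_smul_comm, mul_sum_apply]

theorem average_mul (k : G) : ρ.average 𝕜 * ρ k = ρ.average 𝕜 := by
  rw [average, smul_mul_assoc, sum_apply_mul]

theorem weighted_sum_mul_average {R : Type*} [CommSemiring R] [Algebra R M]
    (q : G → R) (hq : ∑ h, q h = 1) : (∑ h, q h • ρ h) * ρ.average 𝕜 = ρ.average 𝕜 := by
  simp_rw [Finset.sum_mul, smul_mul_assoc, mul_average, ← Finset.sum_smul, hq, one_smul]

theorem average_mul_weighted_sum {R : Type*} [CommSemiring R] [Algebra R M]
    (q : G → R) (hq : ∑ h, q h = 1) : ρ.average 𝕜 * (∑ h, q h • ρ h) = ρ.average 𝕜 := by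
  simp_rw [Finset.mul_sum, mul_smul_comm, average_mul, ← Finset.sum_smul, hq, one_smul]

theorem isIdempotentElem_average_s8 [CharZero 𝕜] : IsIdempotentElem (ρ.average 𝕜) := by
  have hcard : (Fintype.card G : 𝕜) ≠ 0 := Nat.cast_ne_zero.mpr Fintype.card_ne_zero
  calc ρ.average 𝕜 * ρ.average 𝕜
      = (Fintype.card G : 𝕜)⁻¹ • ∑ h, ρ h * ρ.average 𝕜 := by
        rw [average, smul_mul_assoc, Finset.sum_mul]
    _ = ρ.average 𝕜 := by
        simp_rw [mul_average, Finset.sum_const, Finset.card_univ, ← Nat.cast_smul_eq_nsmul 𝕜,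
          smul_smul, inv_mul_cancel₀ hcard, one_smul]

end MonoidHom

theorem accessible_maps_star_shaped_general
    {G : Type*} [Group G] [Fintype G] {N : ℕ}
    (ρ : G →* Matrix (Fin N) (Fin N) ℂ)
    (q : G → ℝ) (hqsum : ∑ h : G, q h = 1)
    (t s : ℝ) :
    NormedSpace.exp
        (t • ((∑ h : G, q h • ρ h) - 1) +
          s • ((((Fintype.card G : ℂ))⁻¹ • ∑ h : G, ρ h) - 1)) =
      Real.exp (-s) • NormedSpace.exp (t • ((∑ h : G, q h • ρ h) - 1)) +
        (1 - Real.exp (-s)) • (((Fintype.card G : ℂ))⁻¹ • ∑ h : G, ρ h) := by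
  have hLΦ : ((∑ h, q h • ρ h) - 1) * ρ.average ℂ = 0 := by
    rw [sub_mul, ρ.weighted_sum_mul_average ℂ q hqsum, one_mul, sub_self]
  have hΦL : ρ.average ℂ * ((∑ h, q h • ρ h) - 1) = 0 := by
    rw [mul_sub, ρ.average_mul_weighted_sum ℂ q hqsum, mul_one, sub_self]
  -- `exp` only sees the topology, so any Banach algebra norm on matrices will do.
  let : NormedRing (Matrix (Fin N) (Fin N) ℂ) := Matrix.linftyOpNormedRing
  let : NormedAlgebra ℝ (Matrix (Fin N) (Fin N) ℂ) := Matrix.linftyOpNormedAlgebra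
  rw [Real.exp_eq_exp_ℝ]
  exact NormedSpace.exp_add_smul_sub_one_of_isIdempotentElem (ρ.isIdempotentElem_average_s8 ℂ)
    (by rw [smul_mul_assoc, hLΦ, smul_zero]) (by rw [mul_smul_comm, hΦL, smul_zero]) s

/-- Star-shapedness of the set of accessible maps with respect to the center
`Φ* = (1/g) ∑ ρ h`: for the Lindblad generator `L = ∑ q h • ρ h − 1`,
`exp(t•L + s•(Φ*−1)) = e^{−s} • exp(t•L) + (1 − e^{−s}) • Φ*`, so the whole segment joining the
accessible map `exp(t•L)` to `Φ*` is accessible. -/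
theorem accessible_maps_star_shaped
    {G : Type*} [Group G] [Fintype G] {N : ℕ}
    (ρ : G →* Matrix (Fin N) (Fin N) ℂ)
    (q : G → ℝ) (hq : ∀ h : G, 0 ≤ q h) (hqsum : ∑ h : G, q h = 1)
    (t s : ℝ) (ht : 0 ≤ t) (hs : 0 ≤ s) :
    NormedSpace.exp
        (t • ((∑ h : G, q h • ρ h) - 1) +
          s • ((((Fintype.card G : ℂ))⁻¹ • ∑ h : G, ρ h) - 1)) =
      Real.exp (-s) • NormedSpace.exp (t • ((∑ h : G, q h • ρ h) - 1)) +
        (1 - Real.exp (-s)) • (((Fintype.card G : ℂ))⁻¹ • ∑ h : G, ρ h) :=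
  accessible_maps_star_shaped_general ρ q hqsum t s
end

section
/- Let G be a finite group of order g ≥ 2 with left regular representation R : G → Matrix G G ℝ, and let 𝒜 ⊆ (G → ℝ) be the set of all w such that there exist t ≥ 0 and q : G → ℝ with q ≥ 0 and ∑_h q(h) = 1 satisfying Matrix.exp(t • (∑_{h∈G} q(h) • R(h) − 1)) = ∑_{μ∈G} w(μ) • R(μ). Then 𝒜 has nonempty interior inside the affine hyperplane of weight vectors: there exist w₀ ∈ 𝒜 and ε > 0 such that every w : G → ℝ with ∑_μ w(μ) = 1 and ‖w − w₀‖ < ε (Euclidean norm on G → ℝ) belongs to 𝒜. In particular the set of accessible maps occupies a positive volume in the polytope formed by the convex hull of the group elements. -/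
/-!
A weight vector `m` with `∑ m = 0` and `m h ≥ 0` for `h ≠ 1` is `t • (q - δ₁)` with `t ≥ 0` and `q`
a probability vector, so `exp (∑ m h • R h)` is accessible. Such `m` form a cone with apex `0`
and nonempty interior in the hyperplane `∑ m = 0`. The span of the `R h` is a closed subalgebra, hence contains
`exp (∑ m h • R h)`; reading off its weights gives a map with derivative the identity at `0`, so by
the inverse function theorem it maps a neighbourhood of some point of the cone onto a neighbourhood
of its image. The all-ones matrix is an eigenvector of every `R h`, which shows that the weights of
`exp (∑ m h • R h)` sum to `e ^ ∑ m`; so weights summing to `1` come from the hyperplane `∑ m = 0`.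
-/

open NormedSpace Topology

theorem NormedSpace.exp_mul_of_mul_eq_smul {𝔸 : Type*} [NormedRing 𝔸] [NormedAlgebra ℝ 𝔸]
    [CompleteSpace 𝔸] {x y : 𝔸} {c : ℝ} (h : x * y = c • y) : exp x * y = Real.exp c • y := by
  have hpow (n : ℕ) : x ^ n * y = c ^ n • y := by
    induction n with
    | zero => simp
    | succ n ih => rw [pow_succ, mul_assoc, h, mul_smul_comm, ih, smul_smul, pow_succ']
  rw [exp_eq_tsum ℝ, Real.exp_eq_exp_ℝ, exp_eq_tsum ℝ, ← (expSeries_summable' x).tsum_mul_right,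
    ← (expSeries_summable' (𝕂 := ℝ) c).tsum_smul_const]
  simp_rw [smul_mul_assoc, hpow, smul_smul, smul_eq_mul]

theorem NormedSpace.exp_mem_span_range {G 𝔸 : Type*} [Monoid G] [Finite G] [NormedRing 𝔸]
    [NormedAlgebra ℝ 𝔸] [CompleteSpace 𝔸] (ρ : G →* 𝔸) {x : 𝔸} (hx : x ∈ Submodule.span ℝ (Set.range ρ)) :
    exp x ∈ Submodule.span ℝ (Set.range ρ) := by
  have hspan : Subalgebra.toSubmodule (Algebra.adjoin ℝ (Set.range ρ)) =
      Submodule.span ℝ (Set.range ρ) := by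
    rw [Algebra.adjoin_eq_span, ← MonoidHom.coe_mrange, Submonoid.closure_eq]
  have : FiniteDimensional ℝ (Submodule.span ℝ (Set.range ρ)) :=
    FiniteDimensional.span_of_finite ℝ (Set.finite_range ρ)
  have hclosed : IsClosed (Algebra.adjoin ℝ (Set.range ρ) : Set 𝔸) := by
    rw [← Subalgebra.coe_toSubmodule, hspan]
    exact Submodule.closed_of_finiteDimensional _
  rw [← hspan, Subalgebra.mem_toSubmodule] at hx ⊢
  rw [exp_eq_tsum ℝ]
  exact tsum_mem hclosed fun n => Subalgebra.smul_mem _ (pow_mem hx n) _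

theorem hasStrictFDerivAt_exp_comp_zero {E F 𝔸 : Type*} [NormedAddCommGroup E] [NormedSpace ℝ E]
    [NormedAddCommGroup F] [NormedSpace ℝ F] [NormedRing 𝔸] [NormedAlgebra ℝ 𝔸] [CompleteSpace 𝔸]
    (P : 𝔸 →L[ℝ] F) (L : E →L[ℝ] 𝔸) :
    HasStrictFDerivAt (fun m => P (exp (L m))) (P.comp L) 0 := by
  have hexp : HasStrictFDerivAt exp (1 : 𝔸 →L[ℝ] 𝔸) (L 0) :=
    (map_zero L).symm ▸ hasStrictFDerivAt_exp_zero
  have h := P.hasStrictFDerivAt.comp 0 (hexp.comp 0 L.hasStrictFDerivAt)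
  rwa [ContinuousLinearMap.one_def, ContinuousLinearMap.id_comp] at h

theorem HasStrictFDerivAt.exists_mem_image_mem_nhds {𝕜 E F : Type*} [NontriviallyNormedField 𝕜]
    [NormedAddCommGroup E] [NormedSpace 𝕜 E] [CompleteSpace E]
    [NormedAddCommGroup F] [NormedSpace 𝕜 F] [CompleteSpace F]
    {f : E → F} {f' : E ≃L[𝕜] F} {a : E} (hf : HasStrictFDerivAt f (f' : E →L[𝕜] F) a)
    {s U : Set E} (ha : a ∈ closure s) (hU : IsOpen U) (hsU : s ⊆ U) :
    ∃ x ∈ s, f '' U ∈ 𝓝 (f x) := by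
  set Φ := hf.toOpenPartialHomeomorph f
  obtain ⟨x, hxΦ, hxs⟩ := mem_closure_iff_nhds.mp ha _
    (Φ.open_source.mem_nhds hf.mem_toOpenPartialHomeomorph_source)
  refine ⟨x, hxs, ?_⟩
  simpa [Φ, hf.toOpenPartialHomeomorph_coe] using Φ.image_mem_nhds hxΦ (hU.mem_nhds (hsU hxs))

theorem zero_mem_closure_setOf_sum_eq_zero_and_pos {ι : Type*} [Fintype ι] [DecidableEq ι]
    (i : ι) : (0 : ι → ℝ) ∈ closure {m | ∑ j, m j = 0 ∧ ∀ j ≠ i, 0 < m j} := by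
  set u : ι → ℝ := 1 - (Fintype.card ι : ℝ) • Pi.single i 1
  have hu : ∑ j, u j = 0 := by simp [u, Finset.sum_sub_distrib, ← Finset.mul_sum]
  have hlim : Filter.Tendsto (fun s : ℝ => s • u) (𝓝[>] 0) (𝓝 0) := by
    have hcont : Continuous fun s : ℝ => s • u := continuous_id.smul continuous_const
    exact (hcont.tendsto' 0 0 (zero_smul ℝ u)).mono_left nhdsWithin_le_nhds
  refine mem_closure_of_tendsto hlim (eventually_mem_nhdsWithin.mono fun s hs => ⟨?_, ?_⟩)
  · simp [← Finset.mul_sum, hu]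
  · intro j hj
    simpa [u, hj] using hs

theorem exists_eq_smul_sub_single {ι : Type*} [Fintype ι] [DecidableEq ι] (i : ι) (m : ι → ℝ)
    (hsum : ∑ j, m j = 0) (hm : ∀ j ≠ i, 0 ≤ m j) :
    ∃ t : ℝ, 0 ≤ t ∧ ∃ q : ι → ℝ, (∀ j, 0 ≤ q j) ∧ ∑ j, q j = 1 ∧
      m = t • (q - Pi.single i 1) := by
  have hsplit := Finset.add_sum_erase Finset.univ m (Finset.mem_univ i)
  have hrest : 0 ≤ ∑ j ∈ Finset.univ.erase i, m j :=
    Finset.sum_nonneg fun j hj => hm j (Finset.ne_of_mem_erase hj)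
  rcases (show m i ≤ 0 by linarith).eq_or_lt with hi | hi
  · refine ⟨0, le_rfl, Pi.single i 1, fun j => ?_, by simp, ?_⟩
    · by_cases hj : j = i <;> simp [hj]
    · have hnonneg (j : ι) : 0 ≤ m j := by
        by_cases hj : j = i
        · exact hj ▸ hi.ge
        · exact hm j hj
      simpa [funext_iff] using (Fintype.sum_eq_zero_iff_of_nonneg hnonneg).mp hsum
  · refine ⟨-m i, by linarith, Pi.single i 1 - (m i)⁻¹ • m, fun j => ?_, ?_, ?_⟩
    · by_cases hj : j = i
      · simp [hj, hi.ne]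
      · simpa [hj] using mul_nonneg_of_nonpos_of_nonpos (inv_nonpos.mpr hi.le)
          (neg_nonpos.mpr (hm j hj))
    · simp [Finset.sum_sub_distrib, ← Finset.mul_sum, hsum]
    · ext j
      simp [hi.ne]

noncomputable section RegularRepresentation

variable (G : Type*) [Group G] [Fintype G] [DecidableEq G]

def regularRep : G →* Matrix G G ℝ where
  toFun g := Matrix.of fun a b => if a = g * b then 1 else 0
  map_one' := by ext a b; simp [Matrix.one_apply]
  map_mul' g h := by
    ext a b
    simp [Matrix.mul_apply, mul_assoc, eq_comm (a := (_ : G)) (b := h * b)]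

def regularCoord : Matrix G G ℝ →L[ℝ] (G → ℝ) :=
  LinearMap.toContinuousLinearMap
    { toFun := fun M g => M g 1
      map_add' := fun _ _ => rfl
      map_smul' := fun _ _ => rfl }

variable {G}

theorem regularCoord_sum_smul (w : G → ℝ) :
    regularCoord G (∑ g, w g • regularRep G g) = w := by
  ext g
  change (∑ c, w c • regularRep G c) g 1 = w g
  simp [regularRep, Matrix.sum_apply]

theorem sum_smul_regularRep_mul_ones (m : G → ℝ) :
    (∑ g, m g • regularRep G g) * Matrix.of (fun _ _ => 1) =
      (∑ g, m g) • Matrix.of (fun _ _ => 1) := by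
  have hrow (g : G) : regularRep G g * Matrix.of (fun _ _ => (1 : ℝ)) = Matrix.of fun _ _ => 1 := by
    have hsolve (a b : G) : a = g * b ↔ b = g⁻¹ * a := by rw [eq_inv_mul_iff_mul_eq, eq_comm]
    ext a b
    simp [regularRep, Matrix.mul_apply, hsolve]
  simp [Finset.sum_mul, hrow, Finset.sum_smul]

theorem exists_exp_eq_exp_sum_smul_regularRep (m : G → ℝ) (hsum : ∑ g, m g = 0)
    (hm : ∀ g ≠ 1, 0 ≤ m g) :
    ∃ t : ℝ, 0 ≤ t ∧ ∃ q : G → ℝ, (∀ h, 0 ≤ q h) ∧ ∑ h, q h = 1 ∧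
      exp (t • ((∑ h, q h • regularRep G h) - 1)) = exp (∑ g, m g • regularRep G g) := by
  obtain ⟨t, ht, q, hq, hq1, rfl⟩ := exists_eq_smul_sub_single 1 m hsum hm
  refine ⟨t, ht, q, hq, hq1, ?_⟩
  simp_rw [← Fintype.linearCombination_apply ℝ]
  rw [map_smul, map_sub, Fintype.linearCombination_apply_single, one_smul, map_one]

attribute [local instance] Matrix.linftyOpNormedRing Matrix.linftyOpNormedAlgebra

theorem exp_sum_smul_regularRep (m : G → ℝ) :
    exp (∑ g, m g • regularRep G g) =
      ∑ g, regularCoord G (exp (∑ g, m g • regularRep G g)) g • regularRep G g := by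
  have hmem : exp (∑ g, m g • regularRep G g) ∈ Submodule.span ℝ (Set.range (regularRep G)) :=
    exp_mem_span_range (regularRep G) ((Submodule.mem_span_range_iff_exists_fun ℝ).mpr ⟨m, rfl⟩)
  obtain ⟨w, hw⟩ := (Submodule.mem_span_range_iff_exists_fun ℝ).mp hmem
  rw [← hw, regularCoord_sum_smul]

theorem sum_eq_zero_of_exp_sum_smul_regularRep_eq {m w : G → ℝ}
    (hexp : exp (∑ g, m g • regularRep G g) = ∑ g, w g • regularRep G g) (hw : ∑ g, w g = 1) :
    ∑ g, m g = 0 := by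
  have hones : Matrix.of (fun _ _ => 1 : G → G → ℝ) ≠ 0 := fun h => by
    simpa using congr_fun (congr_fun h 1) 1
  have h : exp (∑ g, m g • regularRep G g) * Matrix.of (fun _ _ => 1) =
      Real.exp (∑ g, m g) • Matrix.of (fun _ _ => 1) :=
    exp_mul_of_mul_eq_smul (sum_smul_regularRep_mul_ones m)
  rw [hexp, sum_smul_regularRep_mul_ones, hw] at h
  exact Real.exp_eq_one_iff _ |>.mp (smul_left_injective ℝ hones h).symm

theorem hasStrictFDerivAt_regularCoord_exp_sum_smul :
    HasStrictFDerivAt (fun m : G → ℝ => regularCoord G (exp (∑ g, m g • regularRep G g)))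
      (ContinuousLinearMap.id ℝ (G → ℝ)) 0 := by
  set L := (Fintype.linearCombination ℝ (regularRep G)).toContinuousLinearMap
  have hid : (regularCoord G).comp L = ContinuousLinearMap.id ℝ (G → ℝ) :=
    ContinuousLinearMap.ext regularCoord_sum_smul
  exact hid ▸ hasStrictFDerivAt_exp_comp_zero (regularCoord G) L

end RegularRepresentation

theorem accessible_maps_positive_volume_general
    {G : Type*} [Group G] [Fintype G] [DecidableEq G]
    (R : G → Matrix G G ℝ)
    (hR : ∀ g a b : G, R g a b = if a = g * b then 1 else 0)
    (A : Set (G → ℝ))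
    (hA : A = {w : G → ℝ | ∃ t : ℝ, 0 ≤ t ∧ ∃ q : G → ℝ,
      (∀ h : G, 0 ≤ q h) ∧ (∑ h : G, q h = 1) ∧
      NormedSpace.exp (t • ((∑ h : G, q h • R h) - 1)) = ∑ μ : G, w μ • R μ}) :
    ∃ w₀ ∈ A, ∃ ε : ℝ, 0 < ε ∧
      ∀ w : EuclideanSpace ℝ G, (∑ μ : G, w μ = 1) →
        ‖w - (WithLp.toLp 2 w₀ : EuclideanSpace ℝ G)‖ < ε → (show G → ℝ from w) ∈ A := by
  obtain rfl : R = regularRep G := funext fun g => Matrix.ext (hR g)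
  subst hA
  have hU : IsOpen {m : G → ℝ | ∀ g ≠ 1, 0 < m g} := by
    simp only [Set.ofPred_forall]
    exact isOpen_iInter_of_finite fun g => isOpen_iInter_of_finite fun _ =>
      isOpen_lt continuous_const (continuous_apply g)
  obtain ⟨m₀, ⟨hm₀sum, hm₀pos⟩, hnhds⟩ :=
    hasStrictFDerivAt_regularCoord_exp_sum_smul.exists_mem_image_mem_nhds
      (f' := ContinuousLinearEquiv.refl ℝ _)
      (zero_mem_closure_setOf_sum_eq_zero_and_pos 1) hU fun m hm => hm.2
  refine ⟨_, exp_sum_smul_regularRep m₀ ▸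
    exists_exp_eq_exp_sum_smul_regularRep m₀ hm₀sum fun g hg => (hm₀pos g hg).le, ?_⟩
  obtain ⟨ε, hε, hball⟩ := Metric.mem_nhds_iff.mp
    ((PiLp.continuous_ofLp 2 _).continuousAt.preimage_mem_nhds hnhds)
  refine ⟨ε, hε, fun w hw hdist => ?_⟩
  obtain ⟨m, hm, hmw⟩ := hball (by rwa [Metric.mem_ball, dist_eq_norm])
  have hexp : exp (∑ g, m g • regularRep G g) = ∑ g, w g • regularRep G g :=
    hmw ▸ exp_sum_smul_regularRep m
  rw [Set.mem_ofPred_eq, ← hexp]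
  exact exists_exp_eq_exp_sum_smul_regularRep m
    (sum_eq_zero_of_exp_sum_smul_regularRep_eq hexp hw) fun g hg => (hm g hg).le

/-- The set of weight vectors of accessible maps of a finite group (in the left
regular representation) has nonempty interior in the affine hyperplane of normalized weight
vectors: the accessible maps occupy a positive volume of the group polytope. -/
theorem accessible_maps_positive_volume
    {G : Type*} [Group G] [Fintype G] [DecidableEq G]
    (hg : 2 ≤ Fintype.card G)
    (R : G → Matrix G G ℝ)
    (hR : ∀ g a b : G, R g a b = if a = g * b then 1 else 0)
    (A : Set (G → ℝ))
    (hA : A = {w : G → ℝ | ∃ t : ℝ, 0 ≤ t ∧ ∃ q : G → ℝ,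
      (∀ h : G, 0 ≤ q h) ∧ (∑ h : G, q h = 1) ∧
      NormedSpace.exp (t • ((∑ h : G, q h • R h) - 1)) = ∑ μ : G, w μ • R μ}) :
    ∃ w₀ ∈ A, ∃ ε : ℝ, 0 < ε ∧
      ∀ w : EuclideanSpace ℝ G, (∑ μ : G, w μ = 1) →
        ‖w - (WithLp.toLp 2 w₀ : EuclideanSpace ℝ G)‖ < ε → (show G → ℝ from w) ∈ A :=
  accessible_maps_positive_volume_general R hR A hA
end

section
/- Let G be a finite abelian group of order g ≥ 2 with left regular representation R : G → Matrix G G ℝ, and let 𝒜 ⊆ (G → ℝ) be the set of all w such that there exist t ≥ 0 and q : G → ℝ with q ≥ 0 and ∑_h q(h) = 1 satisfying Matrix.exp(t • (∑_{h∈G} q(h) • R(h) − 1)) = ∑_{μ∈G} w(μ) • R(μ). Suppose T > 0 and q : G → ℝ satisfies ∑_h q(h) = 1, q(1) = 0 and q(h) > 0 for every h ≠ 1, and let w(T) : G → ℝ be the (unique) weight vector with Matrix.exp(T • (∑_h q(h) • R(h) − 1)) = ∑_μ w(T)(μ) • R(μ). Then w(T) is an interior point of 𝒜 relative to the hyperplane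 of normalized weights: there exists ε > 0 such that every w' : G → ℝ with ∑_μ w'(μ) = 1 and ‖w' − w(T)‖ < ε belongs to 𝒜. Hence the boundary of the set of accessible maps comes only from generators ∑ q(h)ρ(h) − 1 with some weight q(h) = 0, i.e. from channels on the boundary of the polytope. -/
/-!
Write a generator through unnormalised weights `m`, so that `exp (∑ h, m h • R h)` has weight
vector `expWeights m`. On the commutative algebra spanned by the `R h`, the derivative of `exp` at
any point is multiplication by a unit, so by the inverse function theorem `expWeights` maps the
neighbourhood of `T • q` where the weights stay positive off the identity onto a neighbourhood of
`expWeights (T • q) = exp T • w`. If `expWeights m' = exp T • w'` with `∑ w' = 1`, comparing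
column sums gives `∑ m' = T`, so `w'` is the weight vector of `exp (∑ h, m' h • (R h - 1))`; and
a nonnegative combination of the `R h - 1` is `t • (∑ h, q' h • R h - 1)` for some probability
vector `q'`.
-/

open NormedSpace Set

namespace Matrix

variable {n : Type*} [Fintype n] [DecidableEq n]

theorem exp_smul_one (s : ℝ) : exp (s • (1 : Matrix n n ℝ)) = Real.exp s • 1 := by
  rw [smul_one_eq_diagonal, exp_diagonal, Pi.exp_def, ← Real.exp_eq_exp_ℝ, ← smul_one_eq_diagonal]

theorem exp_smul_one_add (s : ℝ) (X : Matrix n n ℝ) :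
    exp (s • 1 + X) = Real.exp s • exp X := by
  rw [exp_add_of_commute _ _ ((Commute.one_left X).smul_left s), exp_smul_one, smul_one_mul]

theorem sum_exp_apply_of_sum_apply {X : Matrix n n ℝ} {s : ℝ} (hX : ∀ b, ∑ a, X a b = s)
    (b : n) : ∑ a, exp X a b = Real.exp s := by
  let J : Matrix n n ℝ := of fun _ _ => 1
  have hJ : SemiconjBy J X (s • 1) := by
    ext i j
    simp [J, mul_apply, one_apply, hX]
  have hJexp : SemiconjBy J (exp X) (exp (s • 1)) := by
    open scoped Matrix.Norms.Operator in exact hJ.exp_right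
  simpa [J, exp_smul_one, mul_apply, one_apply] using congrFun₂ hJexp b b

end Matrix

theorem hasStrictFDerivAt_exp_comp_of_commute {𝕂 E 𝔸 : Type*} [RCLike 𝕂] [NormedAddCommGroup E]
    [NormedSpace 𝕂 E] [NormedRing 𝔸] [NormedAlgebra 𝕂 𝔸] [CompleteSpace 𝔸] (L : E →L[𝕂] 𝔸)
    (hL : ∀ x y, Commute (L x) (L y)) (x : E) :
    HasStrictFDerivAt (fun y => exp (L y)) (ContinuousLinearMap.mul 𝕂 𝔸 (exp (L x)) ∘L L) x := by
  let _ : NormedAlgebra ℚ 𝔸 := NormedAlgebra.restrictScalars ℚ 𝕂 𝔸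
  have hsplit : (fun y => exp (L y)) = fun y => exp (L x) * exp (L (y - x)) := by
    funext y
    rw [← exp_add_of_commute (hL x (y - x)), ← map_add, add_sub_cancel]
  have hshift : HasStrictFDerivAt (fun y => L (y - x)) L x := by
    simpa using L.hasStrictFDerivAt.sub_const (L x)
  have hexp : HasStrictFDerivAt exp (1 : 𝔸 →L[𝕂] 𝔸) (L (x - x)) := by
    simpa using hasStrictFDerivAt_exp_zero (𝕂 := 𝕂) (𝔸 := 𝔸)
  rw [hsplit]
  convert (hexp.comp x hshift).const_mul (exp (L x)) using 1
  ext y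
  simp

theorem exists_smul_sum_smul_sub_eq_sum_smul_sub {ι M : Type*} [Fintype ι] [DecidableEq ι]
    [AddCommGroup M] [Module ℝ M] (v : ι → M) (i₀ : ι) (c : ι → ℝ) (hc : ∀ i ≠ i₀, 0 ≤ c i) :
    ∃ t : ℝ, 0 ≤ t ∧ ∃ q : ι → ℝ, (∀ i, 0 ≤ q i) ∧ ∑ i, q i = 1 ∧
      t • (∑ i, q i • v i - v i₀) = ∑ i, c i • (v i - v i₀) := by
  set c' := Function.update c i₀ 1
  have hc' : ∀ i, 0 ≤ c' i := fun i => by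
    by_cases hi : i = i₀
    · simp [c', hi]
    · simpa [c', hi] using hc i hi
  set t := ∑ i, c' i
  have ht : 0 < t := lt_of_lt_of_le (by simp [c'])
    (Finset.single_le_sum (fun i _ => hc' i) (Finset.mem_univ i₀))
  refine ⟨t, ht.le, fun i => c' i / t, fun i => div_nonneg (hc' i) ht.le, ?_, ?_⟩
  · rw [← Finset.sum_div, div_self ht.ne']
  calc t • (∑ i, (c' i / t) • v i - v i₀) = ∑ i, c' i • (v i - v i₀) := by
        simp only [smul_sub, Finset.smul_sum, smul_smul, mul_div_cancel₀ _ ht.ne',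
          Finset.sum_sub_distrib, t, Finset.sum_smul]
    _ = ∑ i, c i • (v i - v i₀) := Finset.sum_congr rfl fun i _ => by
        by_cases hi : i = i₀
        · simp [hi]
        · simp [c', hi]

/-- A matrix `∑ μ, w μ • leftRegular 𝕜 G μ` has `w` as its column at `1`. -/
def regularCoeff (𝕜 G : Type*) [Semiring 𝕜] [One G] : Matrix G G 𝕜 →ₗ[𝕜] G → 𝕜 where
  toFun X μ := X μ 1
  map_add' _ _ := rfl
  map_smul' _ _ := rfl

@[simp]
theorem regularCoeff_apply {𝕜 G : Type*} [Semiring 𝕜] [One G] (X : Matrix G G 𝕜) (μ : G) :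
    regularCoeff 𝕜 G X μ = X μ 1 :=
  rfl

section LeftRegular

variable (𝕜 G : Type*) [Group G] [Fintype G] [DecidableEq G]

def leftRegular [Semiring 𝕜] : G →* Matrix G G 𝕜 where
  toFun g := Matrix.of fun a b => if a = g * b then 1 else 0
  map_one' := by ext a b; simp [Matrix.one_apply]
  map_mul' g h := by ext a b; simp [Matrix.mul_apply, mul_assoc]

variable {𝕜 G}

@[simp]
theorem leftRegular_apply [Semiring 𝕜] (g a b : G) :
    leftRegular 𝕜 G g a b = if a = g * b then 1 else 0 :=
  rfl

@[simp]
theorem regularCoeff_linearCombination [Semiring 𝕜] (c : G → 𝕜) :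
    regularCoeff 𝕜 G (Fintype.linearCombination 𝕜 (leftRegular 𝕜 G) c) = c := by
  ext μ
  simp [Fintype.linearCombination_apply, Matrix.sum_apply]

theorem mem_adjoin_range_leftRegular_iff [CommSemiring 𝕜] {X : Matrix G G 𝕜} :
    X ∈ Algebra.adjoin 𝕜 (range (leftRegular 𝕜 G)) ↔
      X ∈ LinearMap.range (Fintype.linearCombination 𝕜 (leftRegular 𝕜 G)) := by
  rw [← Subalgebra.mem_toSubmodule, Algebra.adjoin_eq_span_of_subset,
    Fintype.range_linearCombination]
  rw [MonoidHom.mclosure_range, MonoidHom.coe_mrange]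
  exact Submodule.subset_span

theorem linearCombination_leftRegular_mem_adjoin [CommSemiring 𝕜] (c : G → 𝕜) :
    Fintype.linearCombination 𝕜 (leftRegular 𝕜 G) c ∈
      Algebra.adjoin 𝕜 (range (leftRegular 𝕜 G)) :=
  mem_adjoin_range_leftRegular_iff.mpr (LinearMap.mem_range_self _ c)

theorem linearCombination_regularCoeff_of_mem_adjoin [CommSemiring 𝕜] {X : Matrix G G 𝕜}
    (hX : X ∈ Algebra.adjoin 𝕜 (range (leftRegular 𝕜 G))) :
    Fintype.linearCombination 𝕜 (leftRegular 𝕜 G) (regularCoeff 𝕜 G X) = X := by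
  obtain ⟨c, rfl⟩ := mem_adjoin_range_leftRegular_iff.mp hX
  rw [regularCoeff_linearCombination]

theorem injective_regularCoeff_mul_linearCombination [CommSemiring 𝕜] {E : Matrix G G 𝕜}
    (hE : E ∈ Algebra.adjoin 𝕜 (range (leftRegular 𝕜 G))) (hunit : IsUnit E) :
    Function.Injective fun c =>
      regularCoeff 𝕜 G (E * Fintype.linearCombination 𝕜 (leftRegular 𝕜 G) c) := by
  intro c d hcd
  have hmem (c : G → 𝕜) := Subalgebra.mul_mem _ hE (linearCombination_leftRegular_mem_adjoin c)
  have hEcd : E * Fintype.linearCombination 𝕜 (leftRegular 𝕜 G) c =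
      E * Fintype.linearCombination 𝕜 (leftRegular 𝕜 G) d := by
    rw [← linearCombination_regularCoeff_of_mem_adjoin (hmem c),
      ← linearCombination_regularCoeff_of_mem_adjoin (hmem d)]
    exact congrArg _ hcd
  simpa using congrArg (regularCoeff 𝕜 G) (hunit.mul_left_cancel hEcd)

theorem commute_linearCombination_leftRegular {G : Type*} [CommGroup G] [Fintype G]
    [DecidableEq G] [CommSemiring 𝕜] (c d : G → 𝕜) :
    Commute (Fintype.linearCombination 𝕜 (leftRegular 𝕜 G) c)
      (Fintype.linearCombination 𝕜 (leftRegular 𝕜 G) d) :=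
  Commute.sum_left _ _ _ fun g _ => Commute.sum_right _ _ _ fun h _ =>
    (((Commute.all g h).map (leftRegular 𝕜 G)).smul_left _).smul_right _

end LeftRegular

section ExpWeights

variable {G : Type*} [Fintype G] [DecidableEq G]

noncomputable def expWeights [Group G] (m : G → ℝ) : G → ℝ :=
  regularCoeff ℝ G (exp (Fintype.linearCombination ℝ (leftRegular ℝ G) m))

theorem exp_linearCombination_mem_adjoin [Group G] (c : G → ℝ) :
    exp (Fintype.linearCombination ℝ (leftRegular ℝ G) c) ∈
      Algebra.adjoin ℝ (range (leftRegular ℝ G)) :=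
  let S := Algebra.adjoin ℝ (range (leftRegular ℝ G))
  exp_mem (s := S) (Subalgebra.toSubmodule S).closed_of_finiteDimensional
    (linearCombination_leftRegular_mem_adjoin c)

theorem linearCombination_expWeights [Group G] (m : G → ℝ) :
    Fintype.linearCombination ℝ (leftRegular ℝ G) (expWeights m) =
      exp (Fintype.linearCombination ℝ (leftRegular ℝ G) m) :=
  linearCombination_regularCoeff_of_mem_adjoin (exp_linearCombination_mem_adjoin m)

open scoped Matrix.Norms.Operator in
theorem map_expWeights_nhds [CommGroup G] (m₀ : G → ℝ) :
    Filter.map expWeights (nhds m₀) = nhds (expWeights m₀) := by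
  let L := LinearMap.toContinuousLinearMap (Fintype.linearCombination ℝ (leftRegular ℝ G))
  let D := LinearMap.toContinuousLinearMap (regularCoeff ℝ G) ∘L
    ContinuousLinearMap.mul ℝ _ (exp (L m₀)) ∘L L
  have hD : HasStrictFDerivAt expWeights D m₀ :=
    (LinearMap.toContinuousLinearMap _).hasStrictFDerivAt.comp m₀
      (hasStrictFDerivAt_exp_comp_of_commute L commute_linearCombination_leftRegular m₀)
  have hinj : Function.Injective D := injective_regularCoeff_mul_linearCombination
    (exp_linearCombination_mem_adjoin m₀) (Matrix.isUnit_exp _)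
  exact hD.map_nhds_eq_of_surj
    (LinearMap.range_eq_top.mpr (LinearMap.injective_iff_surjective.mp hinj))

variable [Group G]

theorem sum_linearCombination_leftRegular_apply (c : G → ℝ) (b : G) :
    ∑ a, Fintype.linearCombination ℝ (leftRegular ℝ G) c a b = ∑ h, c h := by
  simp only [Fintype.linearCombination_apply, Matrix.sum_apply, Matrix.smul_apply,
    leftRegular_apply, smul_eq_mul, mul_ite, mul_one, mul_zero]
  rw [Finset.sum_comm]
  simp

theorem sum_expWeights (m : G → ℝ) : ∑ μ, expWeights m μ = Real.exp (∑ h, m h) :=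
  Matrix.sum_exp_apply_of_sum_apply (sum_linearCombination_leftRegular_apply m) 1

theorem expWeights_smul_of_exp_eq {T : ℝ} {q w : G → ℝ}
    (hw : exp (T • ((∑ h, q h • leftRegular ℝ G h) - 1)) = ∑ μ, w μ • leftRegular ℝ G μ) :
    expWeights (T • q) = Real.exp T • w := by
  have hgen : Fintype.linearCombination ℝ (leftRegular ℝ G) (T • q) =
      T • 1 + T • ((∑ h, q h • leftRegular ℝ G h) - 1) := by
    rw [smul_sub, add_sub_cancel, map_smul, Fintype.linearCombination_apply]
  rw [expWeights, hgen, Matrix.exp_smul_one_add, hw, ← Fintype.linearCombination_apply,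
    ← map_smul, regularCoeff_linearCombination]

theorem exists_generator_of_expWeights_eq {m w : G → ℝ} {T : ℝ} (hm : ∀ h ≠ 1, 0 ≤ m h)
    (hmw : expWeights m = Real.exp T • w) (hw : ∑ μ, w μ = 1) :
    ∃ t : ℝ, 0 ≤ t ∧ ∃ q : G → ℝ, (∀ h, 0 ≤ q h) ∧ ∑ h, q h = 1 ∧
      exp (t • ((∑ h, q h • leftRegular ℝ G h) - 1)) = ∑ μ, w μ • leftRegular ℝ G μ := by
  have hsum : ∑ h, m h = T := Real.exp_injective <| by
    rw [← sum_expWeights, hmw]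
    simp [← Finset.mul_sum, hw]
  obtain ⟨t, ht, q, hq, hqsum, hgen⟩ :=
    exists_smul_sum_smul_sub_eq_sum_smul_sub (leftRegular ℝ G) 1 m hm
  refine ⟨t, ht, q, hq, hqsum, ?_⟩
  have hgen' : ∑ h, m h • (leftRegular ℝ G h - 1) =
      (-T) • 1 + Fintype.linearCombination ℝ (leftRegular ℝ G) m := by
    simp only [smul_sub, Finset.sum_sub_distrib, ← Finset.sum_smul, hsum,
      Fintype.linearCombination_apply, neg_smul]
    abel
  rw [map_one] at hgen
  rw [hgen, hgen', Matrix.exp_smul_one_add, ← linearCombination_expWeights, hmw, map_smul,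
    smul_smul, ← Real.exp_add, neg_add_cancel, Real.exp_zero, one_smul,
    Fintype.linearCombination_apply]

end ExpWeights

theorem interior_accessible_of_positive_weights_general
    {G : Type*} [CommGroup G] [Fintype G] [DecidableEq G]
    (R : G → Matrix G G ℝ)
    (hR : ∀ g a b : G, R g a b = if a = g * b then 1 else 0)
    (A : Set (G → ℝ))
    (hA : A = {w : G → ℝ | ∃ t : ℝ, 0 ≤ t ∧ ∃ q : G → ℝ,
      (∀ h : G, 0 ≤ q h) ∧ (∑ h : G, q h = 1) ∧
      NormedSpace.exp (t • ((∑ h : G, q h • R h) - 1)) = ∑ μ : G, w μ • R μ})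
    (T : ℝ) (hT : 0 < T)
    (q : G → ℝ)
    (hqpos : ∀ h : G, h ≠ 1 → 0 < q h)
    (w : G → ℝ)
    (hw : NormedSpace.exp (T • ((∑ h : G, q h • R h) - 1)) = ∑ μ : G, w μ • R μ) :
    ∃ ε : ℝ, 0 < ε ∧
      ∀ w' : EuclideanSpace ℝ G, (∑ μ : G, w' μ = 1) →
        ‖w' - (show EuclideanSpace ℝ G from WithLp.toLp 2 w)‖ < ε → (show G → ℝ from w') ∈ A := by
  obtain rfl : R = leftRegular ℝ G := funext fun g => Matrix.ext (hR g)
  subst hA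
  have hpos : ∀ᶠ m in nhds (T • q), ∀ h ≠ 1, 0 < m h := Filter.eventually_all.2 fun h => by
    by_cases hh : h = 1
    · exact .of_forall fun _ h1 => absurd hh h1
    · exact (((continuous_apply h).tendsto _).eventually
        (lt_mem_nhds (mul_pos hT (hqpos h hh)))).mono fun _ hm _ => hm
  have himage : expWeights '' {m | ∀ h ≠ 1, 0 < m h} ∈ nhds (Real.exp T • w) := by
    rw [← expWeights_smul_of_exp_eq hw, ← map_expWeights_nhds]
    exact Filter.image_mem_map hpos
  have hcont : Continuous fun w' : EuclideanSpace ℝ G => Real.exp T • w'.ofLp := by fun_prop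
  obtain ⟨ε, hε, hball⟩ :=
    Metric.mem_nhds_iff.mp (hcont.continuousAt (x := WithLp.toLp 2 w) himage)
  refine ⟨ε, hε, fun w' hw'sum hw'dist => ?_⟩
  obtain ⟨m, hmpos, hm⟩ := hball (by simpa [dist_eq_norm] using hw'dist)
  exact exists_generator_of_expWeights_eq (fun h hh => (hmpos h hh).le) hm hw'sum

/-- For a finite abelian group, any accessible map obtained at a finite time `T > 0`
from a generator whose weights are strictly positive on all non-identity elements is an interior
point of the set of accessible maps (relative to the hyperplane of normalized weight vectors);
hence the boundary of the set of accessible maps comes only from generators with some vanishing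
weight, i.e. from channels on the boundary of the polytope. -/
theorem interior_accessible_of_positive_weights
    {G : Type*} [CommGroup G] [Fintype G] [DecidableEq G]
    (hg : 2 ≤ Fintype.card G)
    (R : G → Matrix G G ℝ)
    (hR : ∀ g a b : G, R g a b = if a = g * b then 1 else 0)
    (A : Set (G → ℝ))
    (hA : A = {w : G → ℝ | ∃ t : ℝ, 0 ≤ t ∧ ∃ q : G → ℝ,
      (∀ h : G, 0 ≤ q h) ∧ (∑ h : G, q h = 1) ∧
      NormedSpace.exp (t • ((∑ h : G, q h • R h) - 1)) = ∑ μ : G, w μ • R μ})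
    (T : ℝ) (hT : 0 < T)
    (q : G → ℝ) (hqsum : ∑ h : G, q h = 1) (hq1 : q 1 = 0)
    (hqpos : ∀ h : G, h ≠ 1 → 0 < q h)
    (w : G → ℝ)
    (hw : NormedSpace.exp (T • ((∑ h : G, q h • R h) - 1)) = ∑ μ : G, w μ • R μ) :
    ∃ ε : ℝ, 0 < ε ∧
      ∀ w' : EuclideanSpace ℝ G, (∑ μ : G, w' μ = 1) →
        ‖w' - (show EuclideanSpace ℝ G from WithLp.toLp 2 w)‖ < ε → (show G → ℝ from w') ∈ A :=
  interior_accessible_of_positive_weights_general R hR A hA T hT q hqpos w hw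
end

section
/- Let U be a 2×2 complex unitary matrix and let Φ = U ⊗ conj(U) be the Kronecker product of U with its entrywise complex conjugate (a 4×4 matrix). If Φ⁴ = 1 and Φ² ≠ 1 (so the channels 1, Φ, Φ², Φ³ form a cyclic group of order 4), then 1 + Φ² = Φ + Φ³. In particular, for qubit channels the elements of any cyclic group of order 4 are linearly dependent. -/
set_option maxHeartbeats 1000000

open Matrix
open scoped Kronecker

private lemma ch2 (M : Matrix (Fin 2) (Fin 2) ℂ) :
    M ^ 2 = M.trace • M - M.det • 1 := by
  ext i j
  fin_cases i <;> fin_cases j <;>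
    simp [pow_two, Matrix.mul_apply, Fin.sum_univ_two, Matrix.trace_fin_two,
      Matrix.det_fin_two, Matrix.one_apply] <;> ring

private lemma det_unit (U : Matrix (Fin 2) (Fin 2) ℂ)
    (hU : U ∈ Matrix.unitaryGroup (Fin 2) ℂ) : U.det * star U.det = 1 := by
  have h1 : U * star U = 1 := Matrix.mem_unitaryGroup_iff.mp hU
  have := congrArg Matrix.det h1
  simpa [Matrix.det_mul, Matrix.star_eq_conjTranspose, Matrix.det_conjTranspose] using this

private lemma trace_rel (U : Matrix (Fin 2) (Fin 2) ℂ)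
    (hU : U ∈ Matrix.unitaryGroup (Fin 2) ℂ) : U.trace = U.det * star U.trace := by
  have h1 : U * star U = 1 := Matrix.mem_unitaryGroup_iff.mp hU
  have hadj : U.adjugate = U.det • star U := by
    calc U.adjugate = U.adjugate * (U * star U) := by rw [h1, Matrix.mul_one]
      _ = (U.adjugate * U) * star U := by rw [Matrix.mul_assoc]
      _ = U.det • star U := by rw [Matrix.adjugate_mul, Matrix.smul_mul, Matrix.one_mul]
  have h2 := congrArg Matrix.trace hadj
  rw [Matrix.trace_smul, smul_eq_mul] at h2
  have h3 : (U.adjugate).trace = U.trace := by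
    rw [Matrix.adjugate_fin_two]
    simp [Matrix.trace_fin_two]
    ring
  have h4 : (star U).trace = star U.trace := by
    simp [Matrix.star_eq_conjTranspose, Matrix.trace_conjTranspose]
  rw [h3, h4] at h2
  exact h2


private lemma chi (U : Matrix (Fin 2) (Fin 2) ℂ)
    (hδ : U.det * star U.det = 1) (ht : U.trace = U.det * star U.trace) :
    (U ⊗ₖ U.map (starRingEnd ℂ)) ^ 4
      - (U.trace * star U.trace) • (U ⊗ₖ U.map (starRingEnd ℂ)) ^ 3
      + (2 * (U.trace * star U.trace) - 2) • (U ⊗ₖ U.map (starRingEnd ℂ)) ^ 2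
      - (U.trace * star U.trace) • (U ⊗ₖ U.map (starRingEnd ℂ)) + 1 = 0 := by
  set V : Matrix (Fin 2) (Fin 2) ℂ := U.map (starRingEnd ℂ) with hV
  set t : ℂ := U.trace with htdef
  set δ : ℂ := U.det with hδdef
  have htV : V.trace = star t := by
    simp [hV, Matrix.trace_fin_two, Matrix.map_apply, htdef, star_add]
  have hdV : V.det = star δ := by
    simp only [hV, Matrix.det_fin_two, Matrix.map_apply, hδdef, star_sub, StarMul.star_mul, starRingEnd_apply]
    ring
  -- rewrite star t in terms of star δ * t
  have hstart : star t = star δ * t := by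
    have h := congrArg (fun z => star δ * z) ht
    calc star t = (δ * star δ) * star t := by rw [hδ]; ring
      _ = star δ * (δ * star t) := by ring
      _ = star δ * t := by rw [← ht]
  -- Cayley–Hamilton facts
  have hU2 : U ^ 2 = t • U + (-δ) • 1 := by rw [ch2, ← htdef, ← hδdef]; module
  have hV2 : V ^ 2 = (star δ * t) • V + (-star δ) • 1 := by
    rw [ch2, htV, hdV, hstart]
    module
  have hU3 : U ^ 3 = (t ^ 2 - δ) • U + (-(t * δ)) • 1 := by
    rw [pow_succ, hU2, add_mul, smul_mul_assoc, smul_mul_assoc, one_mul, ← pow_two, hU2]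
    module
  have hV3 : V ^ 3 = ((star δ * t) ^ 2 - star δ) • V + (-((star δ * t) * star δ)) • 1 := by
    rw [pow_succ, hV2, add_mul, smul_mul_assoc, smul_mul_assoc, one_mul, ← pow_two, hV2]
    module
  have hU4 : U ^ 4 = (t ^ 3 - 2 * t * δ) • U + (-(t ^ 2 * δ - δ ^ 2)) • 1 := by
    rw [pow_succ, hU3, add_mul, smul_mul_assoc, smul_mul_assoc, one_mul, ← pow_two, hU2]
    module
  have hV4 : V ^ 4 = ((star δ * t) ^ 3 - 2 * (star δ * t) * star δ) • V
      + (-((star δ * t) ^ 2 * star δ - (star δ) ^ 2)) • 1 := by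
    rw [pow_succ, hV3, add_mul, smul_mul_assoc, smul_mul_assoc, one_mul, ← pow_two, hV2]
    module
  have hkron : ∀ n : ℕ, (U ⊗ₖ V) ^ n = (U ^ n) ⊗ₖ (V ^ n) := by
    intro n
    induction n with
    | zero => simp [Matrix.one_kronecker_one]
    | succ n ih => rw [pow_succ, pow_succ, pow_succ, Matrix.mul_kronecker_mul, ih]
  rw [hkron 4, hkron 3, hkron 2, hU2, hU3, hU4, hV2, hV3, hV4, hstart]
  simp only [Matrix.add_kronecker, Matrix.kronecker_add, Matrix.smul_kronecker,
    Matrix.kronecker_smul, Matrix.one_kronecker_one]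
  match_scalars <;>
    first
    | linear_combination (-(t ^ 4 * star δ ^ 2) + 3 * t ^ 2 * star δ) * hδ
    | linear_combination (t ^ 3 * star δ ^ 2 - 2 * t * star δ) * hδ
    | linear_combination (t ^ 3 * δ * star δ ^ 2 - 2 * t * δ * star δ) * hδ
    | linear_combination (-(t ^ 2 * δ * star δ ^ 2) + δ * star δ - 1) * hδ

/-- For a qubit unitary `U`, if `Φ = U ⊗ conj(U)` generates a cyclic group of
order 4 (`Φ⁴ = 1`, `Φ² ≠ 1`), then `1 + Φ² = Φ + Φ³`: the elements of the group are linearly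
dependent. -/
theorem qubit_cyclic_four_group_linearly_dependent
    (U : Matrix (Fin 2) (Fin 2) ℂ)
    (hU : U ∈ Matrix.unitaryGroup (Fin 2) ℂ)
    (Φ : Matrix (Fin 2 × Fin 2) (Fin 2 × Fin 2) ℂ)
    (hΦ : Φ = U ⊗ₖ U.map (starRingEnd ℂ))
    (h4 : Φ ^ 4 = 1) (h2 : Φ ^ 2 ≠ 1) :
    1 + Φ ^ 2 = Φ + Φ ^ 3 := by
  -- Step 0: Φ² is the channel of U²
  have hmap : (U ^ 2).map (starRingEnd ℂ) = (U.map (starRingEnd ℂ)) ^ 2 := by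
    simp [pow_two, Matrix.map_mul]
  have hΦ2 : Φ ^ 2 = (U ^ 2) ⊗ₖ (U ^ 2).map (starRingEnd ℂ) := by
    simp only [hΦ, hmap, pow_two, ← Matrix.mul_kronecker_mul]
    rw [Matrix.map_mul]
  -- Step 1: apply the characteristic identity to U²
  have hU2mem : U ^ 2 ∈ Matrix.unitaryGroup (Fin 2) ℂ := pow_mem hU 2
  have c2 := chi (U ^ 2) (det_unit _ hU2mem) (trace_rel _ hU2mem)
  rw [← hΦ2] at c2
  set T : ℂ := (U ^ 2).trace with hT
  have e4 : (Φ ^ 2) ^ 2 = 1 := by rw [← pow_mul]; exact h4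
  have e6 : (Φ ^ 2) ^ 3 = Φ ^ 2 := by
    rw [pow_succ, e4, one_mul]
  have e8 : (Φ ^ 2) ^ 4 = 1 := by
    rw [pow_succ, e6, ← pow_two, e4]
  rw [e4, e6, e8] at c2
  -- Step 2: deduce that tr(U²) = 0
  have h0 : (2 * (T * star T)) • ((1 : Matrix (Fin 2 × Fin 2) (Fin 2 × Fin 2) ℂ) - Φ ^ 2) = 0 := by
    linear_combination (norm := module) c2
  have hTT : T * star T = 0 := by
    rcases smul_eq_zero.mp h0 with h | h
    · linear_combination h / 2
    · exact absurd (sub_eq_zero.mp h).symm h2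
  have hT0 : T = 0 := by
    rcases mul_eq_zero.mp hTT with h | h
    · exact h
    · exact star_eq_zero.mp h
  -- Step 3: tr(U)² = 2 det U
  have htr2 : U.trace * U.trace - 2 * U.det = 0 := by
    have := congrArg Matrix.trace (ch2 U)
    rw [hT] at hT0
    rw [hT0, Matrix.trace_sub, Matrix.trace_smul, Matrix.trace_smul, Matrix.trace_one] at this
    simp only [smul_eq_mul] at this
    rw [Matrix.trace_fin_two] at this ⊢
    simp at this
    linear_combination -this
  -- Step 4: |tr U|² = 2
  have hδ := det_unit U hU
  have ht := trace_rel U hU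
  have hδ0 : U.det ≠ 0 := by
    intro h
    rw [h, zero_mul] at hδ
    exact zero_ne_one hδ
  have hs : U.trace * star U.trace = 2 := by
    have key : U.det * (U.trace * star U.trace) = U.det * 2 := by
      linear_combination htr2 - U.trace * ht
    exact mul_left_cancel₀ hδ0 key
  -- Step 5: conclude from the characteristic identity for U
  have c1 := chi U (det_unit U hU) (trace_rel U hU)
  rw [← hΦ, hs, h4] at c1
  have final : (2 : ℂ) • (1 + Φ ^ 2) = (2 : ℂ) • (Φ + Φ ^ 3) := by
    linear_combination (norm := module) c1
  exact smul_right_injective _ two_ne_zero final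
end

section
/- Let p and s be finite types, and over ℂ let D : Matrix p p, D' : Matrix s s, Q : Matrix p s, Q' : Matrix s p, and let k : p → ℂ, k' : s → ℂ be column vectors. Let Φ be the square matrix indexed by Unit ⊕ (p ⊕ s) with block form Φ = [[1, 0, 0], [k, D, Q], [k', Q', D']] (first row (1,0,0), first column (1;k;k')). For any matrix M indexed by Unit ⊕ (p ⊕ s), let T(M) denote its submatrix obtained by restricting both indices to Unit ⊕ p (so T(Φ) = [[1, 0], [k, D]]). Then for every integer r ≥ 1: (T(Φ))^n = T(Φ^n) holds for all n with 1 ≤ n ≤ r if and only if Q · (D')^{n−2} ·ᵥ k' = 0 and Q · (D')^{n−2} · Q' = 0 hold for all n with 2 ≤ n ≤ r. -/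
open Matrix Finset

section Aux

variable {p s : Type*} [Fintype p] [Fintype s] [DecidableEq p] [DecidableEq s]

private lemma sum_mulVec' {ι : Type*} (t : Finset ι) (M : ι → Matrix p s ℂ) (v : s → ℂ) :
    (∑ i ∈ t, M i) *ᵥ v = ∑ i ∈ t, (M i) *ᵥ v := by
  ext x
  simp only [Matrix.mulVec, dotProduct, Finset.sum_apply, Matrix.sum_apply, Finset.sum_mul]
  rw [Finset.sum_comm]

private lemma toB11_sum {ι : Type*} (t : Finset ι) (M : ι → Matrix (p ⊕ s) (p ⊕ s) ℂ) :
    (∑ i ∈ t, M i).toBlocks₁₁ = ∑ i ∈ t, (M i).toBlocks₁₁ := by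
  ext a b; simp [toBlocks₁₁, Matrix.sum_apply]

private lemma toB12_sum {ι : Type*} (t : Finset ι) (M : ι → Matrix (p ⊕ s) (p ⊕ s) ℂ) :
    (∑ i ∈ t, M i).toBlocks₁₂ = ∑ i ∈ t, (M i).toBlocks₁₂ := by
  ext a b; simp [toBlocks₁₂, Matrix.sum_apply]

private lemma mul_mulVec_zero (Mpp : Matrix p p ℂ) (Mps : Matrix p s ℂ) (v : s → ℂ)
    (h : Mps *ᵥ v = 0) : (Mpp * Mps) *ᵥ v = 0 := by
  rw [← Matrix.mulVec_mulVec, h, Matrix.mulVec_zero]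

variable (D : Matrix p p ℂ) (D' : Matrix s s ℂ) (Q : Matrix p s ℂ) (Q' : Matrix s p ℂ)

private lemma mulB_toBlocks₁₁ (M : Matrix (p ⊕ s) (p ⊕ s) ℂ) :
    (M * fromBlocks D Q Q' D').toBlocks₁₁ = M.toBlocks₁₁ * D + M.toBlocks₁₂ * Q' := by
  conv_lhs => rw [← fromBlocks_toBlocks M, fromBlocks_multiply, toBlocks_fromBlocks₁₁]

private lemma mulB_toBlocks₁₂ (M : Matrix (p ⊕ s) (p ⊕ s) ℂ) :
    (M * fromBlocks D Q Q' D').toBlocks₁₂ = M.toBlocks₁₁ * Q + M.toBlocks₁₂ * D' := by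
  conv_lhs => rw [← fromBlocks_toBlocks M, fromBlocks_multiply, toBlocks_fromBlocks₁₂]

/-- Key structure lemma: under vanishing conditions up to `r`, the blocks of `B^n`. -/
private lemma pow_formula (r : ℕ)
    (H : ∀ j, j + 2 ≤ r → Q * D' ^ j * Q' = 0) :
    ∀ n, n ≤ r → ((fromBlocks D Q Q' D') ^ n).toBlocks₁₁ = D ^ n ∧
      ((fromBlocks D Q Q' D') ^ n).toBlocks₁₂
        = ∑ i ∈ Finset.range n, D ^ i * Q * D' ^ (n - 1 - i) := by
  intro n
  induction n with
  | zero =>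
      intro _
      constructor
      · rw [pow_zero, pow_zero, ← fromBlocks_one, toBlocks_fromBlocks₁₁]
      · rw [pow_zero, ← fromBlocks_one, toBlocks_fromBlocks₁₂, Finset.range_zero,
          Finset.sum_empty]
  | succ n ih =>
      intro hn
      obtain ⟨h11, h12⟩ := ih (Nat.le_of_succ_le hn)
      constructor
      · rw [pow_succ, mulB_toBlocks₁₁, h11, h12, Matrix.sum_mul]
        have hz : ∀ i ∈ Finset.range n, D ^ i * Q * D' ^ (n - 1 - i) * Q' = 0 := by
          intro i hi
          rw [Finset.mem_range] at hi
          have hz0 : Q * D' ^ (n - 1 - i) * Q' = 0 := H _ (by omega)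
          rw [Matrix.mul_assoc, Matrix.mul_assoc, ← Matrix.mul_assoc Q, hz0, Matrix.mul_zero]
        rw [Finset.sum_congr rfl hz, Finset.sum_const_zero, add_zero, ← pow_succ]
      · rw [pow_succ, mulB_toBlocks₁₂, h11, h12, Matrix.sum_mul, Finset.sum_range_succ]
        rw [add_comm (D ^ n * Q)]
        congr 1
        · apply Finset.sum_congr rfl
          intro i hi
          rw [Finset.mem_range] at hi
          rw [Matrix.mul_assoc, ← pow_succ]
          have h' : n - 1 - i + 1 = n + 1 - 1 - i := by omega
          rw [h']
        · rw [Nat.succ_sub_one, Nat.sub_self, pow_zero, Matrix.mul_one]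

private lemma pow_tri' {β : Type*} [Fintype β] [DecidableEq β]
    (C : Matrix β Unit ℂ) (M : Matrix β β ℂ) (n : ℕ) :
    (fromBlocks (1 : Matrix Unit Unit ℂ) 0 C M) ^ n
      = fromBlocks 1 0 ((∑ i ∈ Finset.range n, M ^ i) * C) (M ^ n) := by
  induction n with
  | zero => simp [fromBlocks_one, Matrix.zero_mul]
  | succ n ih =>
      rw [pow_succ, ih, fromBlocks_multiply]
      simp [Finset.sum_range_succ, Matrix.add_mul, pow_succ]

end Aux

/-- For a channel in block form `Φ = [[1,0,0],[k,D,Q],[k',Q',D']]`, the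
super-decohered transition `T(Φ) = [[1,0],[k,D]]` (the corner submatrix on `Unit ⊕ p`) satisfies
`(T Φ)^n = T (Φ^n)` for all `1 ≤ n ≤ r` iff `Q·(D')^{n−2}·k' = 0` and `Q·(D')^{n−2}·Q' = 0` for
all `2 ≤ n ≤ r`. -/
theorem super_decoherence_power_compatibility
    {p s : Type*} [Fintype p] [Fintype s] [DecidableEq p] [DecidableEq s]
    (D : Matrix p p ℂ) (D' : Matrix s s ℂ) (Q : Matrix p s ℂ) (Q' : Matrix s p ℂ)
    (k : p → ℂ) (k' : s → ℂ)
    (Φ : Matrix (Unit ⊕ (p ⊕ s)) (Unit ⊕ (p ⊕ s)) ℂ)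
    (hΦ : Φ = Matrix.fromBlocks 1 0 (Matrix.of fun x (_ : Unit) => Sum.elim k k' x)
      (Matrix.fromBlocks D Q Q' D'))
    (e : Unit ⊕ p → Unit ⊕ (p ⊕ s))
    (he : e = Sum.map id Sum.inl)
    (r : ℕ) (hr : 1 ≤ r) :
    (∀ n : ℕ, 1 ≤ n → n ≤ r → (Φ.submatrix e e) ^ n = (Φ ^ n).submatrix e e) ↔
      (∀ n : ℕ, 2 ≤ n → n ≤ r →
        (Q * D' ^ (n - 2)) *ᵥ k' = 0 ∧ Q * D' ^ (n - 2) * Q' = 0) := by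
  subst hΦ he
  set B : Matrix (p ⊕ s) (p ⊕ s) ℂ := fromBlocks D Q Q' D' with hB
  set Kc : Matrix (p ⊕ s) Unit ℂ := Matrix.of fun x (_ : Unit) => Sum.elim k k' x with hKc
  -- the submatrix of a block matrix
  have hsub : ∀ (W : Matrix Unit Unit ℂ) (Xb : Matrix Unit (p ⊕ s) ℂ)
      (C : Matrix (p ⊕ s) Unit ℂ) (M : Matrix (p ⊕ s) (p ⊕ s) ℂ),
      (fromBlocks W Xb C M).submatrix (Sum.map id Sum.inl) (Sum.map id Sum.inl)
        = fromBlocks W (Xb.submatrix id Sum.inl) (C.submatrix Sum.inl id) M.toBlocks₁₁ := by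
    intro W Xb C M
    ext (i | i) (j | j) <;> rfl
  have hTΦ : (fromBlocks 1 0 Kc B).submatrix (Sum.map id Sum.inl) (Sum.map id Sum.inl)
      = fromBlocks (1 : Matrix Unit Unit ℂ) (0 : Matrix Unit p ℂ)
        (Matrix.of fun x (_ : Unit) => k x) D := by
    rw [hsub]
    exact fromBlocks_inj.mpr ⟨rfl, by simp, rfl, rfl⟩
  -- column extraction
  have hcolD : ∀ (M : Matrix p p ℂ),
      M * (Matrix.of fun x (_ : Unit) => k x) = Matrix.of fun x (_ : Unit) => (M *ᵥ k) x := by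
    intro M; ext x j; simp [Matrix.mul_apply, Matrix.mulVec, dotProduct]
  have hcolB : ∀ (M : Matrix (p ⊕ s) (p ⊕ s) ℂ),
      (M * Kc).submatrix Sum.inl id
        = Matrix.of fun x (_ : Unit) => (M.toBlocks₁₁ *ᵥ k + M.toBlocks₁₂ *ᵥ k') x := by
    intro M
    ext x j
    simp only [submatrix_apply, Matrix.mul_apply, hKc, Matrix.of_apply, id_eq,
      Pi.add_apply, Matrix.mulVec, dotProduct, Fintype.sum_sum_type]
    rfl
  -- per-n equivalence
  have key : ∀ n : ℕ,
      (((fromBlocks (1 : Matrix Unit Unit ℂ) (0 : Matrix Unit (p ⊕ s) ℂ) Kc B).submatrix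
            (Sum.map (@id Unit) (@Sum.inl p s)) (Sum.map (@id Unit) (@Sum.inl p s))) ^ n
        = ((fromBlocks (1 : Matrix Unit Unit ℂ) (0 : Matrix Unit (p ⊕ s) ℂ) Kc B) ^ n).submatrix
            (Sum.map (@id Unit) (@Sum.inl p s)) (Sum.map (@id Unit) (@Sum.inl p s)))
      ↔ ((∑ i ∈ Finset.range n, D ^ i) *ᵥ k
            = (∑ i ∈ Finset.range n, (B ^ i).toBlocks₁₁) *ᵥ k
              + (∑ i ∈ Finset.range n, (B ^ i).toBlocks₁₂) *ᵥ k'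
          ∧ D ^ n = (B ^ n).toBlocks₁₁) := by
    intro n
    rw [hTΦ, pow_tri' (Matrix.of fun x (_ : Unit) => k x) D n, pow_tri' Kc B n, hsub,
      hcolD, hcolB, toB11_sum, toB12_sum]
    rw [fromBlocks_inj]
    constructor
    · rintro ⟨-, -, hc, hd⟩
      refine ⟨?_, hd⟩
      funext x
      exact congrFun (congrFun hc x) ()
    · rintro ⟨hc, hd⟩
      refine ⟨rfl, by simp, ?_, hd⟩
      ext x j
      exact congrFun hc x
  constructor
  · -- backward
    intro H n
    induction n using Nat.strong_induction_on with
    | _ n IH =>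
      intro hn2 hnr
      obtain ⟨m, rfl⟩ : ∃ m, n = m + 2 := ⟨n - 2, by omega⟩
      simp only [Nat.add_sub_cancel]
      -- conditions up to m+1 hold by IH
      have H' : ∀ j, j + 2 ≤ m + 1 → Q * D' ^ j * Q' = 0 := by
        intro j hj
        have := (IH (j + 2) (by omega) (by omega) (by omega)).2
        simpa [Nat.add_sub_cancel] using this
      have hAX := pow_formula D D' Q Q' (m + 1) H'
      have hA : ∀ t, t ≤ m + 1 → (B ^ t).toBlocks₁₁ = D ^ t := fun t ht => (hAX t ht).1
      have hX : (B ^ (m + 1)).toBlocks₁₂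
          = ∑ i ∈ Finset.range (m + 1), D ^ i * Q * D' ^ (m - i) := by
        rw [(hAX (m + 1) le_rfl).2]
        exact Finset.sum_congr rfl fun i hi => by rw [Nat.succ_sub_one]
      have e1 := (key (m + 2)).mp (H (m + 2) (by omega) hnr)
      have e2 := (key (m + 1)).mp (H (m + 1) (by omega) (by omega))
      have hAn : (B ^ (m + 2)).toBlocks₁₁ = D ^ (m + 2) := e1.2.symm
      -- X_{m+1} * Q' = 0
      have hXQ' : (B ^ (m + 1)).toBlocks₁₂ * Q' = 0 := by
        have hstep : (B ^ (m + 2)).toBlocks₁₁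
            = (B ^ (m + 1)).toBlocks₁₁ * D + (B ^ (m + 1)).toBlocks₁₂ * Q' := by
          rw [show (m + 2) = (m + 1) + 1 from rfl, pow_succ, hB, mulB_toBlocks₁₁]
        have hp : D ^ (m + 1) * D = D ^ (m + 2) := (pow_succ D (m + 1)).symm
        rw [hAn, hA (m + 1) le_rfl, hp] at hstep
        have := hstep.symm
        rwa [add_eq_left] at this
      -- X_{m+1} *ᵥ k' = 0
      have hXk' : (B ^ (m + 1)).toBlocks₁₂ *ᵥ k' = 0 := by
        have s1 : (∑ i ∈ Finset.range (m + 2), D ^ i)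
            = (∑ i ∈ Finset.range (m + 1), D ^ i) + D ^ (m + 1) :=
          Finset.sum_range_succ _ (m + 1)
        have s2 : (∑ i ∈ Finset.range (m + 2), (B ^ i).toBlocks₁₁)
            = (∑ i ∈ Finset.range (m + 1), (B ^ i).toBlocks₁₁) + (B ^ (m + 1)).toBlocks₁₁ :=
          Finset.sum_range_succ _ (m + 1)
        have s3 : (∑ i ∈ Finset.range (m + 2), (B ^ i).toBlocks₁₂)
            = (∑ i ∈ Finset.range (m + 1), (B ^ i).toBlocks₁₂) + (B ^ (m + 1)).toBlocks₁₂ :=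
          Finset.sum_range_succ _ (m + 1)
        have e1' := e1.1
        rw [s1, s2, s3, Matrix.add_mulVec, Matrix.add_mulVec, Matrix.add_mulVec,
          hA (m + 1) le_rfl, e2.1] at e1'
        -- e1' : a + b + t = (a + t) + (b + X)  with a,b,t named below
        have : (B ^ (m + 1)).toBlocks₁₂ *ᵥ k' =
            (((∑ i ∈ Finset.range (m + 1), (B ^ i).toBlocks₁₁) *ᵥ k
              + (∑ i ∈ Finset.range (m + 1), (B ^ i).toBlocks₁₂) *ᵥ k') + D ^ (m + 1) *ᵥ k)
            - (((∑ i ∈ Finset.range (m + 1), (B ^ i).toBlocks₁₁) *ᵥ k + D ^ (m + 1) *ᵥ k)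
              + (∑ i ∈ Finset.range (m + 1), (B ^ i).toBlocks₁₂) *ᵥ k') := by
          rw [e1']
          abel
        rw [this]
        abel
      -- extract the i = 0 terms
      constructor
      · rw [hX, sum_mulVec'] at hXk'
        have hz : ∀ i ∈ Finset.range (m + 1), i ≠ 0 → (D ^ i * Q * D' ^ (m - i)) *ᵥ k' = 0 := by
          intro i hi hi0
          rw [Finset.mem_range] at hi
          have h1 := (IH (m + 2 - i) (by omega) (by omega) (by omega)).1
          rw [show m + 2 - i - 2 = m - i from by omega] at h1
          rw [Matrix.mul_assoc]
          exact mul_mulVec_zero _ _ _ h1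
        rw [Finset.sum_eq_single_of_mem 0 (Finset.mem_range.mpr (by omega)) hz] at hXk'
        simpa using hXk'
      · rw [hX, Matrix.sum_mul] at hXQ'
        have hz : ∀ i ∈ Finset.range (m + 1), i ≠ 0 → D ^ i * Q * D' ^ (m - i) * Q' = 0 := by
          intro i hi hi0
          rw [Finset.mem_range] at hi
          have h1 := (IH (m + 2 - i) (by omega) (by omega) (by omega)).2
          rw [show m + 2 - i - 2 = m - i from by omega] at h1
          rw [Matrix.mul_assoc, Matrix.mul_assoc, ← Matrix.mul_assoc Q, h1, Matrix.mul_zero]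
        rw [Finset.sum_eq_single_of_mem 0 (Finset.mem_range.mpr (by omega)) hz] at hXQ'
        simpa using hXQ'
  · -- forward: vanishing conditions ⇒ power compatibility
    intro H n hn1 hnr
    have H' : ∀ j, j + 2 ≤ r → Q * D' ^ j * Q' = 0 := fun j hj => (H (j + 2) (by omega) hj).2
    have Hv : ∀ j, j + 2 ≤ r → (Q * D' ^ j) *ᵥ k' = 0 := by
      intro j hj
      have := (H (j + 2) (by omega) hj).1
      simpa using this
    rw [key]
    have hAX : ∀ m, m ≤ r → (B ^ m).toBlocks₁₁ = D ^ m ∧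
        (B ^ m).toBlocks₁₂ = ∑ i ∈ Finset.range m, D ^ i * Q * D' ^ (m - 1 - i) :=
      pow_formula D D' Q Q' r H'
    refine ⟨?_, ((hAX n hnr).1).symm⟩
    have h1 : ∀ i ∈ Finset.range n, (B ^ i).toBlocks₁₁ = D ^ i := by
      intro i hi; rw [Finset.mem_range] at hi; exact (hAX i (by omega)).1
    have h2 : (∑ i ∈ Finset.range n, (B ^ i).toBlocks₁₂) *ᵥ k' = 0 := by
      rw [sum_mulVec']
      apply Finset.sum_eq_zero
      intro i hi
      rw [Finset.mem_range] at hi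
      rw [(hAX i (by omega)).2, sum_mulVec']
      apply Finset.sum_eq_zero
      intro t ht
      rw [Finset.mem_range] at ht
      rw [Matrix.mul_assoc]
      exact mul_mulVec_zero _ _ _ (Hv (i - 1 - t) (by omega))
    rw [h2, add_zero, Finset.sum_congr rfl h1]
end

section
/- Let g ≥ 3 be an integer and set θ = π/g. The subset S = {z ∈ ℂ : |z| ≤ 1 and |Complex.arg z| ≤ −Real.log |z| / Real.tan θ} of the complex plane has two-dimensional Lebesgue measure equal to (1 − exp(−2π·tan θ))/(2·tan θ). Consequently, dividing by the area g·sin θ·cos θ of the regular g-gon with vertices at the g-th roots of unity, the fraction of the polygon covered by this set equals (1 − e^{−2π·tan(π/g)})/(2·g·sin²(π/g)). -/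
/-!
With `t = tan θ > 0`, a nonzero `z = r e^{iφ}` lies in `S` exactly when `r ≤ e^{-t|φ|}`, so in
polar coordinates `S` is the region under the polar curve `r = e^{-t|φ|}`, `φ ∈ (-π, π)`. Its area
is `∫_{-π}^{π} e^{-2t|φ|}/2 dφ = (1 - e^{-2πt})/(2t)`, and the ratio to the polygon's area follows
from `tan θ = sin θ / cos θ`.
-/

open MeasureTheory Real Set

theorem pi_div_natCast_mem_Ioo {g : ℕ} (hg : 3 ≤ g) : π / g ∈ Ioo 0 (π / 2) := by
  have hg' : (3 : ℝ) ≤ g := by exact_mod_cast hg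
  exact ⟨by positivity, div_lt_div_of_pos_left pi_pos two_pos (by linarith)⟩

theorem le_exp_neg_mul_abs_iff {r t φ : ℝ} (hr : 0 < r) (ht : 0 < t) :
    r ≤ exp (-(t * |φ|)) ↔ r ≤ 1 ∧ |φ| ≤ -log r / t := by
  rw [le_div_iff₀ ht, ← log_le_iff_le_exp hr]
  constructor
  · intro h
    have : 0 ≤ t * |φ| := by positivity
    exact ⟨(log_nonpos_iff hr.le).1 (by linarith), by linarith⟩
  · rintro ⟨-, h⟩
    linarith

theorem lintegral_Ioc_zero_ofReal {a : ℝ} (ha : 0 ≤ a) :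
    ∫⁻ r in Ioc 0 a, ENNReal.ofReal r = ENNReal.ofReal (a ^ 2 / 2) := by
  rw [← ofReal_integral_eq_lintegral_ofReal, ← intervalIntegral.integral_of_le ha, integral_id]
  · simp
  · exact (continuous_id.integrableOn_Icc (a := 0) (b := a)).mono_set Ioc_subset_Icc_self
  · filter_upwards [ae_restrict_mem measurableSet_Ioc] with r hr using hr.1.le

theorem intervalIntegral.integral_neg_comp_abs {f : ℝ → ℝ} (hf : Continuous f) {a : ℝ}
    (ha : 0 ≤ a) : ∫ x in -a..a, f |x| = 2 * ∫ x in 0..a, f x := by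
  have hint (b c : ℝ) : IntervalIntegrable (fun x ↦ f |x|) volume b c :=
    (hf.comp continuous_abs).intervalIntegrable b c
  have hneg : ∫ x in -a..0, f |x| = ∫ x in 0..a, f |x| := by
    simpa using (integral_comp_neg (fun x ↦ f |x|) (a := 0) (b := a)).symm
  have hpos : ∫ x in 0..a, f |x| = ∫ x in 0..a, f x :=
    integral_congr fun x hx ↦ by
      rw [uIcc_of_le ha] at hx
      rw [abs_of_nonneg hx.1]
  rw [← integral_add_adjacent_intervals (hint _ 0) (hint 0 _), hneg, hpos, two_mul]

theorem integral_exp_neg_mul {c : ℝ} (hc : c ≠ 0) (a : ℝ) :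
    ∫ x in 0..a, exp (-(c * x)) = (1 - exp (-(c * a))) / c := by
  simp_rw [← neg_mul]
  rw [intervalIntegral.integral_comp_mul_left exp (neg_ne_zero.2 hc), integral_exp, mul_zero,
    exp_zero, neg_mul, smul_eq_mul]
  field_simp
  ring

theorem Complex.volume_setOf_norm_le_comp_arg {ρ : ℝ → ℝ} (hρ : Measurable ρ)
    (hρ_nonneg : ∀ φ, 0 ≤ ρ φ) :
    volume {z : ℂ | ‖z‖ ≤ ρ z.arg} = ∫⁻ φ in Ioo (-π) π, ENNReal.ofReal (ρ φ ^ 2 / 2) := by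
  set S := {z : ℂ | ‖z‖ ≤ ρ z.arg}
  have hS : MeasurableSet S := measurableSet_le measurable_norm (hρ.comp Complex.measurable_arg)
  have hF : Measurable fun p : ℝ × ℝ ↦ (Iic (ρ p.2)).indicator ENNReal.ofReal p.1 :=
    measurable_fst.ennreal_ofReal.indicator
      (measurableSet_le measurable_fst (hρ.comp measurable_snd))
  calc volume S = ∫⁻ z, S.indicator 1 z := (lintegral_indicator_one hS).symm
    _ = ∫⁻ p in polarCoord.target,
          ENNReal.ofReal p.1 • S.indicator 1 (Complex.polarCoord.symm p) :=
      (Complex.lintegral_comp_polarCoord_symm _).symm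
    _ = ∫⁻ p in Ioi 0 ×ˢ Ioo (-π) π, (Iic (ρ p.2)).indicator ENNReal.ofReal p.1 := by
      refine setLIntegral_congr_fun polarCoord.open_target.measurableSet fun p hp ↦ ?_
      have hpolar := Complex.polarCoord.right_inv hp
      rw [Complex.polarCoord_apply] at hpolar
      have hmem : Complex.polarCoord.symm p ∈ S ↔ p.1 ∈ Iic (ρ p.2) := by
        rw [← congrArg Prod.fst hpolar, ← congrArg Prod.snd hpolar]; rfl
      by_cases h : p.1 ∈ Iic (ρ p.2)
      · rw [indicator_of_mem h, indicator_of_mem (hmem.2 h), Pi.one_apply, smul_eq_mul, mul_one]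
      · rw [indicator_of_notMem h, indicator_of_notMem (mt hmem.1 h), smul_zero]
    _ = ∫⁻ φ in Ioo (-π) π, ∫⁻ r in Ioi 0, (Iic (ρ φ)).indicator ENNReal.ofReal r := by
      rw [Measure.volume_eq_prod, setLIntegral_prod_symm _ hF.aemeasurable]
    _ = ∫⁻ φ in Ioo (-π) π, ENNReal.ofReal (ρ φ ^ 2 / 2) := by
      refine setLIntegral_congr_fun measurableSet_Ioo fun φ _ ↦ ?_
      rw [lintegral_indicator measurableSet_Iic, Measure.restrict_restrict measurableSet_Iic,
        Iic_inter_Ioi, lintegral_Ioc_zero_ofReal (hρ_nonneg φ)]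

theorem Complex.volume_setOf_norm_le_exp_neg_mul_abs_arg {t : ℝ} (ht : 0 < t) :
    volume {z : ℂ | ‖z‖ ≤ Real.exp (-(t * |z.arg|))} =
      ENNReal.ofReal ((1 - Real.exp (-(2 * π * t))) / (2 * t)) := by
  have hρ : Measurable fun φ ↦ Real.exp (-(t * |φ|)) := by fun_prop
  have hsq (φ : ℝ) : Real.exp (-(t * |φ|)) ^ 2 / 2 = Real.exp (-(2 * t * |φ|)) / 2 := by
    rw [← Real.exp_nat_mul]; ring_nf
  have hint : IntegrableOn (fun φ ↦ Real.exp (-(2 * t * |φ|)) / 2) (Ioo (-π) π) :=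
    (Continuous.integrableOn_Icc (by fun_prop)).mono_set Ioo_subset_Icc_self
  rw [Complex.volume_setOf_norm_le_comp_arg hρ fun _ ↦ (Real.exp_pos _).le]
  simp_rw [hsq]
  rw [← ofReal_integral_eq_lintegral_ofReal hint (ae_of_all _ fun _ ↦ by positivity),
    ← integral_Ioc_eq_integral_Ioo, ← intervalIntegral.integral_of_le (by linarith [pi_pos]),
    intervalIntegral.integral_neg_comp_abs (f := fun x ↦ Real.exp (-(2 * t * x)) / 2)
      (by fun_prop) pi_pos.le,
    intervalIntegral.integral_div, integral_exp_neg_mul (by positivity)]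
  congr 1
  field_simp

theorem Complex.setOf_norm_le_one_and_abs_arg_le_eq_setOf_norm_le_exp {t : ℝ} (ht : 0 < t) :
    {z : ℂ | ‖z‖ ≤ 1 ∧ |z.arg| ≤ -Real.log ‖z‖ / t} =
      {z : ℂ | ‖z‖ ≤ Real.exp (-(t * |z.arg|))} := by
  ext z
  -- the origin lies in both sets, since `arg 0 = 0` and `log 0 = 0`
  rcases eq_or_ne z 0 with rfl | hz
  · simp
  · exact (le_exp_neg_mul_abs_iff (norm_pos_iff.2 hz) ht).symm

/-- For `g ≥ 3` and `θ = π/g`, the region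
`S = {z : |z| ≤ 1, |arg z| ≤ −log|z|/tan θ}` of the complex plane (the accessible maps of the
planar cyclic group of order `g`) has area `(1 − e^{−2π·tan θ})/(2·tan θ)`; dividing by the area
`g·sin θ·cos θ` of the regular `g`-gon with vertices at the `g`-th roots of unity, the covered
fraction is `(1 − e^{−2π·tan(π/g)})/(2·g·sin²(π/g))`. -/
theorem planar_cyclic_group_accessible_area
    (g : ℕ) (hg : 3 ≤ g) (θ : ℝ) (hθ : θ = Real.pi / g)
    (S : Set ℂ)
    (hS : S = {z : ℂ | ‖z‖ ≤ 1 ∧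
      |Complex.arg z| ≤ -Real.log ‖z‖ / Real.tan θ}) :
    volume S = ENNReal.ofReal ((1 - Real.exp (-(2 * Real.pi * Real.tan θ))) / (2 * Real.tan θ)) ∧
    volume S / ENNReal.ofReal ((g : ℝ) * Real.sin θ * Real.cos θ) =
      ENNReal.ofReal
        ((1 - Real.exp (-(2 * Real.pi * Real.tan θ))) / (2 * (g : ℝ) * Real.sin θ ^ 2)) := by
  obtain ⟨hθ_pos, hθ_lt⟩ : θ ∈ Ioo 0 (π / 2) := hθ ▸ pi_div_natCast_mem_Ioo hg
  have htan : 0 < tan θ := tan_pos_of_pos_of_lt_pi_div_two hθ_pos hθ_lt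
  have hsin : 0 < sin θ := sin_pos_of_pos_of_lt_pi hθ_pos (by linarith [pi_pos])
  have hcos : 0 < cos θ := cos_pos_of_mem_Ioo ⟨by linarith, hθ_lt⟩
  have hg_pos : (0 : ℝ) < g := by exact_mod_cast (by omega : 0 < g)
  have hvol : volume S = ENNReal.ofReal ((1 - exp (-(2 * π * tan θ))) / (2 * tan θ)) := by
    rw [hS, Complex.setOf_norm_le_one_and_abs_arg_le_eq_setOf_norm_le_exp htan,
      Complex.volume_setOf_norm_le_exp_neg_mul_abs_arg htan]
  refine ⟨hvol, ?_⟩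
  rw [hvol, ← ENNReal.ofReal_div_of_pos (by positivity), tan_eq_sin_div_cos]
  congr 1
  field_simp
end

section
/- Consider the subset S = {(exp(−(x+2y+z))·cos(x−z), exp(−(x+2y+z))·sin(x−z), exp(−2(x+z))) : x, y, z ∈ ℝ, x ≥ 0, y ≥ 0, z ≥ 0} of ℝ³ and the tetrahedron T = convexHull ℝ {(1,0,1), (0,1,−1), (−1,0,1), (0,−1,−1)} ⊆ ℝ³. Then the three-dimensional Lebesgue measure of S equals (1 − e^{−4π})/8, the Lebesgue measure of T equals 4/3, and hence volume(S) = (3/32)·(1 − e^{−4π}) · volume(T). -/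
/-!
In the coordinates `(c, w) ∈ ℝ × ℂ`, `c = v 2`, `w = v 0 + v 1 * I`, a point of `S` is
`(e^{-2s}, ρ e^{iθ})` with `s = x + z ≥ 0`, `|θ| = |x - z| ≤ s` and `0 < ρ ≤ e^{-s}`.
Hence the slice of `S` over `c ∈ (0, 1]` is the circular sector of radius `√c` and
half-angle `min (-log c / 2) π`, of area `min (-log c / 2) π * c`, and integrating over `c`
(splitting at `c = e^{-2π}`, below which the sector is a full disc) gives `(1 - e^{-4π}) / 8`.
The slice of `T` over `c ∈ [-1, 1]` is a rectangle of area `(1 + c)(1 - c)`, which integrates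
to `4 / 3`.
-/

open MeasureTheory Real Set

noncomputable section

theorem MeasureTheory.Measure.prod_setOf_fst_mem_snd_mem {α β : Type*}
    [MeasurableSpace α] [MeasurableSpace β] {μ : Measure α} {ν : Measure β} [SFinite ν]
    {I : Set α} {F : α → Set β}
    (hI : MeasurableSet I) (hF : MeasurableSet {q : α × β | q.2 ∈ F q.1}) :
    μ.prod ν {q | q.1 ∈ I ∧ q.2 ∈ F q.1} = ∫⁻ a in I, ν (F a) ∂μ := by
  rw [Measure.prod_apply (s := {q | q.1 ∈ I ∧ q.2 ∈ F q.1})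
    ((hI.preimage measurable_fst).inter hF), ← lintegral_indicator hI]
  refine lintegral_congr fun a => ?_
  by_cases ha : a ∈ I <;> simp [ha]

theorem lintegral_Ioc_ofReal_eq_intervalIntegral {f : ℝ → ℝ} {a b : ℝ} (hab : a ≤ b)
    (hf : Continuous f) (hf₀ : ∀ x ∈ Ioc a b, 0 ≤ f x) :
    ∫⁻ x in Ioc a b, ENNReal.ofReal (f x) = ENNReal.ofReal (∫ x in a..b, f x) := by
  rw [intervalIntegral.integral_of_le hab, ofReal_integral_eq_lintegral_ofReal hf.integrableOn_Ioc
    ((ae_restrict_iff' measurableSet_Ioc).mpr (ae_of_all _ hf₀))]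

namespace Complex

theorem volume_reProdIm (s t : Set ℝ) : volume (s ×ℂ t) = volume s * volume t := by
  rw [← Measure.prod_prod, ← Measure.volume_eq_prod,
    ← volume_preserving_equiv_real_prod.measure_preimage_equiv]
  rfl

theorem volume_setOf_abs_re_le_abs_im_le (a b : ℝ) :
    volume {w : ℂ | |w.re| ≤ a ∧ |w.im| ≤ b} =
      ENNReal.ofReal (2 * a) * ENNReal.ofReal (2 * b) := by
  have h : {w : ℂ | |w.re| ≤ a ∧ |w.im| ≤ b} = Icc (-a) a ×ℂ Icc (-b) b := by
    ext w; simp [reProdIm, abs_le]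
  rw [h, volume_reProdIm, Real.volume_Icc, Real.volume_Icc]
  ring_nf

theorem arg_polarCoord_symm {p : ℝ × ℝ} (hr : 0 < p.1) (hθ : p.2 ∈ Ioc (-π) π) :
    arg (Complex.polarCoord.symm p) = p.2 := by
  rw [Complex.polarCoord_symm_apply, ofReal_cos, ofReal_sin]
  exact arg_mul_cos_add_sin_mul_I hr hθ

theorem polarCoord_symm_norm_arg (w : ℂ) : Complex.polarCoord.symm (‖w‖, arg w) = w := by
  rw [Complex.polarCoord_symm_apply, ofReal_cos, ofReal_sin, norm_mul_cos_add_sin_mul_I]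

end Complex

def sector (R m : ℝ) : Set ℂ := {w | w ≠ 0 ∧ ‖w‖ ≤ R ∧ |Complex.arg w| ≤ m}

theorem measurableSet_sector (R m : ℝ) : MeasurableSet (sector R m) :=
  (measurableSet_singleton 0).compl.inter
    ((measurableSet_le continuous_norm.measurable measurable_const).inter
      (measurableSet_le Complex.measurable_arg.abs measurable_const))

theorem measurableSet_setOf_mem_sector {R m : ℝ → ℝ} (hR : Measurable R) (hm : Measurable m) :
    MeasurableSet {q : ℝ × ℂ | q.2 ∈ sector (R q.1) (m q.1)} :=
  ((measurableSet_singleton 0).compl.preimage measurable_snd).inter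
    ((measurableSet_le (by fun_prop) (hR.comp measurable_fst)).inter
      (measurableSet_le (Complex.measurable_arg.comp measurable_snd).abs (hm.comp measurable_fst)))

theorem polarCoord_symm_mem_sector_iff {R m : ℝ} {p : ℝ × ℝ} (hp : p ∈ polarCoord.target) :
    Complex.polarCoord.symm p ∈ sector R m ↔ p ∈ Ioc 0 R ×ˢ Icc (-m) m := by
  obtain ⟨hr, hθ⟩ : 0 < p.1 ∧ p.2 ∈ Ioo (-π) π := hp
  have hnorm : ‖Complex.polarCoord.symm p‖ = p.1 := by
    rw [Complex.norm_polarCoord_symm, abs_of_pos hr]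
  have hne : Complex.polarCoord.symm p ≠ 0 := norm_pos_iff.mp (hnorm ▸ hr)
  simp only [sector, mem_ofPred_eq, mem_prod, mem_Ioc, mem_Icc, hnorm, ← abs_le,
    Complex.arg_polarCoord_symm hr (Ioo_subset_Ioc_self hθ)]
  exact ⟨fun h => ⟨⟨hr, h.2.1⟩, h.2.2⟩, fun h => ⟨hne, h.1.2, h.2⟩⟩

theorem volume_Icc_inter_Ioo {a b : ℝ} (hab : a ≤ b) :
    volume (Icc (-a) a ∩ Ioo (-b) b) = ENNReal.ofReal (2 * a) := by
  refine le_antisymm ?_ ?_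
  · calc volume (Icc (-a) a ∩ Ioo (-b) b)
        ≤ volume (Icc (-a) a) := measure_mono inter_subset_left
      _ = ENNReal.ofReal (2 * a) := by rw [Real.volume_Icc]; ring_nf
  · calc ENNReal.ofReal (2 * a) = volume (Ioo (-a) a) := by rw [Real.volume_Ioo]; ring_nf
      _ ≤ volume (Icc (-a) a ∩ Ioo (-b) b) :=
        measure_mono (subset_inter Ioo_subset_Icc_self (Ioo_subset_Ioo (neg_le_neg hab) hab))

theorem volume_sector {R m : ℝ} (hR : 0 ≤ R) (hmπ : m ≤ π) :
    volume (sector R m) = ENNReal.ofReal (m * R ^ 2) := by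
  have hbox : MeasurableSet (Ioc 0 R ×ˢ Icc (-m) m) := measurableSet_Ioc.prod measurableSet_Icc
  calc volume (sector R m)
      = ∫⁻ p in polarCoord.target,
          ENNReal.ofReal p.1 • (sector R m).indicator 1 (Complex.polarCoord.symm p) := by
        rw [Complex.lintegral_comp_polarCoord_symm,
          lintegral_indicator_one (measurableSet_sector R m)]
    _ = ∫⁻ p in polarCoord.target,
          (Ioc 0 R ×ˢ Icc (-m) m).indicator (ENNReal.ofReal ·.1) p := by
        refine setLIntegral_congr_fun polarCoord.open_target.measurableSet fun p hp => ?_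
        by_cases h : p ∈ Ioc 0 R ×ˢ Icc (-m) m
        · rw [indicator_of_mem h, indicator_of_mem ((polarCoord_symm_mem_sector_iff hp).mpr h),
            Pi.one_apply, smul_eq_mul, mul_one]
        · rw [indicator_of_notMem h,
            indicator_of_notMem (mt (polarCoord_symm_mem_sector_iff hp).mp h), smul_zero]
    _ = ∫⁻ p in Ioc 0 R ×ˢ (Icc (-m) m ∩ Ioo (-π) π), ENNReal.ofReal p.1 := by
        rw [lintegral_indicator hbox, Measure.restrict_restrict hbox, polarCoord_target,
          prod_inter_prod, inter_eq_left.mpr Ioc_subset_Ioi_self]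
    _ = (∫⁻ r in Ioc 0 R, ENNReal.ofReal r) * volume (Icc (-m) m ∩ Ioo (-π) π) := by
        rw [Measure.volume_eq_prod, ← Measure.prod_restrict, lintegral_prod _ (by fun_prop)]
        simp only [lintegral_const, Measure.restrict_apply_univ]
        exact lintegral_mul_const _ (by fun_prop)
    _ = ENNReal.ofReal (m * R ^ 2) := by
        rw [lintegral_Ioc_ofReal_eq_intervalIntegral hR continuous_id' fun r hr => hr.1.le,
          integral_id, zero_pow two_ne_zero, sub_zero, volume_Icc_inter_Ioo hmπ,
          ← ENNReal.ofReal_mul (by positivity)]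
        ring_nf

theorem mem_sector_min_pi_iff {R m : ℝ} {w : ℂ} :
    w ∈ sector R (min m π) ↔
      ∃ r θ, 0 < r ∧ r ≤ R ∧ |θ| ≤ m ∧ w = Complex.polarCoord.symm (r, θ) := by
  constructor
  · rintro ⟨hw, hR, harg⟩
    exact ⟨‖w‖, Complex.arg w, norm_pos_iff.mpr hw, hR, harg.trans (min_le_left _ _),
      (Complex.polarCoord_symm_norm_arg w).symm⟩
  · rintro ⟨r, θ, hr, hrR, hθ, rfl⟩
    have hnorm : ‖Complex.polarCoord.symm (r, θ)‖ = r := by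
      rw [Complex.norm_polarCoord_symm, abs_of_pos hr]
    refine ⟨norm_pos_iff.mp (by rwa [hnorm]), by rwa [hnorm],
      le_min ?_ (Complex.abs_arg_le_pi _)⟩
    rcases le_or_gt π m with hπm | hmπ
    · exact (Complex.abs_arg_le_pi _).trans hπm
    · have hθπ : θ ∈ Ioc (-π) π := by constructor <;> linarith [abs_le.mp hθ]
      rwa [Complex.arg_polarCoord_symm hr hθπ]

theorem exists_polarCoord_exp_iff_mem_sector {c : ℝ} {w : ℂ} :
    (∃ x y z : ℝ, 0 ≤ x ∧ 0 ≤ y ∧ 0 ≤ z ∧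
        w = Complex.polarCoord.symm (exp (-(x + 2 * y + z)), x - z) ∧
        c = exp (-(2 * (x + z)))) ↔
      c ∈ Ioc 0 1 ∧ w ∈ sector (√c) (min (-log c / 2) π) := by
  constructor
  · rintro ⟨x, y, z, hx, hy, hz, rfl, rfl⟩
    have hlog : -log (exp (-(2 * (x + z)))) / 2 = x + z := by rw [log_exp]; ring
    have hsqrt : √(exp (-(2 * (x + z)))) = exp (-(x + z)) := by rw [← exp_half]; ring_nf
    refine ⟨⟨exp_pos _, exp_le_one_iff.mpr (by linarith)⟩, ?_⟩
    rw [hlog, hsqrt, mem_sector_min_pi_iff]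
    exact ⟨_, _, exp_pos _, exp_le_exp.mpr (by linarith),
      abs_sub_le_iff.mpr ⟨by linarith, by linarith⟩, rfl⟩
  · rintro ⟨⟨hc₀, -⟩, hw⟩
    set s := -log c / 2
    obtain ⟨r, θ, hr, hrc, hθ, rfl⟩ := mem_sector_min_pi_iff.mp hw
    have hlog_r : log r ≤ -s := by
      calc log r ≤ log √c := log_le_log hr hrc
        _ = -s := by rw [log_sqrt hc₀.le]; ring
    obtain ⟨hθ₁, hθ₂⟩ := abs_le.mp hθ
    refine ⟨(s + θ) / 2, (-log r - s) / 2, (s - θ) / 2,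
      by linarith, by linarith, by linarith, ?_, ?_⟩
    · rw [show -((s + θ) / 2 + 2 * ((-log r - s) / 2) + (s - θ) / 2) = log r by ring, exp_log hr]
      ring_nf
    · rw [show -(2 * ((s + θ) / 2 + (s - θ) / 2)) = log c by ring, exp_log hc₀]

def finThreeArrowEquivRealComplex : (Fin 3 → ℝ) ≃ᵐ ℝ × ℂ :=
  (MeasurableEquiv.piFinSuccAbove (fun _ => ℝ) 2).trans
    ((MeasurableEquiv.refl ℝ).prodCongr Complex.measurableEquivPi.symm)

theorem finThreeArrowEquivRealComplex_apply (v : Fin 3 → ℝ) :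
    finThreeArrowEquivRealComplex v = (v 2, v 0 + v 1 * Complex.I) :=
  rfl

theorem volume_preserving_finThreeArrowEquivRealComplex :
    MeasurePreserving finThreeArrowEquivRealComplex :=
  (volume_preserving_piFinSuccAbove (fun _ => ℝ) 2).trans
    ((MeasurePreserving.id volume).prod Complex.volume_preserving_equiv_pi.symm)

theorem eq_vec_iff_polarCoord_symm {v : Fin 3 → ℝ} {r θ c : ℝ} :
    v = ![r * cos θ, r * sin θ, c] ↔
      (v 0 + v 1 * Complex.I : ℂ) = Complex.polarCoord.symm (r, θ) ∧ v 2 = c := by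
  simp [funext_iff, Fin.forall_fin_succ, Complex.ext_iff, Complex.cos_ofReal_re,
    Complex.sin_ofReal_re, and_assoc]

theorem convex_tetrahedron :
    Convex ℝ {v : Fin 3 → ℝ | |v 0| ≤ (1 + v 2) / 2 ∧ |v 1| ≤ (1 - v 2) / 2} := by
  rintro v ⟨hv₀, hv₁⟩ w ⟨hw₀, hw₁⟩ a b ha hb hab
  simp only [abs_le] at *
  simp only [mem_ofPred_eq, Pi.add_apply, Pi.smul_apply, smul_eq_mul]
  refine ⟨⟨?_, ?_⟩, ?_, ?_⟩ <;>
    nlinarith [mul_le_mul_of_nonneg_left hv₀.1 ha, mul_le_mul_of_nonneg_left hv₀.2 ha,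
      mul_le_mul_of_nonneg_left hv₁.1 ha, mul_le_mul_of_nonneg_left hv₁.2 ha,
      mul_le_mul_of_nonneg_left hw₀.1 hb, mul_le_mul_of_nonneg_left hw₀.2 hb,
      mul_le_mul_of_nonneg_left hw₁.1 hb, mul_le_mul_of_nonneg_left hw₁.2 hb]

theorem convexHull_tetrahedron :
    convexHull ℝ {![(1 : ℝ), 0, 1], ![0, 1, -1], ![-1, 0, 1], ![0, -1, -1]} =
      {v : Fin 3 → ℝ | |v 0| ≤ (1 + v 2) / 2 ∧ |v 1| ≤ (1 - v 2) / 2} := by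
  refine (convexHull_min ?_ convex_tetrahedron).antisymm ?_
  · rintro v (rfl | rfl | rfl | rfl) <;>
      norm_num [Matrix.cons_val_two, Matrix.vecHead, Matrix.vecTail]
  · rintro v ⟨h₀, h₁⟩
    obtain ⟨h₀₁, h₀₂⟩ := abs_le.mp h₀
    obtain ⟨h₁₁, h₁₂⟩ := abs_le.mp h₁
    -- barycentric coordinates of `v` with respect to the four vertices
    set w : Fin 4 → ℝ := ![(1 + v 2 + 2 * v 0) / 4, (1 - v 2 + 2 * v 1) / 4,
      (1 + v 2 - 2 * v 0) / 4, (1 - v 2 - 2 * v 1) / 4] with hw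
    set z : Fin 4 → Fin 3 → ℝ := ![![1, 0, 1], ![0, 1, -1], ![-1, 0, 1], ![0, -1, -1]] with hz
    have hv : v = ∑ i, w i • z i := by
      ext j; fin_cases j <;> simp [Fin.sum_univ_four, hw, hz] <;> ring
    rw [hv]
    refine (convex_convexHull ℝ _).sum_mem (fun i _ => ?_) ?_
      (fun i _ => subset_convexHull ℝ _ ?_)
    · fin_cases i <;> simp [hw] <;> linarith
    · simp only [hw, Fin.sum_univ_four, Matrix.cons_val_zero, Matrix.cons_val_one, Matrix.cons_val]
      ring
    · fin_cases i <;> simp [hz]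

theorem integral_min_negMulLog_pi_mul :
    ∫ c in (0 : ℝ)..1, min (negMulLog c / 2) (π * c) = (1 - exp (-(4 * π))) / 8 := by
  set a := exp (-(2 * π)) with ha_def
  have ha : 0 < a := exp_pos _
  have ha1 : a ≤ 1 := exp_le_one_iff.mpr (by linarith [pi_pos])
  have hlog_a : log a = -(2 * π) := log_exp _
  have hcont : Continuous fun c => min (negMulLog c / 2) (π * c) := by fun_prop
  have h_lower : ∫ c in (0 : ℝ)..a, min (negMulLog c / 2) (π * c) = π * a ^ 2 / 2 := by
    rw [intervalIntegral.integral_congr_ae (g := fun c => π * c) ?_,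
      intervalIntegral.integral_const_mul, integral_id]
    · ring
    · refine ae_of_all _ fun c hc => ?_
      rw [uIoc_of_le ha.le] at hc
      have hlog_c : log c ≤ log a := log_le_log hc.1 hc.2
      rw [negMulLog_def, min_eq_right (by nlinarith [hc.1])]
  have h_upper :
      ∫ c in a..1, min (negMulLog c / 2) (π * c) = 1 / 8 - a ^ 2 / 8 - π * a ^ 2 / 2 := by
    have hderiv : ∀ c ∈ uIcc a 1, HasDerivAt (fun c => c ^ 2 / 8 - c ^ 2 * log c / 4)
        (min (negMulLog c / 2) (π * c)) c := by
      intro c hc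
      rw [uIcc_of_le ha1] at hc
      have hc0 : 0 < c := ha.trans_le hc.1
      have hlog_c : log a ≤ log c := log_le_log ha hc.1
      refine (((hasDerivAt_pow 2 c).div_const 8).sub
        (((hasDerivAt_pow 2 c).mul (hasDerivAt_log hc0.ne')).div_const 4)).congr_deriv ?_
      rw [negMulLog_def, min_eq_left (by nlinarith)]
      field_simp
      ring
    rw [intervalIntegral.integral_eq_sub_of_hasDerivAt hderiv (hcont.intervalIntegrable _ _),
      log_one, hlog_a]
    ring
  have ha_sq : a ^ 2 = exp (-(4 * π)) := by rw [ha_def, ← exp_nat_mul]; ring_nf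
  rw [← intervalIntegral.integral_add_adjacent_intervals (b := a) (hcont.intervalIntegrable _ _)
    (hcont.intervalIntegrable _ _), h_lower, h_upper, ha_sq]
  ring

theorem integral_one_add_mul_one_sub :
    ∫ c in (-1 : ℝ)..1, (1 + c) * (1 - c) = 4 / 3 := by
  simp only [show ∀ c : ℝ, (1 + c) * (1 - c) = 1 - c ^ 2 from fun c => by ring]
  rw [intervalIntegral.integral_sub intervalIntegrable_const
    ((continuous_pow 2).intervalIntegrable _ _)]
  norm_num

def accessibleSet : Set (Fin 3 → ℝ) :=
  {v | ∃ x y z : ℝ, 0 ≤ x ∧ 0 ≤ y ∧ 0 ≤ z ∧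
    v = ![exp (-(x + 2 * y + z)) * cos (x - z), exp (-(x + 2 * y + z)) * sin (x - z),
      exp (-(2 * (x + z)))]}

theorem accessibleSet_eq_preimage : accessibleSet = finThreeArrowEquivRealComplex ⁻¹'
    {q | q.1 ∈ Ioc 0 1 ∧ q.2 ∈ sector (√q.1) (min (-log q.1 / 2) π)} := by
  ext v
  simp only [accessibleSet, eq_vec_iff_polarCoord_symm, mem_ofPred_eq, mem_preimage,
    finThreeArrowEquivRealComplex_apply, exists_polarCoord_exp_iff_mem_sector]

theorem volume_accessibleSet :
    volume accessibleSet = ENNReal.ofReal ((1 - exp (-(4 * π))) / 8) := by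
  rw [accessibleSet_eq_preimage,
    volume_preserving_finThreeArrowEquivRealComplex.measure_preimage_equiv,
    Measure.volume_eq_prod,
    Measure.prod_setOf_fst_mem_snd_mem (F := fun c => sector (√c) (min (-log c / 2) π))
      measurableSet_Ioc (measurableSet_setOf_mem_sector (R := (√·))
        (m := fun c => min (-log c / 2) π) (by fun_prop) (by fun_prop)),
    ← integral_min_negMulLog_pi_mul, ← lintegral_Ioc_ofReal_eq_intervalIntegral zero_le_one
      (by fun_prop) fun c hc =>
        le_min (div_nonneg (negMulLog_nonneg hc.1.le hc.2) zero_le_two)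
          (mul_nonneg pi_pos.le hc.1.le)]
  refine setLIntegral_congr_fun measurableSet_Ioc fun c hc => ?_
  rw [volume_sector (sqrt_nonneg c) (min_le_right _ _), sq_sqrt hc.1.le,
    min_mul_of_nonneg _ _ hc.1.le, negMulLog_def]
  ring_nf

theorem convexHull_tetrahedron_eq_preimage :
    convexHull ℝ {![(1 : ℝ), 0, 1], ![0, 1, -1], ![-1, 0, 1], ![0, -1, -1]} =
      finThreeArrowEquivRealComplex ⁻¹' {q | q.1 ∈ Icc (-1) 1 ∧
        q.2 ∈ {w : ℂ | |w.re| ≤ (1 + q.1) / 2 ∧ |w.im| ≤ (1 - q.1) / 2}} := by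
  ext v
  have hre : (v 0 + v 1 * Complex.I : ℂ).re = v 0 := by simp
  have him : (v 0 + v 1 * Complex.I : ℂ).im = v 1 := by simp
  simp only [convexHull_tetrahedron, mem_ofPred_eq, mem_preimage, mem_Icc,
    finThreeArrowEquivRealComplex_apply, hre, him]
  refine ⟨fun h => ⟨⟨?_, ?_⟩, h⟩, And.right⟩ <;>
    linarith [abs_nonneg (v 0), abs_nonneg (v 1), h.1, h.2]

theorem volume_convexHull_tetrahedron :
    volume (convexHull ℝ {![(1 : ℝ), 0, 1], ![0, 1, -1], ![-1, 0, 1], ![0, -1, -1]}) =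
      ENNReal.ofReal (4 / 3) := by
  have hfib : MeasurableSet {q : ℝ × ℂ |
      q.2 ∈ {w : ℂ | |w.re| ≤ (1 + q.1) / 2 ∧ |w.im| ≤ (1 - q.1) / 2}} :=
    (measurableSet_le (Complex.measurable_re.comp measurable_snd).abs (by fun_prop)).inter
      (measurableSet_le (Complex.measurable_im.comp measurable_snd).abs (by fun_prop))
  rw [convexHull_tetrahedron_eq_preimage,
    volume_preserving_finThreeArrowEquivRealComplex.measure_preimage_equiv,
    Measure.volume_eq_prod,
    Measure.prod_setOf_fst_mem_snd_mem
      (F := fun c => {w : ℂ | |w.re| ≤ (1 + c) / 2 ∧ |w.im| ≤ (1 - c) / 2})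
      measurableSet_Icc hfib,
    ← setLIntegral_congr Ioc_ae_eq_Icc, ← integral_one_add_mul_one_sub,
    ← lintegral_Ioc_ofReal_eq_intervalIntegral (by norm_num) (by fun_prop)
      fun c hc => mul_nonneg (by linarith [hc.1]) (by linarith [hc.2])]
  refine setLIntegral_congr_fun measurableSet_Ioc fun c hc => ?_
  rw [Complex.volume_setOf_abs_re_le_abs_im_le, ← ENNReal.ofReal_mul (by linarith [hc.1])]
  ring_nf

/-- In a joint eigenbasis, the accessible maps of the cyclic group of order 4 with
linearly independent elements form the set `S` below, of volume `(1 − e^{−4π})/8`; the group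
polytope is the tetrahedron `T` of volume `4/3`, so accessible maps occupy the fraction
`(3/32)(1 − e^{−4π})` of the polytope. -/
theorem cyclic_four_group_accessible_volume
    (S : Set (Fin 3 → ℝ))
    (hS : S = {v : Fin 3 → ℝ | ∃ x y z : ℝ, 0 ≤ x ∧ 0 ≤ y ∧ 0 ≤ z ∧
      v = ![Real.exp (-(x + 2 * y + z)) * Real.cos (x - z),
            Real.exp (-(x + 2 * y + z)) * Real.sin (x - z),
            Real.exp (-(2 * (x + z)))]})
    (T : Set (Fin 3 → ℝ))
    (hT : T = convexHull ℝ
      {![(1 : ℝ), 0, 1], ![0, 1, -1], ![-1, 0, 1], ![0, -1, -1]}) :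
    volume S = ENNReal.ofReal ((1 - Real.exp (-(4 * Real.pi))) / 8) ∧
    volume T = ENNReal.ofReal (4 / 3) ∧
    volume S = ENNReal.ofReal (3 / 32 * (1 - Real.exp (-(4 * Real.pi)))) * volume T := by
  have hvolS : volume S = ENNReal.ofReal ((1 - exp (-(4 * π))) / 8) :=
    hS ▸ volume_accessibleSet
  have hvolT : volume T = ENNReal.ofReal (4 / 3) := hT ▸ volume_convexHull_tetrahedron
  refine ⟨hvolS, hvolT, ?_⟩
  have hexp : exp (-(4 * π)) ≤ 1 := exp_le_one_iff.mpr (by linarith [pi_pos])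
  rw [hvolS, hvolT, ← ENNReal.ofReal_mul (by linarith)]
  ring_nf
end
end

section
/- Let n ≥ 1, let G = Fin n → ZMod 2, and for s, g ∈ G define χ_s(g) ∈ ℝ by χ_s(g) = 1 if ∑_i s_i·g_i = 0 in ZMod 2 and χ_s(g) = −1 otherwise. Let I = {s ∈ G : s ≠ 0} (a set of 2ⁿ − 1 indices). Define S ⊆ (I → ℝ) as the set of all y such that there exists x : I → ℝ with x(g) ≥ 0 for all g and y(s) = exp(∑_{g∈I} x(g)·(χ_s(g) − 1)) for every s ∈ I; and let P = convexHull ℝ {(fun s ↦ χ_s(g)) : g ∈ G} ⊆ (I → ℝ). Then, with respect to Lebesgue measure on I → ℝ, 2^{n·2ⁿ} · volume(S) = (2ⁿ)! · volume(P); i.e. the accessibility volume ratio for the group (Z₂)ⁿ equals (2ⁿ)!/2^{n·2ⁿ}. -/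
/-!
Both bodies are images of standard regions under maps built from the matrix
`M = (χ_s(g) - 1)_{s, g ≠ 0}`: `P` is the image of the corner simplex `{x ≥ 0, ∑ x ≤ 1}`
under `x ↦ 1 + M x`, and `S` the image of the orthant under `x ↦ exp (M x)`. Hence
`vol P = |det M| / (2ⁿ - 1)!`, while by change of variables
`vol S = |det M| ∫_{x ≥ 0} exp (∑_s (M x)_s) dx`. Orthogonality of characters makes every
column sum of `M` equal to `-2ⁿ`, so the integral is `2^(-n (2ⁿ - 1))`, and `|det M|` cancels
from the ratio.
-/

open MeasureTheory Set Matrix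

def cornerSimplex (ι : Type*) [Fintype ι] (c : ℝ) : Set (ι → ℝ) :=
  {x | (∀ i, 0 ≤ x i) ∧ ∑ i, x i ≤ c}

lemma lintegral_Icc_sub_pow_div_factorial (m : ℕ) {c : ℝ} (hc : 0 ≤ c) :
    ∫⁻ t in Icc 0 c, ENNReal.ofReal ((c - t) ^ m / m.factorial)
      = ENNReal.ofReal (c ^ (m + 1) / (m + 1).factorial) := by
  have hint : IntegrableOn (fun t => (c - t) ^ m / m.factorial) (Icc 0 c) :=
    (by fun_prop : Continuous fun t : ℝ => (c - t) ^ m / m.factorial).integrableOn_Icc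
  rw [← ofReal_integral_eq_lintegral_ofReal hint, integral_Icc_eq_integral_Ioc,
    ← intervalIntegral.integral_of_le hc, intervalIntegral.integral_div,
    intervalIntegral.integral_comp_sub_left (fun u => u ^ m), integral_pow]
  · congr 1
    rw [Nat.factorial_succ]
    push_cast
    field_simp
    ring
  · rw [Filter.EventuallyLE, ae_restrict_iff' measurableSet_Icc]
    filter_upwards with t ht
    have : 0 ≤ c - t := sub_nonneg.2 ht.2
    positivity

lemma volume_cornerSimplex_fin (m : ℕ) {c : ℝ} (hc : 0 ≤ c) :
    volume (cornerSimplex (Fin m) c) = ENNReal.ofReal (c ^ m / m.factorial) := by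
  induction m generalizing c with
  | zero =>
    have : cornerSimplex (Fin 0) c = univ := by ext x; simp [cornerSimplex, hc]
    simp [this, volume_pi]
  | succ m ih =>
    let T : Set (ℝ × (Fin m → ℝ)) :=
      {p | 0 ≤ p.1 ∧ p.1 ≤ c ∧ p.2 ∈ cornerSimplex (Fin m) (c - p.1)}
    have hT : MeasurableSet T := by
      simp only [T, cornerSimplex, mem_ofPred_eq]; measurability
    have hpre : MeasurableEquiv.piFinSuccAbove (fun _ => ℝ) 0 ⁻¹' T
        = cornerSimplex (Fin (m + 1)) c := by
      ext x
      simp only [T, cornerSimplex, mem_preimage, mem_ofPred_eq,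
        MeasurableEquiv.piFinSuccAbove_apply, Fin.insertNthEquiv_symm_apply, Fin.removeNth,
        Fin.succAbove_zero, Fin.forall_fin_succ, Fin.sum_univ_succ]
      constructor
      · rintro ⟨h0, -, hpos, hsum⟩
        exact ⟨⟨h0, hpos⟩, by linarith⟩
      · rintro ⟨⟨h0, hpos⟩, hsum⟩
        have : 0 ≤ ∑ i : Fin m, x i.succ := Finset.sum_nonneg fun i _ => hpos i
        exact ⟨h0, by linarith, hpos, by linarith⟩
    have hslice : ∀ t, volume (Prod.mk t ⁻¹' T)
        = (Icc 0 c).indicator (fun t => ENNReal.ofReal ((c - t) ^ m / m.factorial)) t := by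
      intro t
      by_cases ht : t ∈ Icc 0 c
      · rw [indicator_of_mem ht, ← ih (sub_nonneg.2 ht.2)]
        congr 1
        ext y
        simp [T, ht.1, ht.2]
      · rw [indicator_of_notMem ht]
        convert measure_empty (μ := volume)
        exact eq_empty_of_forall_notMem fun y hy => ht ⟨hy.1, hy.2.1⟩
    rw [← hpre, (volume_preserving_piFinSuccAbove (fun _ => ℝ) 0).measure_preimage
      hT.nullMeasurableSet, Measure.volume_eq_prod, Measure.prod_apply hT]
    simp_rw [hslice]
    rw [lintegral_indicator measurableSet_Icc, lintegral_Icc_sub_pow_div_factorial m hc]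

lemma piCongrLeft_preimage_cornerSimplex {ι κ : Type*} [Fintype ι] [Fintype κ] (e : κ ≃ ι)
    (c : ℝ) : MeasurableEquiv.piCongrLeft (fun _ => ℝ) e ⁻¹' cornerSimplex ι c
      = cornerSimplex κ c := by
  ext x
  simp only [cornerSimplex, mem_preimage, mem_ofPred_eq, MeasurableEquiv.coe_piCongrLeft,
    Equiv.piCongrLeft_apply_eq_cast, cast_eq]
  rw [e.forall_congr_left, ← e.sum_comp]
  simp

lemma volume_cornerSimplex (ι : Type*) [Fintype ι] {c : ℝ} (hc : 0 ≤ c) :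
    volume (cornerSimplex ι c)
      = ENNReal.ofReal (c ^ Fintype.card ι / (Fintype.card ι).factorial) := by
  let e := (Fintype.equivFin ι).symm
  rw [← volume_cornerSimplex_fin _ hc, ← piCongrLeft_preimage_cornerSimplex e,
    (volume_measurePreserving_piCongrLeft (fun _ => ℝ) e).measure_preimage_equiv]

lemma convexHull_insert_zero_range_single (ι : Type*) [Fintype ι] [DecidableEq ι] :
    convexHull ℝ (insert 0 (range fun i => Pi.single i 1)) = cornerSimplex ι 1 := by
  apply Subset.antisymm
  · refine convexHull_min ?_ ?_
    · rintro _ (rfl | ⟨i, rfl⟩)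
      · simp [cornerSimplex]
      · refine ⟨fun j => ?_, by simp⟩
        rcases eq_or_ne j i with rfl | h <;> simp [*]
    · rintro x ⟨hx0, hx1⟩ y ⟨hy0, hy1⟩ a b ha hb hab
      refine ⟨fun i => ?_, ?_⟩
      · simpa using add_nonneg (mul_nonneg ha (hx0 i)) (mul_nonneg hb (hy0 i))
      simp only [Pi.add_apply, Pi.smul_apply, smul_eq_mul, Finset.sum_add_distrib,
        ← Finset.mul_sum]
      nlinarith
  · rintro x ⟨hx0, hx1⟩
    let w : Option ι → ℝ := fun o => o.elim (1 - ∑ i, x i) x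
    let z : Option ι → ι → ℝ := fun o => o.elim 0 fun i => Pi.single i 1
    have hw : ∑ o, w o = 1 := by simp [w, Fintype.sum_option]
    have hx : Finset.univ.centerMass w z = x := by
      ext j
      simp [Finset.centerMass_eq_of_sum_1 _ _ hw, Fintype.sum_option, w, z, Pi.single_apply]
    rw [← hx]
    refine Finset.centerMass_mem_convexHull _ (fun o _ => ?_) (by simp [hw]) (fun o _ => ?_)
    · cases o <;> simp [w, hx1, hx0]
    · cases o <;> simp [z]

lemma lintegral_nonneg_exp_neg_mul_sum (ι : Type*) [Fintype ι] {N : ℝ} (hN : 0 < N) :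
    ∫⁻ x in {x : ι → ℝ | ∀ i, 0 ≤ x i}, ENNReal.ofReal (Real.exp (-(N * ∑ i, x i)))
      = ENNReal.ofReal (N⁻¹ ^ Fintype.card ι) := by
  have hint : IntegrableOn (fun t => Real.exp (-(N * t))) (Ici 0) := by
    rw [integrableOn_Ici_iff_integrableOn_Ioi]
    simpa [neg_mul] using exp_neg_integrableOn_Ioi 0 hN
  have horthant : {x : ι → ℝ | ∀ i, 0 ≤ x i} = univ.pi fun _ => Ici 0 := by
    ext x; simp only [mem_ofPred_eq, mem_pi, mem_univ, mem_Ici, forall_const]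
  have hprod : ∀ x : ι → ℝ, Real.exp (-(N * ∑ i, x i)) = ∏ i, Real.exp (-(N * x i)) := by
    intro x; rw [← Real.exp_sum, Finset.mul_sum, Finset.sum_neg_distrib]
  simp_rw [horthant, volume_pi, Measure.restrict_pi_pi, hprod]
  rw [← ofReal_integral_eq_lintegral_ofReal (Integrable.fintype_prod fun _ => hint)
    (Filter.Eventually.of_forall fun x => Finset.prod_nonneg fun i _ => (Real.exp_pos _).le),
    integral_fintype_prod_eq_pow (fun t => Real.exp (-(N * t))), integral_Ici_eq_integral_Ioi]
  congr 2
  simpa [neg_mul] using integral_exp_mul_Ioi (neg_lt_zero.2 hN) 0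

section ExpMulVec

variable {ι : Type*} [Fintype ι]

noncomputable def expMulVec (M : Matrix ι ι ℝ) (x : ι → ℝ) (s : ι) : ℝ :=
  Real.exp ((M *ᵥ x) s)

lemma sum_mulVec_of_sum_col_eq {M : Matrix ι ι ℝ} {N : ℝ} (hcol : ∀ j, ∑ i, M i j = -N)
    (x : ι → ℝ) : ∑ i, (M *ᵥ x) i = -(N * ∑ j, x j) := by
  simp only [mulVec, dotProduct]
  rw [Finset.sum_comm, Finset.mul_sum, ← Finset.sum_neg_distrib]
  simp [← Finset.sum_mul, hcol]

variable [DecidableEq ι]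

lemma hasFDerivAt_expMulVec (M : Matrix ι ι ℝ) (x : ι → ℝ) :
    HasFDerivAt (expMulVec M) (toLin' (diagonal (expMulVec M x) * M)).toContinuousLinearMap x := by
  refine hasFDerivAt_pi'' fun s => ?_
  let L := (ContinuousLinearMap.proj s).comp (toLin' M).toContinuousLinearMap
  have hexp := (L.hasFDerivAt (x := x)).exp
  have hderiv : Real.exp (L x) • L
      = (ContinuousLinearMap.proj s).comp
        (toLin' (diagonal (expMulVec M x) * M)).toContinuousLinearMap := by
    ext y
    simp only [L, _root_.smul_apply, ContinuousLinearMap.coe_comp, Function.comp_apply,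
      ContinuousLinearMap.proj_apply, LinearMap.coe_toContinuousLinearMap', toLin'_apply,
      smul_eq_mul]
    rw [← mulVec_mulVec, mulVec_diagonal]
    rfl
  rwa [hderiv] at hexp

lemma det_toLin'_diagonal_expMulVec_mul {M : Matrix ι ι ℝ} {N : ℝ}
    (hcol : ∀ j, ∑ i, M i j = -N) (x : ι → ℝ) :
    (toLin' (diagonal (expMulVec M x) * M)).toContinuousLinearMap.det
      = Real.exp (-(N * ∑ i, x i)) * M.det := by
  rw [ContinuousLinearMap.det, LinearMap.coe_toContinuousLinearMap, LinearMap.det_toLin',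
    det_mul, det_diagonal]
  simp_rw [expMulVec]
  rw [← Real.exp_sum, sum_mulVec_of_sum_col_eq hcol]

/-- When `M` is singular the Jacobian of `expMulVec M` vanishes everywhere, and so does the
volume of the image. -/
lemma volume_image_expMulVec_nonneg {M : Matrix ι ι ℝ} {N : ℝ} (hN : 0 < N)
    (hcol : ∀ j, ∑ i, M i j = -N) :
    volume (expMulVec M '' {x | ∀ i, 0 ≤ x i})
      = ENNReal.ofReal (|M.det| * N⁻¹ ^ Fintype.card ι) := by
  have hf' : ∀ x ∈ {x : ι → ℝ | ∀ i, 0 ≤ x i}, HasFDerivWithinAt (expMulVec M)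
      (toLin' (diagonal (expMulVec M x) * M)).toContinuousLinearMap {x | ∀ i, 0 ≤ x i} x :=
    fun x _ => (hasFDerivAt_expMulVec M x).hasFDerivWithinAt
  have hdet := det_toLin'_diagonal_expMulVec_mul hcol
  by_cases hM : M.det = 0
  · rw [addHaar_image_eq_zero_of_det_fderivWithin_eq_zero volume hf'
      fun x _ => by rw [hdet, hM, mul_zero]]
    simp [hM]
  have hinj : InjOn (expMulVec M) {x | ∀ i, 0 ≤ x i} := fun x _ y _ hxy =>
    mulVec_injective_iff_isUnit.2 ((M.isUnit_iff_isUnit_det).2 (Ne.isUnit hM))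
      (funext fun s => Real.exp_injective (congrFun hxy s))
  rw [← lintegral_abs_det_fderiv_eq_addHaar_image volume (by measurability) hf' hinj]
  simp_rw [hdet, abs_mul, Real.abs_exp, ENNReal.ofReal_mul (Real.exp_pos _).le]
  rw [lintegral_mul_const' _ _ ENNReal.ofReal_ne_top, lintegral_nonneg_exp_neg_mul_sum ι hN,
    ← ENNReal.ofReal_mul (by positivity), mul_comm]

end ExpMulVec

lemma volume_image_add_mulVec {ι : Type*} [Fintype ι] [DecidableEq ι] (M : Matrix ι ι ℝ)
    (v : ι → ℝ) (A : Set (ι → ℝ)) :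
    volume ((fun x => v + M *ᵥ x) '' A) = ENNReal.ofReal |M.det| * volume A := by
  have : (fun x => v + M *ᵥ x) '' A = (v + ·) '' (toLin' M '' A) := by rw [image_image]; rfl
  rw [this, image_add_left, measure_preimage_add, Measure.addHaar_image_linearMap,
    LinearMap.det_toLin']

lemma convexHull_range_eq_image_cornerSimplex {G κ : Type*} [Zero G] [DecidableEq G]
    [Fintype {g : G // g ≠ 0}] (v : G → κ → ℝ) (hv0 : v 0 = 1) :
    convexHull ℝ (range v)
      = (fun x => 1 + of (fun s (g : {g : G // g ≠ 0}) => v g s - 1) *ᵥ x) ''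
        cornerSimplex {g : G // g ≠ 0} 1 := by
  let M := of fun s (g : {g : G // g ≠ 0}) => v g s - 1
  have hvertex : ∀ g : {g : G // g ≠ 0}, 1 + M *ᵥ Pi.single g 1 = v g := by
    intro g; ext s; simp [M]
  have hvertices :
      range v = (fun x => 1 + M *ᵥ x) '' insert 0 (range fun g => Pi.single g 1) := by
    ext y
    constructor
    · rintro ⟨g, rfl⟩
      by_cases hg : g = 0
      · exact ⟨0, mem_insert _ _, by simp [hg, hv0]⟩
      · exact ⟨_, mem_insert_of_mem _ ⟨⟨g, hg⟩, rfl⟩, hvertex ⟨g, hg⟩⟩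
    · rintro ⟨_, rfl | ⟨g, rfl⟩, rfl⟩
      · exact ⟨0, by simp [hv0]⟩
      · exact ⟨g, (hvertex g).symm⟩
  let T := (AffineEquiv.constVAdd ℝ _ 1).toAffineMap.comp (toLin' M).toAffineMap
  rw [hvertices, ← convexHull_insert_zero_range_single]
  exact (T.image_convexHull _).symm

/-- Translating by a vector `t` with `t ⬝ᵥ g = 1` flips the sign of every term. -/
lemma sum_ite_dotProduct_eq_zero {ι : Type*} [Fintype ι] [DecidableEq ι] {g : ι → ZMod 2}
    (hg : g ≠ 0) : ∑ s : ι → ZMod 2, (if s ⬝ᵥ g = 0 then (1 : ℝ) else -1) = 0 := by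
  obtain ⟨i, hi⟩ := Function.ne_iff.1 hg
  have hflip : ∀ s : ι → ZMod 2, (if (s + Pi.single i 1) ⬝ᵥ g = 0 then (1 : ℝ) else -1)
      = -if s ⬝ᵥ g = 0 then 1 else -1 := by
    intro s
    have hgi : g i = 1 := (by decide : ∀ a : ZMod 2, a ≠ 0 → a = 1) _ hi
    have hsucc : ∀ a : ZMod 2, a + 1 = 0 ↔ a ≠ 0 := by decide
    rw [add_dotProduct, single_one_dotProduct, hgi]
    by_cases h : s ⬝ᵥ g = 0 <;> simp [h, hsucc]
  have hsum := (Equiv.sum_comp (Equiv.addRight (Pi.single i 1 : ι → ZMod 2))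
    fun s => if s ⬝ᵥ g = 0 then (1 : ℝ) else -1).symm.trans
      (Finset.sum_congr rfl fun s _ => hflip s)
  rw [Finset.sum_neg_distrib] at hsum
  linarith

lemma sum_ne_zero_ite_dotProduct_sub_one {ι : Type*} [Fintype ι] [DecidableEq ι]
    {g : ι → ZMod 2} (hg : g ≠ 0) :
    ∑ s : {s : ι → ZMod 2 // s ≠ 0},
        ((if (s : ι → ZMod 2) ⬝ᵥ g = 0 then (1 : ℝ) else -1) - 1)
      = -(2 ^ Fintype.card ι : ℝ) := by
  have h := Fintype.sum_subtype_add_sum_subtype (fun s => s = 0)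
    fun s : ι → ZMod 2 => (if s ⬝ᵥ g = 0 then (1 : ℝ) else -1) - 1
  have h0 : ((default : {s : ι → ZMod 2 // s = 0}) : ι → ZMod 2) = 0 :=
    (default : {s : ι → ZMod 2 // s = 0}).property
  simpa [h0, Finset.sum_sub_distrib, sum_ite_dotProduct_eq_zero hg] using h

/-- `N ^ N / N ^ (N - 1) = N = N! / (N - 1)!`. -/
lemma pow_self_mul_ofReal_mul_inv_pow_pred {N : ℕ} (hN : 0 < N) {d : ℝ} (hd : 0 ≤ d) :
    (N : ENNReal) ^ N * ENNReal.ofReal (d * (N : ℝ)⁻¹ ^ (N - 1))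
      = N.factorial * (ENNReal.ofReal d * ENNReal.ofReal (1 / (N - 1).factorial)) := by
  obtain ⟨m, rfl⟩ := Nat.exists_eq_add_one_of_ne_zero hN.ne'
  rw [← ENNReal.ofReal_mul hd, ← ENNReal.ofReal_natCast,
    ← ENNReal.ofReal_pow (Nat.cast_nonneg _), ← ENNReal.ofReal_natCast,
    ← ENNReal.ofReal_mul (by positivity), ← ENNReal.ofReal_mul (by positivity)]
  congr 1
  simp only [Nat.add_sub_cancel, Nat.factorial_succ, inv_pow, pow_succ]
  push_cast
  field_simp

theorem accessibility_volume_ratio_Z2_pow_n_general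
    (n : ℕ)
    (χ : (Fin n → ZMod 2) → (Fin n → ZMod 2) → ℝ)
    (hχ : ∀ s g : Fin n → ZMod 2, χ s g = if ∑ i : Fin n, s i * g i = 0 then 1 else -1)
    (S : Set ({s : Fin n → ZMod 2 // s ≠ 0} → ℝ))
    (hS : S = {y : {s : Fin n → ZMod 2 // s ≠ 0} → ℝ |
      ∃ x : {g : Fin n → ZMod 2 // g ≠ 0} → ℝ, (∀ g, 0 ≤ x g) ∧
        ∀ s : {s : Fin n → ZMod 2 // s ≠ 0},
          y s = Real.exp (∑ g : {g : Fin n → ZMod 2 // g ≠ 0}, x g * (χ (s : Fin n → ZMod 2) (g : Fin n → ZMod 2) - 1))})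
    (P : Set ({s : Fin n → ZMod 2 // s ≠ 0} → ℝ))
    (hP : P = convexHull ℝ
      (Set.range fun g : Fin n → ZMod 2 =>
        fun s : {s : Fin n → ZMod 2 // s ≠ 0} => χ (s : Fin n → ZMod 2) g)) :
    (2 : ENNReal) ^ (n * 2 ^ n) * volume S = (Nat.factorial (2 ^ n) : ENNReal) * volume P := by
  have hχ' : ∀ s g, χ s g = if s ⬝ᵥ g = 0 then 1 else -1 := hχ
  let M : Matrix {s : Fin n → ZMod 2 // s ≠ 0} {s : Fin n → ZMod 2 // s ≠ 0} ℝ :=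
    of fun s g => χ s g - 1
  have hcol : ∀ g, ∑ s, M s g = -(2 ^ n : ℝ) := by
    intro g
    simpa [M, hχ'] using sum_ne_zero_ite_dotProduct_sub_one g.2
  have hS' : S = expMulVec M '' {x | ∀ g, 0 ≤ x g} := by
    rw [hS]
    ext y
    simp only [mem_ofPred_eq, mem_image, funext_iff]
    refine exists_congr fun x => and_congr_right fun _ => forall_congr' fun s => ?_
    simp [eq_comm, expMulVec, mulVec, dotProduct, M, mul_comm]
  have hP' : P = (fun x => 1 + M *ᵥ x) '' cornerSimplex _ 1 :=
    hP.trans (convexHull_range_eq_image_cornerSimplex _ (funext fun s => by simp [hχ']))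
  have hcard : Fintype.card {s : Fin n → ZMod 2 // s ≠ 0} = 2 ^ n - 1 := by
    simp [Fintype.card_subtype_compl]
  rw [hS', hP', volume_image_expMulVec_nonneg (by positivity) hcol, volume_image_add_mulVec,
    volume_cornerSimplex _ zero_le_one, hcard, pow_mul, one_pow]
  exact_mod_cast pow_self_mul_ofReal_mul_inv_pow_pred (Nat.two_pow_pos n) (abs_nonneg M.det)

/-- For the group `(Z₂)ⁿ` with characters `χ_s(g) = (−1)^{∑ sᵢgᵢ}`, the set `S` of
accessible weight vectors (indexed by nontrivial characters) and the group polytope `P` satisfy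
`2^{n·2ⁿ} · vol(S) = (2ⁿ)! · vol(P)`: the accessibility volume ratio is `(2ⁿ)!/2^{n·2ⁿ}`. -/
theorem accessibility_volume_ratio_Z2_pow_n
    (n : ℕ) (hn : 1 ≤ n)
    (χ : (Fin n → ZMod 2) → (Fin n → ZMod 2) → ℝ)
    (hχ : ∀ s g : Fin n → ZMod 2, χ s g = if ∑ i : Fin n, s i * g i = 0 then 1 else -1)
    (S : Set ({s : Fin n → ZMod 2 // s ≠ 0} → ℝ))
    (hS : S = {y : {s : Fin n → ZMod 2 // s ≠ 0} → ℝ |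
      ∃ x : {g : Fin n → ZMod 2 // g ≠ 0} → ℝ, (∀ g, 0 ≤ x g) ∧
        ∀ s : {s : Fin n → ZMod 2 // s ≠ 0},
          y s = Real.exp (∑ g : {g : Fin n → ZMod 2 // g ≠ 0}, x g * (χ (s : Fin n → ZMod 2) (g : Fin n → ZMod 2) - 1))})
    (P : Set ({s : Fin n → ZMod 2 // s ≠ 0} → ℝ))
    (hP : P = convexHull ℝ
      (Set.range fun g : Fin n → ZMod 2 =>
        fun s : {s : Fin n → ZMod 2 // s ≠ 0} => χ (s : Fin n → ZMod 2) g)) :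
    (2 : ENNReal) ^ (n * 2 ^ n) * volume S = (Nat.factorial (2 ^ n) : ENNReal) * volume P :=
  accessibility_volume_ratio_Z2_pow_n_general n χ hχ S hS P hP
end
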